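/- arXiv:1710.04526 — 10 statements merged into one kernel-verified Lean document; each statement's English description precedes it below -/
import Mathlib

section
/- For every real p > 2, every a > 0 and every b with 0 ≤ b ≤ p − 1, the function f : ℝ² → ℝ defined by f(s,t) = (a/p)(|s|^p + 2b|s|^{p/2}|t|^{p/2} + |t|^p) is strictly convex on ℝ². -/
/-!
Restrict `f` to a line `t ↦ (A t, B t)` with `A`, `B` affine. The restriction `g` is `C¹`, and
away from the finitely many `t` where `A`, `B` or `|A| - |B|` vanish, `g''` is the Hessian
quadratic form of `f` in the direction `(A', B')`. With `X = |A| ^ (p/2)`, `Y = |B| ^ (p/2)`, the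
discriminant of that form is a negative multiple of
`b (p/2 - 1) (X - Y)² + (1 + b)(p - 1 - b) X Y`, which is positive as soon as `X ≠ Y`, because
`b ≤ p - 1`. Hence `g'` is strictly increasing and `g` is strictly convex. On the lines where
`A ≡ 0`, `B ≡ 0` or `|A| ≡ |B|`, `g` is a positive multiple of `|affine| ^ p` instead.
-/

open Set

theorem StrictConvexOn.smul {𝕜 E β : Type*} [CommSemiring 𝕜] [PartialOrder 𝕜] [AddCommMonoid E]
    [AddCommMonoid β] [PartialOrder β] [SMul 𝕜 E] [Module 𝕜 β] [PosSMulStrictMono 𝕜 β]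
    {s : Set E} {f : E → β} {c : 𝕜} (hc : 0 < c) (hf : StrictConvexOn 𝕜 s f) :
    StrictConvexOn 𝕜 s fun x => c • f x :=
  ⟨hf.1, fun x hx y hy hxy a b ha hb hab =>
    calc c • f (a • x + b • y) < c • (a • f x + b • f y) :=
          smul_lt_smul_of_pos_left (hf.2 hx hy hxy ha hb hab) hc
      _ = a • c • f x + b • c • f y := by rw [smul_add, smul_comm c, smul_comm c]⟩

theorem strictConvexOn_univ_of_line {𝕜 E β : Type*} [Ring 𝕜] [PartialOrder 𝕜] [Nontrivial 𝕜]
    [AddCommGroup E] [Module 𝕜 E] [AddCommMonoid β] [PartialOrder β] [SMul 𝕜 β] {f : E → β}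
    (hf : ∀ x v, v ≠ 0 → StrictConvexOn 𝕜 univ fun t : 𝕜 => f (x + t • v)) :
    StrictConvexOn 𝕜 univ f := by
  refine ⟨convex_univ, fun x _ y _ hxy a b ha hb hab => ?_⟩
  have h := (hf x (y - x) (sub_ne_zero.2 hxy.symm)).2 (mem_univ 0) (mem_univ 1) zero_ne_one
    ha hb hab
  have hline : x + (a • (0 : 𝕜) + b • (1 : 𝕜)) • (y - x) = a • x + b • y := by
    calc x + (a • (0 : 𝕜) + b • (1 : 𝕜)) • (y - x) = (a + b) • x + b • y - b • x := by
          rw [hab, one_smul, smul_eq_mul, smul_eq_mul, mul_zero, mul_one, zero_add, smul_sub]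
          abel
      _ = a • x + b • y := by rw [add_smul]; abel
  simpa only [hline, zero_smul, add_zero, one_smul, add_sub_cancel] using h

theorem strictMono_of_deriv_pos_off_finite {f : ℝ → ℝ} (hf : Continuous f) {E : Set ℝ}
    (hE : E.Finite) (hf' : ∀ x ∉ E, 0 < deriv f x) : StrictMono f := by
  suffices H : ∀ s t, s < t → (∀ x ∈ Ioo s t, x ∉ E → 0 < deriv f x) → f s < f t from
    fun s t hst => H s t hst fun x _ hx => hf' x hx
  clear hf'
  induction E, hE using Set.Finite.induction_on with
  | empty =>
    intro s t hst hpos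
    refine strictMonoOn_of_deriv_pos (convex_Icc s t) hf.continuousOn (fun x hx => ?_)
      (left_mem_Icc.2 hst.le) (right_mem_Icc.2 hst.le) hst
    rw [interior_Icc] at hx
    exact hpos x hx (notMem_empty x)
  | @insert e E _ _ ih =>
    intro s t hst hpos
    by_cases he : e ∈ Ioo s t
    · refine (ih s e he.1 fun x hx hxE => hpos x ⟨hx.1, hx.2.trans he.2⟩ ?_).trans
        (ih e t he.2 fun x hx hxE => hpos x ⟨he.1.trans hx.1, hx.2⟩ ?_)
      · rintro (rfl | h); exacts [hx.2.ne rfl, hxE h]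
      · rintro (rfl | h); exacts [hx.1.ne rfl, hxE h]
    · exact ih s t hst fun x hx hxE => hpos x hx (by rintro (rfl | h); exacts [he hx, hxE h])

theorem strictConvexOn_univ_of_deriv2_pos_off_finite {f : ℝ → ℝ} (hf : ContDiff ℝ 1 f)
    {E : Set ℝ} (hE : E.Finite) (hf'' : ∀ x ∉ E, 0 < deriv^[2] f x) :
    StrictConvexOn ℝ univ f :=
  StrictMono.strictConvexOn_univ_of_deriv hf.continuous
    (strictMono_of_deriv_pos_off_finite (hf.continuous_deriv le_rfl) hE hf'')

theorem iter_deriv_two_eq_of_hasDerivAt {f f' : ℝ → ℝ} {f'' x : ℝ} (hf : ∀ y, HasDerivAt f (f' y) y)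
    (hf' : HasDerivAt f' f'' x) : deriv^[2] f x = f'' := by
  rw [Function.iterate_succ_apply, Function.iterate_one, funext fun y => (hf y).deriv]
  exact hf'.deriv

theorem contDiff_one_of_hasDerivAt_const {f : ℝ → ℝ} {c : ℝ} (hf : ∀ x, HasDerivAt f c x) :
    ContDiff ℝ 1 f :=
  contDiff_one_iff_deriv.2 ⟨fun x => (hf x).differentiableAt, by
    rw [funext fun x => (hf x).deriv]; exact continuous_const⟩

theorem ContDiff.abs_rpow {f : ℝ → ℝ} {r : ℝ} (hf : ContDiff ℝ 1 f) (hr : 1 < r) :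
    ContDiff ℝ 1 fun x => |f x| ^ r :=
  (contDiff_norm_rpow hr).comp hf

theorem HasDerivAt.abs_rpow {f : ℝ → ℝ} {f' x r : ℝ} (hf : HasDerivAt f f' x) (hr : 1 < r) :
    HasDerivAt (fun y => |f y| ^ r) (r * (|f x| ^ (r - 2) * f x) * f') x :=
  ((hasDerivAt_abs_rpow (f x) hr).comp x hf).congr_deriv (by ring)

theorem HasDerivAt.abs_rpow_mul_self {f : ℝ → ℝ} {f' x : ℝ} (r : ℝ) (hf : HasDerivAt f f' x)
    (hx : f x ≠ 0) :
    HasDerivAt (fun y => |f y| ^ r * f y) ((r + 1) * |f x| ^ r * f') x := by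
  have habs : HasDerivAt (fun y => |f y|) (SignType.sign (f x) * f') x :=
    (hasDerivAt_abs hx).comp x hf
  refine ((habs.rpow_const (p := r) (Or.inl (abs_ne_zero.2 hx))).mul hf).congr_deriv ?_
  have hsign : (SignType.sign (f x) : ℝ) * f x / |f x| = 1 := by
    rw [sign_mul_self, div_self (abs_ne_zero.2 hx)]
  rw [Real.rpow_sub_one (abs_ne_zero.2 hx)]
  linear_combination r * |f x| ^ r * f' * hsign

theorem quadratic_form_pos_of_discrim_neg {a b c x y : ℝ} (ha : 0 < a) (h : discrim a b c < 0)
    (hxy : x ≠ 0 ∨ y ≠ 0) : 0 < a * x ^ 2 + b * x * y + c * y ^ 2 := by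
  rw [discrim] at h
  rcases eq_or_ne y 0 with rfl | hy
  · have hx : x ≠ 0 := hxy.resolve_right (not_not.2 rfl)
    simpa using mul_pos ha (by positivity : 0 < x ^ 2)
  · have hsq : 4 * a * (a * x ^ 2 + b * x * y + c * y ^ 2)
        = (2 * a * x + b * y) ^ 2 + (4 * a * c - b ^ 2) * y ^ 2 := by ring
    have : 0 < 4 * a * (a * x ^ 2 + b * x * y + c * y ^ 2) := by
      rw [hsq]; nlinarith [sq_nonneg (2 * a * x + b * y), (by positivity : 0 < y ^ 2)]
    exact pos_of_mul_pos_right this (by positivity)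

-- `r`, `X`, `s` stand for `|y| ^ (p/2 - 2)`, `|y| ^ (p/2)`, `|y| ^ (p/2 - 2) * y`, and
-- `r'`, `Y`, `s'` for the same powers of `z`, in `absPowForm_hessian_pos` below.
theorem mixed_power_hessian_pos {p b r r' X Y s s' α β : ℝ} (hp : 2 < p) (hb0 : 0 ≤ b)
    (hb1 : b ≤ p - 1) (hr : 0 < r) (hr' : 0 < r') (hX : 0 < X) (hY : 0 < Y) (hXY : X ≠ Y)
    (hs : s ^ 2 = r * X) (hs' : s' ^ 2 = r' * Y) (hαβ : α ≠ 0 ∨ β ≠ 0) :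
    0 < p * (p - 1) * (r * X) * α ^ 2
      + 2 * b * (p / 2 * (p / 2 - 1) * r * Y * α ^ 2 + 2 * (p / 2) ^ 2 * s * s' * α * β
        + p / 2 * (p / 2 - 1) * X * r' * β ^ 2)
      + p * (p - 1) * (r' * Y) * β ^ 2 := by
  have hp1 : 0 < p - 1 := by linarith
  have hq1 : 0 < p / 2 - 1 := by linarith
  have hM : 0 < p * (p - 1) * r * X + b * p * (p / 2 - 1) * r * Y := by positivity
  have hdet : 0 < b * (p / 2 - 1) * (X - Y) ^ 2 + (1 + b) * (p - 1 - b) * X * Y := by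
    rcases hb1.lt_or_eq with hb | rfl
    · have : 0 < p - 1 - b := by linarith
      positivity
    · have := sub_ne_zero.2 hXY
      simpa using (by positivity : 0 < (p - 1) * (p / 2 - 1) * (X - Y) ^ 2)
  have hdisc : discrim (p * (p - 1) * r * X + b * p * (p / 2 - 1) * r * Y) (b * p ^ 2 * s * s')
      (p * (p - 1) * r' * Y + b * p * (p / 2 - 1) * r' * X)
      = -(4 * p ^ 2 * (p - 1) * r * r' * (b * (p / 2 - 1) * (X - Y) ^ 2
          + (1 + b) * (p - 1 - b) * X * Y)) := by
    rw [discrim]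
    linear_combination (b ^ 2 * p ^ 4 * s' ^ 2) * hs + (b ^ 2 * p ^ 4 * r * X) * hs'
  have hdisc_neg := hdisc ▸ neg_neg_of_pos (by positivity)
  convert quadratic_form_pos_of_discrim_neg hM hdisc_neg hαβ using 1
  ring

theorem absPowForm_hessian_pos {p b y z α β : ℝ} (hp : 2 < p) (hb0 : 0 ≤ b) (hb1 : b ≤ p - 1)
    (hy : y ≠ 0) (hz : z ≠ 0) (hyz : |y| ≠ |z|) (hαβ : α ≠ 0 ∨ β ≠ 0) :
    0 < p * (p - 1) * |y| ^ (p - 2) * α ^ 2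
      + 2 * b * (p / 2 * (p / 2 - 1) * |y| ^ (p / 2 - 2) * |z| ^ (p / 2) * α ^ 2
        + 2 * (p / 2) ^ 2 * (|y| ^ (p / 2 - 2) * y) * (|z| ^ (p / 2 - 2) * z) * α * β
        + p / 2 * (p / 2 - 1) * |y| ^ (p / 2) * |z| ^ (p / 2 - 2) * β ^ 2)
      + p * (p - 1) * |z| ^ (p - 2) * β ^ 2 := by
  have hpow : ∀ w : ℝ, w ≠ 0 → |w| ^ (p - 2) = |w| ^ (p / 2 - 2) * |w| ^ (p / 2) ∧
      (|w| ^ (p / 2 - 2) * w) ^ 2 = |w| ^ (p / 2 - 2) * |w| ^ (p / 2) := by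
    intro w hw
    have hw' : 0 < |w| := abs_pos.2 hw
    refine ⟨by rw [← Real.rpow_add hw']; ring_nf, ?_⟩
    calc (|w| ^ (p / 2 - 2) * w) ^ 2
        = |w| ^ (p / 2 - 2) * (|w| ^ (p / 2 - 2) * |w| ^ (2 : ℝ)) := by
          rw [Real.rpow_two, sq_abs]; ring
      _ = |w| ^ (p / 2 - 2) * |w| ^ (p / 2) := by rw [← Real.rpow_add hw']; ring_nf
  obtain ⟨hy₁, hy₂⟩ := hpow y hy
  obtain ⟨hz₁, hz₂⟩ := hpow z hz
  have hXY : |y| ^ (p / 2) ≠ |z| ^ (p / 2) := fun h =>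
    hyz ((Real.rpow_left_inj (abs_nonneg y) (abs_nonneg z) (by linarith)).1 h)
  rw [hy₁, hz₁]
  exact mixed_power_hessian_pos hp hb0 hb1 (by positivity) (by positivity) (by positivity)
    (by positivity) hXY hy₂ hz₂ hαβ

theorem subsingleton_setOf_add_mul_eq_zero {c₀ c₁ : ℝ} (h : c₀ ≠ 0 ∨ c₁ ≠ 0) :
    {t : ℝ | c₀ + t * c₁ = 0}.Subsingleton := by
  intro s (hs : c₀ + s * c₁ = 0) t (ht : c₀ + t * c₁ = 0)
  by_contra hst
  have hc₁ : c₁ = 0 :=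
    (mul_eq_zero.1 (by linarith : (s - t) * c₁ = 0)).resolve_left (sub_ne_zero.2 hst)
  exact h.elim (fun h₀ => h₀ (by simpa [hc₁] using hs)) (· hc₁)

theorem finite_setOf_eq_zero_or_abs_eq {c₀ c₁ d₀ d₁ : ℝ} (hc : c₀ ≠ 0 ∨ c₁ ≠ 0)
    (hd : d₀ ≠ 0 ∨ d₁ ≠ 0) (hsub : c₀ ≠ d₀ ∨ c₁ ≠ d₁) (hadd : c₀ ≠ -d₀ ∨ c₁ ≠ -d₁) :
    {t : ℝ | c₀ + t * c₁ = 0 ∨ d₀ + t * d₁ = 0 ∨ |c₀ + t * c₁| = |d₀ + t * d₁|}.Finite := by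
  have hzeros (e₀ e₁ : ℝ) (h : e₀ ≠ 0 ∨ e₁ ≠ 0) : {t : ℝ | e₀ + t * e₁ = 0}.Finite :=
    (subsingleton_setOf_add_mul_eq_zero h).finite
  refine (((hzeros _ _ hc).union (hzeros _ _ hd)).union ((hzeros (c₀ - d₀) (c₁ - d₁)
    (by simpa only [sub_ne_zero] using hsub)).union (hzeros (c₀ + d₀) (c₁ + d₁)
    (by simpa only [ne_eq, add_eq_zero_iff_eq_neg] using hadd)))).subset ?_
  rintro t (h | h | h)
  · exact Or.inl (Or.inl h)
  · exact Or.inl (Or.inr h)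
  · rcases abs_eq_abs.1 h with h | h
    · exact Or.inr (Or.inl (by simp only [mem_ofPred_eq]; linarith))
    · exact Or.inr (Or.inr (by simp only [mem_ofPred_eq]; linarith))

noncomputable def absPowForm (p b s t : ℝ) : ℝ :=
  |s| ^ p + 2 * b * |s| ^ (p / 2) * |t| ^ (p / 2) + |t| ^ p

theorem absPowForm_zero_left {p : ℝ} (b t : ℝ) (hp : p ≠ 0) : absPowForm p b 0 t = |t| ^ p := by
  simp [absPowForm, Real.zero_rpow hp, Real.zero_rpow (div_ne_zero hp two_ne_zero)]

theorem absPowForm_zero_right {p : ℝ} (b s : ℝ) (hp : p ≠ 0) : absPowForm p b s 0 = |s| ^ p := by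
  simp [absPowForm, Real.zero_rpow hp, Real.zero_rpow (div_ne_zero hp two_ne_zero)]

theorem absPowForm_of_abs_eq {p b s t : ℝ} (hp : p ≠ 0) (h : |s| = |t|) :
    absPowForm p b s t = (2 + 2 * b) * |t| ^ p := by
  have : |t| ^ (p / 2) * |t| ^ (p / 2) = |t| ^ p := by
    rw [← Real.rpow_add' (abs_nonneg t) (by simpa using hp), add_halves]
  rw [absPowForm, h]
  linear_combination 2 * b * this

theorem strictConvexOn_abs_rpow_comp {p α : ℝ} {A : ℝ → ℝ} (hp : 1 < p)
    (hA : ∀ t, HasDerivAt A α t) (hα : α ≠ 0) (hE : {t | A t = 0}.Finite) :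
    StrictConvexOn ℝ univ fun t => |A t| ^ p := by
  refine strictConvexOn_univ_of_deriv2_pos_off_finite
    ((contDiff_one_of_hasDerivAt_const hA).abs_rpow hp) hE fun t ht => ?_
  have hAt : A t ≠ 0 := ht
  rw [iter_deriv_two_eq_of_hasDerivAt (fun t => (hA t).abs_rpow hp)
    ((((hA t).abs_rpow_mul_self (p - 2) hAt).const_mul p).mul_const α)]
  have : 0 < p - 2 + 1 := by linarith
  convert (by positivity : 0 < p * (p - 2 + 1) * |A t| ^ (p - 2) * α ^ 2) using 1
  ring

theorem strictConvexOn_absPowForm_comp_of_finite {p b α β : ℝ} {A B : ℝ → ℝ} (hp : 2 < p)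
    (hb0 : 0 ≤ b) (hb1 : b ≤ p - 1) (hA : ∀ t, HasDerivAt A α t) (hB : ∀ t, HasDerivAt B β t)
    (hαβ : α ≠ 0 ∨ β ≠ 0) (hE : {t | A t = 0 ∨ B t = 0 ∨ |A t| = |B t|}.Finite) :
    StrictConvexOn ℝ univ fun t => absPowForm p b (A t) (B t) := by
  have hp1 : 1 < p := by linarith
  have hq1 : 1 < p / 2 := by linarith
  have hAc := contDiff_one_of_hasDerivAt_const hA
  have hBc := contDiff_one_of_hasDerivAt_const hB
  refine strictConvexOn_univ_of_deriv2_pos_off_finite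
    (((hAc.abs_rpow hp1).add ((contDiff_const.mul (hAc.abs_rpow hq1)).mul (hBc.abs_rpow hq1))).add
      (hBc.abs_rpow hp1)) hE fun t ht => ?_
  obtain ⟨hAt, hBt, hABt⟩ : A t ≠ 0 ∧ B t ≠ 0 ∧ |A t| ≠ |B t| := by
    simpa only [mem_ofPred_eq, not_or] using ht
  have hg (s : ℝ) := (((hA s).abs_rpow hp1).add ((((hA s).abs_rpow hq1).const_mul (2 * b)).mul
    ((hB s).abs_rpow hq1))).add ((hB s).abs_rpow hp1)
  have hD₁ (r : ℝ) := (((hA t).abs_rpow_mul_self (r - 2) hAt).const_mul r).mul_const α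
  have hD₂ (r : ℝ) := (((hB t).abs_rpow_mul_self (r - 2) hBt).const_mul r).mul_const β
  have hg' := ((hD₁ p).add ((((hD₁ (p / 2)).const_mul (2 * b)).mul ((hB t).abs_rpow hq1)).add
    ((((hA t).abs_rpow hq1).const_mul (2 * b)).mul (hD₂ (p / 2))))).add (hD₂ p)
  rw [iter_deriv_two_eq_of_hasDerivAt (f := fun t => absPowForm p b (A t) (B t)) hg hg']
  convert absPowForm_hessian_pos hp hb0 hb1 hAt hBt hABt hαβ using 1
  ring

theorem strictConvexOn_absPowForm_line {p b : ℝ} (hp : 2 < p) (hb0 : 0 ≤ b) (hb1 : b ≤ p - 1)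
    (x v : ℝ × ℝ) (hv : v ≠ 0) :
    StrictConvexOn ℝ univ fun t : ℝ => absPowForm p b (x + t • v).1 (x + t • v).2 := by
  simp only [Prod.fst_add, Prod.snd_add, Prod.smul_fst, Prod.smul_snd, smul_eq_mul]
  have hp0 : p ≠ 0 := by linarith
  have hp1 : 1 < p := by linarith
  have hline (c₀ c₁ t : ℝ) : HasDerivAt (fun t => c₀ + t * c₁) c₁ t :=
    (hasDerivAt_mul_const c₁).const_add c₀
  have hzeros (c₀ c₁ : ℝ) (h : c₁ ≠ 0) : {t : ℝ | c₀ + t * c₁ = 0}.Finite :=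
    (subsingleton_setOf_add_mul_eq_zero (Or.inr h)).finite
  have hv' : v.1 ≠ 0 ∨ v.2 ≠ 0 := by
    contrapose! hv
    exact Prod.ext hv.1 hv.2
  by_cases hA : x.1 = 0 ∧ v.1 = 0
  · have hv₂ : v.2 ≠ 0 := hv'.resolve_left (not_not.2 hA.2)
    simp only [hA, mul_zero, add_zero, absPowForm_zero_left b _ hp0]
    exact strictConvexOn_abs_rpow_comp hp1 (hline _ _) hv₂ (hzeros _ _ hv₂)
  by_cases hB : x.2 = 0 ∧ v.2 = 0
  · have hv₁ : v.1 ≠ 0 := hv'.resolve_right (not_not.2 hB.2)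
    simp only [hB, mul_zero, add_zero, absPowForm_zero_right b _ hp0]
    exact strictConvexOn_abs_rpow_comp hp1 (hline _ _) hv₁ (hzeros _ _ hv₁)
  by_cases hAB : (x.1 = x.2 ∧ v.1 = v.2) ∨ (x.1 = -x.2 ∧ v.1 = -v.2)
  · have hv₂ : v.2 ≠ 0 := by
      rintro h₂
      rcases hAB with ⟨-, h⟩ | ⟨-, h⟩ <;> simp [h₂, h] at hv'
    have habs (t : ℝ) : |x.1 + t * v.1| = |x.2 + t * v.2| := by
      rcases hAB with ⟨h₀, h₁⟩ | ⟨h₀, h₁⟩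
      · rw [h₀, h₁]
      · rw [h₀, h₁, ← abs_neg]; ring_nf
    simp only [absPowForm_of_abs_eq hp0 (habs _)]
    exact (strictConvexOn_abs_rpow_comp hp1 (hline _ _) hv₂ (hzeros _ _ hv₂)).smul
      (by positivity)
  obtain ⟨hsub, hadd⟩ := not_or.1 hAB
  exact strictConvexOn_absPowForm_comp_of_finite hp hb0 hb1 (hline _ _) (hline _ _) hv'
    (finite_setOf_eq_zero_or_abs_eq (not_and_or.1 hA) (not_and_or.1 hB) (not_and_or.1 hsub)
      (not_and_or.1 hadd))

theorem strictConvexOn_absPowForm {p b : ℝ} (hp : 2 < p) (hb0 : 0 ≤ b) (hb1 : b ≤ p - 1) :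
    StrictConvexOn ℝ univ fun z : ℝ × ℝ => absPowForm p b z.1 z.2 :=
  strictConvexOn_univ_of_line (strictConvexOn_absPowForm_line hp hb0 hb1)

/-- For every real `p > 2`, `a > 0` and `0 ≤ b ≤ p - 1`, the function
`f(s,t) = (a/p)(|s|^p + 2b|s|^(p/2)|t|^(p/2) + |t|^p)` is strictly convex on `ℝ²`. -/
theorem stmt_0 (p a b : ℝ) (hp : 2 < p) (ha : 0 < a) (hb0 : 0 ≤ b) (hb1 : b ≤ p - 1) :
    StrictConvexOn ℝ (Set.univ : Set (ℝ × ℝ))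
      (fun q : ℝ × ℝ =>
        (a / p) * (|q.1| ^ p + 2 * b * |q.1| ^ (p / 2) * |q.2| ^ (p / 2) + |q.2| ^ p)) :=
  (strictConvexOn_absPowForm hp hb0 hb1).smul (div_pos ha (by linarith))
end

section
/- For every real p > 2, every a > 0 and every b with 0 ≤ b ≤ p − 1, the gradient map ∇f : ℝ² → ℝ², ∇f(s,t) = ( a(|s|^{p/2} + b|t|^{p/2})|s|^{p/2−2}s , a(|t|^{p/2} + b|s|^{p/2})|t|^{p/2−2}t ), is a homeomorphism of ℝ² onto ℝ². -/
/-!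
The map is continuous and `‖∇f q‖ ≥ a ‖q‖ ^ (p - 1)` for the sup norm, so it is proper, hence
closed, and it is a homeomorphism as soon as it is bijective.

Surjectivity: for every `w` the coercive function `f - ⟪w, ·⟫` attains its minimum, where its
gradient vanishes.

Injectivity: `∇f` preserves the signs of the coordinates and commutes with taking absolute values,
so it suffices to compare two points of the closed positive quadrant. There the first component
increases strictly with `s` and weakly with `t` (and symmetrically), so two distinct points with
the same image must cross: `s₂ < s₁` and `t₁ < t₂`. Multiplying the two equations and passing to
logarithmic coordinates yields `b² (cosh S - cosh D) ≥ cosh (c S) - cosh D` with `c = p - 1` and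
`|D| < c S`, which is impossible for `b ≤ c` because `c² cosh S - cosh (c S) < c² - 1`.
-/

open Real Filter Topology Set Function

lemma mul_sinh_lt_sinh_mul {c S : ℝ} (hc : 1 < c) (hS : 0 < S) : c * sinh S < sinh (c * S) := by
  have hmono : StrictMonoOn (fun x ↦ sinh (c * x) - c * sinh x) (Ici 0) := by
    refine strictMonoOn_of_deriv_pos (convex_Ici 0) (by fun_prop) fun x hx ↦ ?_
    rw [interior_Ici, mem_Ioi] at hx
    have hd : HasDerivAt (fun x ↦ sinh (c * x) - c * sinh x)
        (c * (cosh (c * x) - cosh x)) x := by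
      refine (((hasDerivAt_id x).const_mul c).sinh.sub
        ((hasDerivAt_sinh x).const_mul c)).congr_deriv ?_
      simp only [id_eq]; ring
    have hcosh : cosh x < cosh (c * x) := by
      rw [cosh_lt_cosh, abs_of_pos hx, abs_of_pos (by positivity)]; nlinarith
    rw [hd.deriv]
    exact mul_pos (by linarith) (sub_pos.2 hcosh)
  simpa using hmono self_mem_Ici hS.le hS

lemma sq_mul_cosh_sub_cosh_mul_lt {c S : ℝ} (hc : 1 < c) (hS : 0 < S) :
    c ^ 2 * cosh S - cosh (c * S) < c ^ 2 - 1 := by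
  have hanti : StrictAntiOn (fun x ↦ c ^ 2 * cosh x - cosh (c * x)) (Ici 0) := by
    refine strictAntiOn_of_deriv_neg (convex_Ici 0) (by fun_prop) fun x hx ↦ ?_
    rw [interior_Ici, mem_Ioi] at hx
    have hd : HasDerivAt (fun x ↦ c ^ 2 * cosh x - cosh (c * x))
        (c * (c * sinh x - sinh (c * x))) x := by
      refine (((hasDerivAt_cosh x).const_mul (c ^ 2)).sub
        ((hasDerivAt_id x).const_mul c).cosh).congr_deriv ?_
      simp only [id_eq]; ring
    rw [hd.deriv]
    exact mul_neg_of_pos_of_neg (by linarith) (sub_neg.2 (mul_sinh_lt_sinh_mul hc hx))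
  simpa using hanti self_mem_Ici hS.le hS

lemma sq_mul_cosh_sub_cosh_lt {b c S D : ℝ} (hc : 1 < c) (hb : 0 ≤ b) (hbc : b ≤ c)
    (hS : 0 < S) (hD : |D| < c * S) :
    b ^ 2 * (cosh S - cosh D) < cosh (c * S) - cosh D := by
  have hDcS : cosh D < cosh (c * S) := by
    rwa [cosh_lt_cosh, abs_of_pos (by positivity : 0 < c * S)]
  rcases le_or_gt (cosh S) (cosh D) with hSD | hSD
  · nlinarith [sq_nonneg b]
  · calc b ^ 2 * (cosh S - cosh D) ≤ c ^ 2 * (cosh S - cosh D) := by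
          gcongr
      _ < cosh (c * S) - cosh D := by
          nlinarith [sq_mul_cosh_sub_cosh_mul_lt hc hS,
            mul_nonneg (by nlinarith : 0 ≤ c ^ 2 - 1) (sub_nonneg.2 (one_le_cosh D))]

lemma exp_sub_exp_mul_exp_sub_exp (A B C D : ℝ) :
    (exp A - exp B) * (exp C - exp D) = 2 * exp ((A + B + C + D) / 2) *
      (cosh ((A - B + (C - D)) / 2) - cosh ((A - B - (C - D)) / 2)) := by
  simp only [cosh_eq]
  ring_nf
  simp only [← exp_add]
  ring_nf

lemma sq_mul_rpow_cross_lt {m b s₁ s₂ t₁ t₂ : ℝ} (hm : 1 < m) (hb : 0 ≤ b)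
    (hbm : b ≤ 2 * m - 1) (hs₂ : 0 < s₂) (hs : s₂ < s₁) (ht₁ : 0 < t₁) (ht : t₁ < t₂) :
    b ^ 2 * ((t₂ ^ m * s₂ ^ (m - 1) - t₁ ^ m * s₁ ^ (m - 1)) *
        (s₁ ^ m * t₁ ^ (m - 1) - s₂ ^ m * t₂ ^ (m - 1))) <
      (s₁ ^ (2 * m - 1) - s₂ ^ (2 * m - 1)) * (t₂ ^ (2 * m - 1) - t₁ ^ (2 * m - 1)) := by
  have hσ := log_lt_log hs₂ hs
  have hτ := log_lt_log ht₁ ht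
  simp only [rpow_def_of_pos hs₂, rpow_def_of_pos (hs₂.trans hs), rpow_def_of_pos ht₁,
    rpow_def_of_pos (ht₁.trans ht), ← exp_add, exp_sub_exp_mul_exp_sub_exp]
  set σ₁ := log s₁
  set σ₂ := log s₂
  set τ₁ := log t₁
  set τ₂ := log t₂
  have hc : 0 < 2 * m - 1 := by linarith
  have hD : |(2 * m - 1) * (σ₁ - σ₂ - (τ₂ - τ₁)) / 2| <
      (2 * m - 1) * ((σ₁ - σ₂ + (τ₂ - τ₁)) / 2) := by
    rw [abs_lt]
    constructor <;> nlinarith [mul_pos hc (sub_pos.2 hσ), mul_pos hc (sub_pos.2 hτ)]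
  have key := mul_lt_mul_of_pos_left
    (sq_mul_cosh_sub_cosh_lt (by linarith) hb hbm (by linarith) hD)
    (by positivity : 0 < 2 * exp ((2 * m - 1) * (σ₁ + σ₂ + τ₁ + τ₂) / 2))
  refine (Eq.trans_lt ?_ key).trans_eq ?_
  · rw [← cosh_neg ((2 * m - 1) * (σ₁ - σ₂ - (τ₂ - τ₁)) / 2)]
    ring_nf
  · ring_nf

-- With `m = p / 2`, `∇f = a • gradMap m b` and `f = a * potential m b`.
noncomputable def gradComp (m b s t : ℝ) : ℝ :=
  (|s| ^ m + b * |t| ^ m) * (|s| ^ (m - 2) * s)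

noncomputable def gradMap (m b : ℝ) (q : ℝ × ℝ) : ℝ × ℝ :=
  (gradComp m b q.1 q.2, gradComp m b q.2 q.1)

noncomputable def potential (m b : ℝ) (q : ℝ × ℝ) : ℝ :=
  (|q.1| ^ (2 * m) + 2 * b * (|q.1| ^ m * |q.2| ^ m) + |q.2| ^ (2 * m)) / (2 * m)

section

variable {m b : ℝ}

lemma abs_rpow_mul_abs_rpow_sub_two_mul (m s : ℝ) :
    |s| ^ m * (|s| ^ (m - 2) * s) = |s| ^ (2 * m - 2) * s := by
  rcases eq_or_ne s 0 with rfl | hs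
  · simp
  · rw [← mul_assoc, ← rpow_add (abs_pos.2 hs)]; ring_nf

lemma gradComp_zero_left (m b t : ℝ) : gradComp m b 0 t = 0 := by
  simp [gradComp]

lemma gradComp_of_nonneg (hm : 1 < m) {s t : ℝ} (hs : 0 ≤ s) (ht : 0 ≤ t) :
    gradComp m b s t = s ^ (2 * m - 1) + b * t ^ m * s ^ (m - 1) := by
  rcases hs.eq_or_lt with rfl | hs
  · rw [gradComp_zero_left, zero_rpow (by linarith), zero_rpow (by linarith)]; ring
  · rw [gradComp, add_mul, abs_rpow_mul_abs_rpow_sub_two_mul, abs_of_pos hs, abs_of_nonneg ht,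
      ← rpow_add_one hs.ne', ← rpow_add_one hs.ne']
    ring_nf

lemma gradComp_abs (hb : 0 ≤ b) (s t : ℝ) : gradComp m b |s| |t| = |gradComp m b s t| := by
  have h₁ : 0 ≤ |s| ^ m + b * |t| ^ m := by positivity
  have h₂ : 0 ≤ |s| ^ (m - 2) := by positivity
  unfold gradComp
  rw [abs_mul, abs_mul, abs_abs, abs_abs, abs_of_nonneg h₁, abs_of_nonneg h₂]

lemma sign_gradComp (hb : 0 ≤ b) (s t : ℝ) :
    SignType.sign (gradComp m b s t) = SignType.sign s := by
  rcases eq_or_ne s 0 with rfl | hs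
  · rw [gradComp_zero_left]
  · have hpos : 0 < (|s| ^ m + b * |t| ^ m) * |s| ^ (m - 2) := by
      have := abs_pos.2 hs; positivity
    rw [gradComp, ← mul_assoc, sign_mul, sign_pos hpos, one_mul]

lemma gradComp_lt_gradComp (hm : 1 < m) (hb : 0 ≤ b) {s₁ s₂ t₁ t₂ : ℝ} (hs₂ : 0 ≤ s₂)
    (hs : s₂ < s₁) (ht₂ : 0 ≤ t₂) (ht : t₂ ≤ t₁) : gradComp m b s₂ t₂ < gradComp m b s₁ t₁ := by
  have ht₁ := ht₂.trans ht
  rw [gradComp_of_nonneg hm hs₂ ht₂, gradComp_of_nonneg hm (hs₂.trans hs.le) ht₁]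
  refine add_lt_add_of_lt_of_le (rpow_lt_rpow hs₂ hs (by linarith)) ?_
  gcongr

lemma gradComp_pos (hm : 1 < m) (hb : 0 ≤ b) {s t : ℝ} (hs : 0 < s) (ht : 0 ≤ t) :
    0 < gradComp m b s t := by
  simpa [gradComp_zero_left] using gradComp_lt_gradComp hm hb le_rfl hs le_rfl ht

lemma gradMap_ne_of_lt_of_lt (hm : 1 < m) (hb : 0 ≤ b) (hbm : b ≤ 2 * m - 1) {s₁ s₂ t₁ t₂ : ℝ}
    (hs₂ : 0 < s₂) (hs : s₂ < s₁) (ht₁ : 0 < t₁) (ht : t₁ < t₂) :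
    gradMap m b (s₁, t₁) ≠ gradMap m b (s₂, t₂) := by
  have hs₁ := hs₂.trans hs
  have ht₂ := ht₁.trans ht
  intro h
  simp only [gradMap, Prod.mk.injEq] at h
  rw [gradComp_of_nonneg hm hs₁.le ht₁.le, gradComp_of_nonneg hm hs₂.le ht₂.le,
    gradComp_of_nonneg hm ht₁.le hs₁.le, gradComp_of_nonneg hm ht₂.le hs₂.le] at h
  have := sq_mul_rpow_cross_lt hm hb hbm hs₂ hs ht₁ ht
  have e₁ : s₁ ^ (2 * m - 1) - s₂ ^ (2 * m - 1) =
      b * (t₂ ^ m * s₂ ^ (m - 1) - t₁ ^ m * s₁ ^ (m - 1)) := by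
    linear_combination h.1
  have e₂ : t₂ ^ (2 * m - 1) - t₁ ^ (2 * m - 1) =
      b * (s₁ ^ m * t₁ ^ (m - 1) - s₂ ^ m * t₂ ^ (m - 1)) := by
    linear_combination -h.2
  rw [e₁, e₂] at this
  linarith

lemma eq_of_gradMap_eq_of_nonneg (hm : 1 < m) (hb : 0 ≤ b) (hbm : b ≤ 2 * m - 1) {s₁ s₂ t₁ t₂ : ℝ}
    (hs₁ : 0 ≤ s₁) (hs₂ : 0 ≤ s₂) (ht₁ : 0 ≤ t₁) (ht₂ : 0 ≤ t₂)
    (h : gradMap m b (s₁, t₁) = gradMap m b (s₂, t₂)) : s₁ = s₂ ∧ t₁ = t₂ := by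
  wlog hs : s₂ ≤ s₁ generalizing s₁ s₂ t₁ t₂
  · obtain ⟨rfl, rfl⟩ := this hs₂ hs₁ ht₂ ht₁ h.symm (le_of_not_ge hs)
    exact ⟨rfl, rfl⟩
  obtain ⟨h₁, h₂⟩ := Prod.ext_iff.1 h
  rcases hs.lt_or_eq with hs | rfl
  · exfalso
    rcases le_or_gt t₂ t₁ with ht | ht
    · exact (gradComp_lt_gradComp hm hb hs₂ hs ht₂ ht).ne h₁.symm
    rcases hs₂.eq_or_lt with rfl | hs₂
    · exact (gradComp_pos hm hb hs ht₁).ne' (h₁.trans (gradComp_zero_left m b t₂))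
    rcases ht₁.eq_or_lt with rfl | ht₁
    · exact (gradComp_pos hm hb ht hs₂.le).ne' (h₂.symm.trans (gradComp_zero_left m b s₁))
    exact gradMap_ne_of_lt_of_lt hm hb hbm hs₂ hs ht₁ ht h
  · refine ⟨rfl, ?_⟩
    rcases lt_trichotomy t₁ t₂ with ht | ht | ht
    · exact absurd h₂ (gradComp_lt_gradComp hm hb ht₁ ht hs₁ le_rfl).ne
    · exact ht
    · exact absurd h₂ (gradComp_lt_gradComp hm hb ht₂ ht hs₁ le_rfl).ne'

lemma gradMap_injective (hm : 1 < m) (hb : 0 ≤ b) (hbm : b ≤ 2 * m - 1) :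
    Injective (gradMap m b) := by
  rintro ⟨s₁, t₁⟩ ⟨s₂, t₂⟩ h
  simp only [gradMap, Prod.mk.injEq] at h
  have habs := eq_of_gradMap_eq_of_nonneg hm hb hbm (abs_nonneg s₁) (abs_nonneg s₂) (abs_nonneg t₁)
    (abs_nonneg t₂) (by simp only [gradMap, gradComp_abs hb, h.1, h.2])
  have hsign₁ : SignType.sign s₁ = SignType.sign s₂ := by
    rw [← sign_gradComp hb s₁ t₁, h.1, sign_gradComp hb]
  have hsign₂ : SignType.sign t₁ = SignType.sign t₂ := by
    rw [← sign_gradComp hb t₁ s₁, h.2, sign_gradComp hb]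
  rw [Prod.mk.injEq, ← sign_mul_abs s₁, ← sign_mul_abs s₂, ← sign_mul_abs t₁, ← sign_mul_abs t₂,
    hsign₁, hsign₂, habs.1, habs.2]
  exact ⟨rfl, rfl⟩

lemma hasDerivAt_potential_fst (hm : 1 < m) (s t : ℝ) :
    HasDerivAt (fun s ↦ potential m b (s, t)) (gradComp m b s t) s := by
  have hm₀ : m ≠ 0 := by positivity
  refine ((((hasDerivAt_abs_rpow s (by linarith : 1 < 2 * m)).add
    (((hasDerivAt_abs_rpow s hm).mul_const (|t| ^ m)).const_mul (2 * b))).add_const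
      (|t| ^ (2 * m))).div_const (2 * m)).congr_deriv ?_
  rw [gradComp, add_mul, abs_rpow_mul_abs_rpow_sub_two_mul]
  field_simp

lemma potential_swap (q : ℝ × ℝ) : potential m b q.swap = potential m b q := by
  simp only [potential, Prod.fst_swap, Prod.snd_swap]
  ring

lemma hasDerivAt_potential_snd (hm : 1 < m) (s t : ℝ) :
    HasDerivAt (fun t ↦ potential m b (s, t)) (gradComp m b t s) t := by
  simpa only [← potential_swap (s, _), Prod.swap_prod_mk] using hasDerivAt_potential_fst hm t s

lemma continuous_potential (hm : 0 < m) : Continuous (potential m b) := by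
  unfold potential
  fun_prop (disch := positivity)

lemma norm_rpow_div_le_potential (hm : 0 < m) (hb : 0 ≤ b) (q : ℝ × ℝ) :
    ‖q‖ ^ (2 * m) / (2 * m) ≤ potential m b q := by
  have hnorm : ‖q‖ ^ (2 * m) ≤ |q.1| ^ (2 * m) + |q.2| ^ (2 * m) := by
    rcases max_choice ‖q.1‖ ‖q.2‖ with h | h <;>
      rw [Prod.norm_def, h, Real.norm_eq_abs] <;>
      linarith [rpow_nonneg (abs_nonneg q.1) (2 * m), rpow_nonneg (abs_nonneg q.2) (2 * m)]
  unfold potential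
  gcongr
  linarith [(by positivity : 0 ≤ 2 * b * (|q.1| ^ m * |q.2| ^ m))]

lemma tendsto_rpow_div_sub_mul_atTop {p : ℝ} (hp : 1 < p) (C : ℝ) :
    Tendsto (fun r : ℝ ↦ r ^ p / p - C * r) atTop atTop := by
  have h : Tendsto (fun r : ℝ ↦ (r ^ (p - 1) / p - C) * r) atTop atTop :=
    ((tendsto_atTop_add_const_right _ (-C)
      ((tendsto_rpow_atTop (by linarith)).atTop_div_const (by linarith))).atTop_mul_atTop₀
        tendsto_id)
  refine h.congr' ?_
  filter_upwards [eventually_gt_atTop 0] with r hr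
  rw [sub_mul, div_mul_eq_mul_div, ← rpow_add_one hr.ne', sub_add_cancel]

lemma tendsto_potential_sub_cocompact (hm : 1 < m) (hb : 0 ≤ b) (w : ℝ × ℝ) :
    Tendsto (fun q ↦ potential m b q - (w.1 * q.1 + w.2 * q.2)) (cocompact (ℝ × ℝ)) atTop := by
  have hlin (q : ℝ × ℝ) : w.1 * q.1 + w.2 * q.2 ≤ (|w.1| + |w.2|) * ‖q‖ := by
    have h₁ : |q.1| ≤ ‖q‖ := norm_fst_le q
    have h₂ : |q.2| ≤ ‖q‖ := norm_snd_le q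
    nlinarith [le_abs_self (w.1 * q.1), le_abs_self (w.2 * q.2), abs_mul w.1 q.1, abs_mul w.2 q.2,
      abs_nonneg w.1, abs_nonneg w.2]
  refine tendsto_atTop_mono (fun q ↦ ?_)
    ((tendsto_rpow_div_sub_mul_atTop (by linarith : 1 < 2 * m) (|w.1| + |w.2|)).comp
      tendsto_norm_cocompact_atTop)
  dsimp only [comp_apply]
  linarith [norm_rpow_div_le_potential (by linarith : 0 < m) hb q, hlin q]

lemma gradMap_surjective (hm : 1 < m) (hb : 0 ≤ b) : Surjective (gradMap m b) := by
  intro w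
  obtain ⟨q, hq⟩ := ((continuous_potential (by linarith)).sub (by fun_prop)).exists_forall_le
    (tendsto_potential_sub_cocompact hm hb w)
  have h₁ : IsLocalMin (fun s ↦ potential m b (s, q.2) - (w.1 * s + w.2 * q.2)) q.1 :=
    .of_forall fun s ↦ hq (s, q.2)
  have h₂ : IsLocalMin (fun t ↦ potential m b (q.1, t) - (w.1 * q.1 + w.2 * t)) q.2 :=
    .of_forall fun t ↦ hq (q.1, t)
  have d₁ := h₁.hasDerivAt_eq_zero ((hasDerivAt_potential_fst hm q.1 q.2).sub
    (((hasDerivAt_id q.1).const_mul w.1).add_const (w.2 * q.2)))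
  have d₂ := h₂.hasDerivAt_eq_zero ((hasDerivAt_potential_snd hm q.1 q.2).sub
    (((hasDerivAt_id q.2).const_mul w.2).const_add (w.1 * q.1)))
  simp only [mul_one, sub_eq_zero] at d₁ d₂
  exact ⟨q, Prod.ext d₁ d₂⟩

lemma continuous_abs_rpow_sub_two_mul (hm : 1 < m) :
    Continuous fun x : ℝ ↦ |x| ^ (m - 2) * x := by
  have hderiv : deriv (fun x : ℝ ↦ ‖x‖ ^ m) = fun x ↦ m * (|x| ^ (m - 2) * x) := by
    funext x
    rw [(hasDerivAt_norm_rpow x hm).deriv, Real.norm_eq_abs, mul_assoc]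
  have h := (contDiff_norm_rpow (E := ℝ) hm).continuous_deriv le_rfl
  rw [hderiv] at h
  simpa [(by positivity : m ≠ 0)] using h.const_mul m⁻¹

lemma continuous_gradMap (hm : 1 < m) : Continuous (gradMap m b) := by
  have h := continuous_abs_rpow_sub_two_mul hm
  refine .prodMk (.mul ?_ (h.comp continuous_fst)) (.mul ?_ (h.comp continuous_snd)) <;>
    fun_prop (disch := linarith)

lemma abs_rpow_le_abs_gradComp (hm : 1 < m) (hb : 0 ≤ b) (s t : ℝ) :
    |s| ^ (2 * m - 1) ≤ |gradComp m b s t| := by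
  rw [← gradComp_abs hb s t, gradComp_of_nonneg hm (abs_nonneg s) (abs_nonneg t)]
  linarith [(by positivity : 0 ≤ b * |t| ^ m * |s| ^ (m - 1))]

lemma norm_rpow_le_norm_gradMap (hm : 1 < m) (hb : 0 ≤ b) (q : ℝ × ℝ) :
    ‖q‖ ^ (2 * m - 1) ≤ ‖gradMap m b q‖ := by
  rw [Prod.norm_def, Prod.norm_def, gradMap]
  simp only [Real.norm_eq_abs]
  rcases max_choice |q.1| |q.2| with h | h <;> rw [h]
  · exact (abs_rpow_le_abs_gradComp hm hb q.1 q.2).trans (le_max_left _ _)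
  · exact (abs_rpow_le_abs_gradComp hm hb q.2 q.1).trans (le_max_right _ _)

lemma tendsto_gradMap_cocompact (hm : 1 < m) (hb : 0 ≤ b) :
    Tendsto (gradMap m b) (cocompact (ℝ × ℝ)) (cocompact (ℝ × ℝ)) := by
  rw [← Metric.cobounded_eq_cocompact, ← tendsto_norm_atTop_iff_cobounded,
    Metric.cobounded_eq_cocompact]
  exact tendsto_atTop_mono (norm_rpow_le_norm_gradMap hm hb)
    ((tendsto_rpow_atTop (by linarith)).comp tendsto_norm_cocompact_atTop)

theorem isHomeomorph_gradMap (hm : 1 < m) (hb : 0 ≤ b) (hbm : b ≤ 2 * m - 1) :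
    IsHomeomorph (gradMap m b) :=
  isHomeomorph_iff_continuous_isClosedMap_bijective.2
    ⟨continuous_gradMap hm,
      (isProperMap_iff_tendsto_cocompact.2
        ⟨continuous_gradMap hm, tendsto_gradMap_cocompact hm hb⟩).isClosedMap,
      gradMap_injective hm hb hbm, gradMap_surjective hm hb⟩

end

/-- the gradient map `∇f : ℝ² → ℝ²` of
`f(s,t) = (a/p)(|s|^p + 2b|s|^(p/2)|t|^(p/2) + |t|^p)` is a homeomorphism of `ℝ²` onto `ℝ²`. -/
theorem stmt_3 (p a b : ℝ) (hp : 2 < p) (ha : 0 < a) (hb0 : 0 ≤ b) (hb1 : b ≤ p - 1) :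
    IsHomeomorph
      (fun q : ℝ × ℝ =>
        ((a * ((|q.1| ^ (p / 2) + b * |q.2| ^ (p / 2)) * (|q.1| ^ (p / 2 - 2) * q.1)),
          a * ((|q.2| ^ (p / 2) + b * |q.1| ^ (p / 2)) * (|q.2| ^ (p / 2 - 2) * q.2))) :
            ℝ × ℝ)) :=
  (isHomeomorph_smul₀ ha.ne').comp
    (isHomeomorph_gradMap (by linarith : 1 < p / 2) hb0 (by linarith))
end

section
/- Let p > 2, p′ = p/(p−1), a > 0 and 0 ≤ b ≤ p − 1. Then for all real s̄, t̄ the supremum h(s̄,t̄) = sup over (s,t) ∈ ℝ² of ( s·s̄ + t·t̄ − f(s,t) ) is finite and equals (a^{1−p′}/p′) · [ sup over σ > 0 of (|s̄| + σ|t̄|)/(1 + 2b σ^{p/2} + σ^p)^{1/p} ]^{p′}. -/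
/-!
Along a ray `v = σ u` of the closed quadrant, `mixedPow p b u v = u ^ p * rayWeight p b σ`, so the
supremum of `u A + v B - (a / p) mixedPow p b u v` along that ray is the one-dimensional Legendre
transform of `r ↦ c r ^ p / p` at `A + σ B`, which Young's inequality evaluates as
`c ^ (1 - p') (A + σ B) ^ p' / p'` with `c = a · rayWeight p b σ`; this is
`a ^ (1 - p') / p' * profile p b A B σ ^ p'`. Choosing the signs of `s, t` to match those of
`s̄, t̄` reduces `h (s̄, t̄)` to the quadrant with `A = |s̄|`, `B = |t̄|`, and the two axes, missed by
the rays with `σ > 0`, are covered by continuity.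
-/

open Real Set

namespace Real.HolderConjugate

variable {p q c A : ℝ}

lemma one_sub_eq_neg_div (hpq : p.HolderConjugate q) : 1 - q = -(q / p) := by
  have := hpq.mul_eq_add
  have := hpq.ne_zero
  field_simp
  linarith

lemma mul_sub_rpow_le (hpq : p.HolderConjugate q) (hc : 0 < c) (hA : 0 ≤ A) {r : ℝ}
    (hr : 0 ≤ r) : r * A - c / p * r ^ p ≤ c ^ (1 - q) / q * A ^ q := by
  have young := young_inequality_of_nonneg (mul_nonneg (rpow_nonneg hc.le (1 / p)) hr)
    (mul_nonneg (rpow_nonneg hc.le (-(1 / p))) hA) hpq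
  have hX : (c ^ (1 / p) * r) ^ p = c * r ^ p := by
    rw [mul_rpow (rpow_nonneg hc.le _) hr, ← rpow_mul hc.le, one_div_mul_cancel hpq.ne_zero,
      rpow_one]
  have hY : (c ^ (-(1 / p)) * A) ^ q = c ^ (1 - q) * A ^ q := by
    rw [mul_rpow (rpow_nonneg hc.le _) hA, ← rpow_mul hc.le, hpq.one_sub_eq_neg_div]
    ring_nf
  have hXY : c ^ (1 / p) * r * (c ^ (-(1 / p)) * A) = r * A := by
    rw [rpow_neg hc.le]
    field_simp [(rpow_pos_of_pos hc (1 / p)).ne']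
  rw [hX, hY, hXY] at young
  linarith [show c * r ^ p / p = c / p * r ^ p by ring,
    show c ^ (1 - q) * A ^ q / q = c ^ (1 - q) / q * A ^ q by ring]

lemma exists_mul_sub_rpow_eq (hpq : p.HolderConjugate q) (hc : 0 < c) (hA : 0 ≤ A) :
    ∃ r, 0 ≤ r ∧ r * A - c / p * r ^ p = c ^ (1 - q) / q * A ^ q := by
  refine ⟨A ^ (q - 1) * c ^ (1 - q), by positivity, ?_⟩
  have hrA : A ^ (q - 1) * c ^ (1 - q) * A = c ^ (1 - q) * A ^ q := by
    rw [mul_right_comm, ← rpow_add_one' hA (by linarith [hpq.symm.sub_one_pos]), sub_add_cancel,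
      mul_comm]
  have hrp : c * (A ^ (q - 1) * c ^ (1 - q)) ^ p = c ^ (1 - q) * A ^ q := by
    rw [mul_rpow (rpow_nonneg hA _) (rpow_nonneg hc.le _), ← rpow_mul hA, ← rpow_mul hc.le,
      hpq.symm.sub_one_mul_conj, show (1 - q) * p = 1 - q - 1 by linarith [hpq.mul_eq_add],
      rpow_sub hc, rpow_one]
    field_simp
  calc A ^ (q - 1) * c ^ (1 - q) * A - c / p * (A ^ (q - 1) * c ^ (1 - q)) ^ p
      = c ^ (1 - q) * A ^ q * (1 - p⁻¹) := by rw [hrA, ← hrp]; ring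
    _ = c ^ (1 - q) / q * A ^ q := by rw [hpq.one_sub_inv]; ring

lemma mul_rpow_one_sub_mul_rpow (hpq : p.HolderConjugate q) {a w : ℝ} (ha : 0 < a)
    (hw : 0 < w) (hA : 0 ≤ A) :
    (a * w) ^ (1 - q) * A ^ q = a ^ (1 - q) * (A / w ^ (1 / p)) ^ q := by
  rw [div_rpow hA (rpow_nonneg hw.le _), ← rpow_mul hw.le, mul_rpow ha.le hw.le,
    hpq.one_sub_eq_neg_div, rpow_neg hw.le, one_div_mul_eq_div]
  ring

end Real.HolderConjugate

lemma Real.iSup_rpow {ι : Sort*} [Nonempty ι] {g : ι → ℝ} (hg : ∀ i, 0 ≤ g i)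
    (hbdd : BddAbove (range g)) {q : ℝ} (hq : 0 < q) : (⨆ i, g i) ^ q = ⨆ i, g i ^ q := by
  have hmono : MonotoneOn (· ^ q) (range g) := by
    rintro _ ⟨i, rfl⟩ _ ⟨j, rfl⟩ hij
    exact rpow_le_rpow (hg i) hij hq.le
  rw [iSup, hmono.map_csSup_of_continuousWithinAt
    (continuousAt_rpow_const _ _ (Or.inr hq.le)).continuousWithinAt (range_nonempty g) hbdd,
    ← range_comp, iSup]
  rfl

lemma exists_abs_eq_and_mul_eq {r : ℝ} (hr : 0 ≤ r) (x : ℝ) : ∃ s, |s| = r ∧ s * x = r * |x| := by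
  rcases le_total 0 x with hx | hx
  · exact ⟨r, abs_of_nonneg hr, by rw [abs_of_nonneg hx]⟩
  · exact ⟨-r, by rw [abs_neg, abs_of_nonneg hr], by rw [abs_of_nonpos hx]; ring⟩

/-- In the notation of the statement, `f (s, t) = a / p * mixedPow p b |s| |t|`. -/
noncomputable def mixedPow (p b u v : ℝ) : ℝ := u ^ p + 2 * b * u ^ (p / 2) * v ^ (p / 2) + v ^ p

noncomputable def rayWeight (p b σ : ℝ) : ℝ := 1 + 2 * b * σ ^ (p / 2) + σ ^ p

noncomputable def profile (p b A B σ : ℝ) : ℝ := (A + σ * B) / rayWeight p b σ ^ (1 / p)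

section

variable {p q a b A B σ : ℝ}

lemma mixedPow_mul_right {u : ℝ} (hu : 0 ≤ u) (hσ : 0 ≤ σ) :
    mixedPow p b u (u * σ) = u ^ p * rayWeight p b σ := by
  have hsq : u ^ p = u ^ (p / 2) * u ^ (p / 2) := by
    rw [← sq, ← rpow_natCast, ← rpow_mul hu]
    norm_num
  simp only [mixedPow, rayWeight, mul_rpow hu hσ]
  rw [hsq]
  ring

lemma continuous_mixedPow (hp : 0 ≤ p) : Continuous fun x : ℝ × ℝ => mixedPow p b x.1 x.2 := by
  unfold mixedPow
  fun_prop (disch := positivity)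

lemma one_le_rayWeight (hb : 0 ≤ b) (hσ : 0 ≤ σ) : 1 ≤ rayWeight p b σ := by
  have := rpow_nonneg hσ (p / 2)
  have := rpow_nonneg hσ p
  unfold rayWeight
  nlinarith

lemma le_rayWeight_rpow (hp : 0 < p) (hb : 0 ≤ b) (hσ : 0 ≤ σ) :
    σ ≤ rayWeight p b σ ^ (1 / p) := by
  rw [one_div, le_rpow_inv_iff_of_pos hσ (by linarith [one_le_rayWeight (p := p) hb hσ]) hp]
  have := rpow_nonneg hσ (p / 2)
  unfold rayWeight
  nlinarith

lemma profile_nonneg (hb : 0 ≤ b) (hA : 0 ≤ A) (hB : 0 ≤ B) (hσ : 0 ≤ σ) :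
    0 ≤ profile p b A B σ :=
  div_nonneg (by positivity) (rpow_nonneg (by linarith [one_le_rayWeight (p := p) hb hσ]) _)

lemma profile_le (hp : 0 < p) (hb : 0 ≤ b) (hA : 0 ≤ A) (hB : 0 ≤ B) (hσ : 0 ≤ σ) :
    profile p b A B σ ≤ A + B := by
  have hw : 1 ≤ rayWeight p b σ ^ (1 / p) :=
    one_le_rpow (one_le_rayWeight hb hσ) (by positivity)
  rw [profile, div_le_iff₀ (by linarith)]
  nlinarith [le_rayWeight_rpow hp hb hσ]

lemma mul_sub_mixedPow_mul_right {u : ℝ} (hu : 0 ≤ u) (hσ : 0 ≤ σ) :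
    u * A + u * σ * B - a / p * mixedPow p b u (u * σ) =
      u * (A + σ * B) - a * rayWeight p b σ / p * u ^ p := by
  rw [mixedPow_mul_right hu hσ]
  ring

lemma mul_rayWeight_rpow_mul_rpow_eq_profile (hpq : p.HolderConjugate q) (ha : 0 < a) (hb : 0 ≤ b) (hA : 0 ≤ A)
    (hB : 0 ≤ B) (hσ : 0 ≤ σ) :
    (a * rayWeight p b σ) ^ (1 - q) / q * (A + σ * B) ^ q =
      a ^ (1 - q) / q * profile p b A B σ ^ q := by
  rw [div_mul_eq_mul_div, hpq.mul_rpow_one_sub_mul_rpow ha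
    (by linarith [one_le_rayWeight (p := p) hb hσ]) (by positivity), profile]
  ring

lemma mul_sub_mixedPow_mul_right_le (hpq : p.HolderConjugate q) (ha : 0 < a) (hb : 0 ≤ b)
    (hA : 0 ≤ A) (hB : 0 ≤ B) {u : ℝ} (hu : 0 ≤ u) (hσ : 0 ≤ σ) :
    u * A + u * σ * B - a / p * mixedPow p b u (u * σ) ≤
      a ^ (1 - q) / q * profile p b A B σ ^ q := by
  have hw := one_le_rayWeight (p := p) hb hσ
  rw [mul_sub_mixedPow_mul_right hu hσ, ← mul_rayWeight_rpow_mul_rpow_eq_profile hpq ha hb hA hB hσ]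
  exact hpq.mul_sub_rpow_le (by positivity) (by positivity) hu

lemma exists_mul_sub_mixedPow_mul_right_eq (hpq : p.HolderConjugate q) (ha : 0 < a)
    (hb : 0 ≤ b) (hA : 0 ≤ A) (hB : 0 ≤ B) (hσ : 0 ≤ σ) :
    ∃ u, 0 ≤ u ∧ u * A + u * σ * B - a / p * mixedPow p b u (u * σ) =
      a ^ (1 - q) / q * profile p b A B σ ^ q := by
  have hw := one_le_rayWeight (p := p) hb hσ
  obtain ⟨u, hu, hmax⟩ := hpq.exists_mul_sub_rpow_eq (c := a * rayWeight p b σ) (A := A + σ * B)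
    (by positivity) (by positivity)
  refine ⟨u, hu, ?_⟩
  rw [mul_sub_mixedPow_mul_right hu hσ, hmax, mul_rayWeight_rpow_mul_rpow_eq_profile hpq ha hb hA hB hσ]

lemma bddAbove_range_profile (hp : 0 < p) (hb : 0 ≤ b) (hA : 0 ≤ A) (hB : 0 ≤ B) :
    BddAbove (range fun σ : Ioi (0 : ℝ) => profile p b A B σ) :=
  ⟨A + B, forall_mem_range.2 fun σ => profile_le hp hb hA hB (le_of_lt σ.2)⟩

lemma mul_sub_mixedPow_le_of_pos (hpq : p.HolderConjugate q) (ha : 0 < a) (hb : 0 ≤ b)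
    (hA : 0 ≤ A) (hB : 0 ≤ B) {u v : ℝ} (hu : 0 < u) (hv : 0 < v) :
    u * A + v * B - a / p * mixedPow p b u v ≤
      a ^ (1 - q) / q * (⨆ σ : Ioi (0 : ℝ), profile p b A B σ) ^ q := by
  obtain ⟨σ, hσ, rfl⟩ : ∃ σ, 0 < σ ∧ v = u * σ := ⟨v / u, div_pos hv hu, by field_simp⟩
  calc u * A + u * σ * B - a / p * mixedPow p b u (u * σ)
      ≤ a ^ (1 - q) / q * profile p b A B σ ^ q :=
        mul_sub_mixedPow_mul_right_le hpq ha hb hA hB hu.le hσ.le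
    _ ≤ a ^ (1 - q) / q * (⨆ σ : Ioi (0 : ℝ), profile p b A B σ) ^ q := by
        have hpos := hpq.symm.pos
        gcongr
        · exact profile_nonneg hb hA hB hσ.le
        · exact le_ciSup (f := fun σ : Ioi (0 : ℝ) => profile p b A B σ)
            (bddAbove_range_profile hpq.pos hb hA hB) ⟨σ, hσ⟩

lemma mul_sub_mixedPow_le (hpq : p.HolderConjugate q) (ha : 0 < a) (hb : 0 ≤ b) (hA : 0 ≤ A)
    (hB : 0 ≤ B) {u v : ℝ} (hu : 0 ≤ u) (hv : 0 ≤ v) :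
    u * A + v * B - a / p * mixedPow p b u v ≤
      a ^ (1 - q) / q * (⨆ σ : Ioi (0 : ℝ), profile p b A B σ) ^ q := by
  have hcont := continuous_mixedPow (b := b) hpq.nonneg
  have hclosed : IsClosed {x : ℝ × ℝ | x.1 * A + x.2 * B - a / p * mixedPow p b x.1 x.2 ≤
      a ^ (1 - q) / q * (⨆ σ : Ioi (0 : ℝ), profile p b A B σ) ^ q} :=
    isClosed_le (by fun_prop) continuous_const
  have hquadrant := hclosed.closure_subset_iff.2 fun x (hx : x ∈ Ioi 0 ×ˢ Ioi 0) =>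
    mul_sub_mixedPow_le_of_pos hpq ha hb hA hB (mem_Ioi.1 hx.1) (mem_Ioi.1 hx.2)
  rw [closure_prod_eq, closure_Ioi] at hquadrant
  exact hquadrant (mk_mem_prod hu hv)

lemma mul_add_mul_sub_mixedPow_abs_le (hpq : p.HolderConjugate q) (ha : 0 < a) (hb : 0 ≤ b)
    (s t sb tb : ℝ) :
    s * sb + t * tb - a / p * mixedPow p b |s| |t| ≤
      a ^ (1 - q) / q * (⨆ σ : Ioi (0 : ℝ), profile p b |sb| |tb| σ) ^ q := by
  have hs := abs_mul s sb ▸ le_abs_self (s * sb)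
  have ht := abs_mul t tb ▸ le_abs_self (t * tb)
  have := mul_sub_mixedPow_le hpq ha hb (abs_nonneg sb) (abs_nonneg tb) (abs_nonneg s)
    (abs_nonneg t)
  linarith

lemma exists_mul_add_mul_sub_mixedPow_abs_eq (hpq : p.HolderConjugate q) (ha : 0 < a)
    (hb : 0 ≤ b) (sb tb : ℝ) (hσ : 0 ≤ σ) :
    ∃ s t : ℝ, s * sb + t * tb - a / p * mixedPow p b |s| |t| =
      a ^ (1 - q) / q * profile p b |sb| |tb| σ ^ q := by
  obtain ⟨u, hu, hmax⟩ :=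
    exists_mul_sub_mixedPow_mul_right_eq hpq ha hb (abs_nonneg sb) (abs_nonneg tb) hσ
  obtain ⟨s, hs, hssb⟩ := exists_abs_eq_and_mul_eq hu sb
  obtain ⟨t, ht, httb⟩ := exists_abs_eq_and_mul_eq (mul_nonneg hu hσ) tb
  exact ⟨s, t, by rw [hssb, httb, hs, ht, hmax]⟩

lemma mul_iSup_profile_rpow (hpq : p.HolderConjugate q) (ha : 0 ≤ a) (hb : 0 ≤ b) (hA : 0 ≤ A)
    (hB : 0 ≤ B) :
    a ^ (1 - q) / q * (⨆ σ : Ioi (0 : ℝ), profile p b A B σ) ^ q =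
      ⨆ σ : Ioi (0 : ℝ), a ^ (1 - q) / q * profile p b A B σ ^ q := by
  rw [iSup_rpow (fun σ => profile_nonneg hb hA hB (le_of_lt σ.2))
      (bddAbove_range_profile hpq.pos hb hA hB) hpq.symm.pos,
    mul_iSup_of_nonneg (div_nonneg (rpow_nonneg ha _) hpq.symm.nonneg)]

end

theorem stmt_4_general (p p' a b : ℝ) (hp : 2 < p) (hp' : p' = p / (p - 1)) (ha : 0 < a)
    (hb0 : 0 ≤ b) (sb tb : ℝ) :
    BddAbove (Set.range fun st : ℝ × ℝ =>
      st.1 * sb + st.2 * tb -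
        (a / p) * (|st.1| ^ p + 2 * b * |st.1| ^ (p / 2) * |st.2| ^ (p / 2) + |st.2| ^ p)) ∧
    (⨆ st : ℝ × ℝ,
      (st.1 * sb + st.2 * tb -
        (a / p) * (|st.1| ^ p + 2 * b * |st.1| ^ (p / 2) * |st.2| ^ (p / 2) + |st.2| ^ p))) =
      (a ^ (1 - p') / p') *
        (⨆ σ : Set.Ioi (0 : ℝ),
          (|sb| + (σ : ℝ) * |tb|) /
            (1 + 2 * b * (σ : ℝ) ^ (p / 2) + (σ : ℝ) ^ p) ^ (1 / p)) ^ p' := by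
  have hpq : p.HolderConjugate p' := hp' ▸ HolderConjugate.conjExponent (by linarith)
  have hub := fun st : ℝ × ℝ => mul_add_mul_sub_mixedPow_abs_le hpq ha hb0 st.1 st.2 sb tb
  have hbdd : BddAbove (range fun st : ℝ × ℝ =>
      st.1 * sb + st.2 * tb - a / p * mixedPow p b |st.1| |st.2|) :=
    ⟨_, forall_mem_range.2 hub⟩
  refine ⟨hbdd, le_antisymm (ciSup_le hub) ?_⟩
  refine (mul_iSup_profile_rpow hpq ha.le hb0 (abs_nonneg sb) (abs_nonneg tb)).trans_le
    (ciSup_le fun σ => ?_)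
  obtain ⟨s, t, hst⟩ :=
    exists_mul_add_mul_sub_mixedPow_abs_eq hpq ha hb0 sb tb (le_of_lt σ.2)
  exact hst ▸ le_ciSup hbdd (s, t)

/-- the Legendre transform `h(s̄,t̄) = sup_{(s,t)} (s s̄ + t t̄ - f(s,t))` is finite
(the supremand is bounded above) and equals
`(a^(1-p')/p') * (sup_{σ>0} (|s̄| + σ|t̄|)/(1 + 2bσ^(p/2) + σ^p)^(1/p))^(p')`. -/
theorem stmt_4 (p p' a b : ℝ) (hp : 2 < p) (hp' : p' = p / (p - 1)) (ha : 0 < a)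
    (hb0 : 0 ≤ b) (hb1 : b ≤ p - 1) (sb tb : ℝ) :
    BddAbove (Set.range fun st : ℝ × ℝ =>
      st.1 * sb + st.2 * tb -
        (a / p) * (|st.1| ^ p + 2 * b * |st.1| ^ (p / 2) * |st.2| ^ (p / 2) + |st.2| ^ p)) ∧
    (⨆ st : ℝ × ℝ,
      (st.1 * sb + st.2 * tb -
        (a / p) * (|st.1| ^ p + 2 * b * |st.1| ^ (p / 2) * |st.2| ^ (p / 2) + |st.2| ^ p))) =
      (a ^ (1 - p') / p') *
        (⨆ σ : Set.Ioi (0 : ℝ),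
          (|sb| + (σ : ℝ) * |tb|) /
            (1 + 2 * b * (σ : ℝ) ^ (p / 2) + (σ : ℝ) ^ p) ^ (1 / p)) ^ p' :=
  stmt_4_general p p' a b hp hp' ha hb0 sb tb
end

section
/- Let p > 2, a > 0 and 0 ≤ b ≤ p − 1, and let h be the Legendre transform of f(s,t) = (a/p)(|s|^p + 2b|s|^{p/2}|t|^{p/2} + |t|^p). Then h is differentiable and strictly convex on ℝ², and its gradient map ∇h : ℝ² → ℝ² is the inverse of the gradient map ∇f : ℝ² → ℝ², i.e. ∇h ∘ ∇f = id and ∇f ∘ ∇h = id on ℝ². -/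
/-!
Write `∇f = a (∂(s, t), ∂(t, s))` with `∂(s, t) = sgn s |s|^(p-1) + b sgn s |s|^(p/2-1) |t|^(p/2)`.
`f` grows like `‖·‖^p`, and it is strictly convex: along a line its second derivative is the
Hessian form, whose determinant is a positive multiple of
`b (p/2 - 1) (X - Y)² + (1 + b) (p - 1 - b) X Y` with `X = |s|^(p/2)`, `Y = |t|^(p/2)`. Since
`0 ≤ b ≤ p - 1` this is positive off the axes and the diagonals `|s| = |t|`, and on lines inside
those sets `f` is a multiple of `|·|^p`.

For a strictly convex superlinear C¹ function, `u ↦ ⟪u, z⟫ - f u` has exactly one maximiser, the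
unique solution of `∇f u = z`. So `∇f` is bijective; the growth bound makes it proper, hence closed,
hence a homeomorphism. Then `h z = ⟪u, z⟫ - f u` at `u = (∇f)⁻¹ z`, and `h` is squeezed between
affine functions with slopes `(∇f)⁻¹ z` and `(∇f)⁻¹ (z + w)`; continuity of `(∇f)⁻¹` gives
`∇h = (∇f)⁻¹`. Strict convexity of `h`, a supremum of affine functions, holds because a common
maximiser `u` for `y₁` and `y₂` would give `y₁ = ∇f u = y₂`.
-/

open Real Set Filter Topology

lemma strictMono_of_hasDerivAt_pos_off_finset {φ : ℝ → ℝ} (hφ : Continuous φ) (S : Finset ℝ)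
    (hderiv : ∀ t ∉ S, ∃ φ', HasDerivAt φ φ' t ∧ 0 < φ') : StrictMono φ := by
  classical
  suffices H : ∀ S : Finset ℝ, ∀ x y : ℝ, x < y → (∀ t ∈ Ioo x y, t ∉ S →
      ∃ φ', HasDerivAt φ φ' t ∧ 0 < φ') → φ x < φ y from
    fun x y hxy => H S x y hxy fun t _ ht => hderiv t ht
  intro S
  induction S using Finset.induction_on with
  | empty =>
    intro x y hxy h
    choose! φ' hφ' hpos using fun t (ht : t ∈ interior (Icc x y)) =>
      h t (by rwa [interior_Icc] at ht) (Finset.notMem_empty t)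
    exact strictMonoOn_of_hasDerivWithinAt_pos (convex_Icc x y) hφ.continuousOn
      (fun t ht => (hφ' t ht).hasDerivWithinAt) hpos
      (left_mem_Icc.2 hxy.le) (right_mem_Icc.2 hxy.le) hxy
  | @insert c S _ IH =>
    intro x y hxy h
    by_cases hc : c ∈ Ioo x y
    · exact (IH x c hc.1 fun t ht hS => h t ⟨ht.1, ht.2.trans hc.2⟩
          (Finset.mem_insert.not.2 (not_or.2 ⟨ht.2.ne, hS⟩))).trans
        (IH c y hc.2 fun t ht hS => h t ⟨hc.1.trans ht.1, ht.2⟩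
          (Finset.mem_insert.not.2 (not_or.2 ⟨ht.1.ne', hS⟩)))
    · exact IH x y hxy fun t ht hS => h t ht
        (Finset.mem_insert.not.2 (not_or.2 ⟨fun htc => hc (htc ▸ ht), hS⟩))

/-- `spow c x = sign x * |x| ^ (c - 1)`, so that `c * spow c x` is the derivative of `|x| ^ c`. -/
noncomputable def spow (c x : ℝ) : ℝ := |x| ^ (c - 2) * x

section SignedPower

variable {c x : ℝ}

@[simp]
lemma spow_zero (c : ℝ) : spow c 0 = 0 := by simp [spow]

lemma spow_neg (c x : ℝ) : spow c (-x) = -spow c x := by simp [spow]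

lemma abs_spow (hc : 1 < c) (x : ℝ) : |spow c x| = |x| ^ (c - 1) := by
  rcases eq_or_ne x 0 with rfl | hx
  · simp [zero_rpow (sub_pos.2 hc).ne']
  rw [spow, abs_mul, abs_of_nonneg (rpow_nonneg (abs_nonneg x) _),
    show c - 1 = (c - 2) + 1 by ring, rpow_add_one (abs_ne_zero.2 hx)]

lemma sq_spow (hc : 1 < c) (x : ℝ) : spow c x ^ 2 = |x| ^ (c - 2) * |x| ^ c := by
  rcases eq_or_ne x 0 with rfl | hx
  · simp [zero_rpow (by linarith : c ≠ 0)]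
  rw [← sq_abs, abs_spow hc, ← rpow_natCast, ← rpow_mul (abs_nonneg x),
    ← rpow_add (abs_pos.2 hx)]
  ring_nf

lemma spow_mul_abs_rpow (c x : ℝ) : spow c x * |x| ^ c = spow (2 * c) x := by
  rcases eq_or_ne x 0 with rfl | hx
  · simp
  rw [spow, spow, mul_right_comm, ← rpow_add (abs_pos.2 hx)]
  ring_nf

lemma hasDerivAt_abs_rpow_spow (hc : 1 < c) (x : ℝ) :
    HasDerivAt (fun u => |u| ^ c) (c * spow c x) x := by
  simpa [spow, mul_assoc] using hasDerivAt_abs_rpow x hc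

lemma hasDerivAt_spow (hx : x ≠ 0) : HasDerivAt (spow c) ((c - 1) * |x| ^ (c - 2)) x := by
  have hx' : 0 < |x| := abs_pos.2 hx
  refine (((hasDerivAt_abs hx).rpow_const (p := c - 2) (Or.inl hx'.ne')).mul
    (hasDerivAt_id x)).congr_deriv ?_
  have hsx : (SignType.sign x : ℝ) * x = |x| := sign_mul_self x
  have hpow : |x| * |x| ^ (c - 2 - 1) = |x| ^ (c - 2) := by
    rw [mul_comm, ← rpow_add_one hx'.ne', sub_add_cancel]
  simp only [id]
  linear_combination (c - 2) * |x| ^ (c - 2 - 1) * hsx + (c - 2) * hpow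

lemma continuous_spow (hc : 1 < c) : Continuous (spow c) := by
  refine continuous_iff_continuousAt.2 fun x => ?_
  rcases eq_or_ne x 0 with rfl | hx
  · have hlim : Tendsto (fun u : ℝ => |u| ^ (c - 1)) (𝓝 0) (𝓝 0) := by
      simpa [zero_rpow (sub_pos.2 hc).ne'] using
        ((continuous_abs.rpow_const fun _ => Or.inr (sub_pos.2 hc).le).tendsto 0)
    rw [ContinuousAt, spow_zero]
    exact squeeze_zero_norm (fun u => (abs_spow hc u).le) hlim
  · exact (hasDerivAt_spow hx).continuousAt

lemma strictMono_spow (hc : 1 < c) : StrictMono (spow c) :=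
  strictMono_of_hasDerivAt_pos_off_finset (continuous_spow hc) {0} fun _ ht =>
    ⟨_, hasDerivAt_spow (Finset.notMem_singleton.1 ht),
      mul_pos (sub_pos.2 hc) (rpow_pos_of_pos (abs_pos.2 (Finset.notMem_singleton.1 ht)) _)⟩

end SignedPower

section ConvexLines

variable {E : Type*} [NormedAddCommGroup E] [NormedSpace ℝ E] {f : E → ℝ}

lemma ConvexOn.add_le_of_hasFDerivAt {f' : E →L[ℝ] ℝ} {u : E} (hf : ConvexOn ℝ univ f)
    (hu : HasFDerivAt f f' u) (v : E) : f u + f' (v - u) ≤ f v := by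
  have hline : ConvexOn ℝ univ (f ∘ AffineMap.lineMap (k := ℝ) u v) := by
    simpa using hf.comp_affineMap (AffineMap.lineMap u v)
  have hderiv : HasDerivAt (f ∘ AffineMap.lineMap (k := ℝ) u v) (f' (v - u)) 0 := by
    refine hu.comp_hasDerivAt_of_eq 0 AffineMap.hasDerivAt_lineMap ?_
    simp
  have := hline.le_slope_of_hasDerivAt (mem_univ 0) (mem_univ 1) zero_lt_one hderiv
  simp only [slope_def_field, Function.comp_apply, AffineMap.lineMap_apply_one,
    AffineMap.lineMap_apply_zero, sub_zero, div_one] at this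
  linarith

lemma strictConvexOn_univ_of_lines
    (hline : ∀ x d : E, d ≠ 0 → StrictConvexOn ℝ univ fun t : ℝ => f (x + t • d)) :
    StrictConvexOn ℝ univ f := by
  refine ⟨convex_univ, fun x _ y _ hxy α β hα hβ hαβ => ?_⟩
  have h := (hline x (y - x) (sub_ne_zero.2 hxy.symm)).2 (mem_univ 0) (mem_univ 1) zero_ne_one
    hα hβ hαβ
  have hmid : x + β • (y - x) = α • x + β • y := by
    rw [eq_sub_of_add_eq hαβ, smul_sub, sub_smul, one_smul]
    abel
  simpa [hmid] using h

end ConvexLines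

noncomputable def dotCLM (w : ℝ × ℝ) : (ℝ × ℝ) →L[ℝ] ℝ :=
  w.1 • ContinuousLinearMap.fst ℝ ℝ ℝ + w.2 • ContinuousLinearMap.snd ℝ ℝ ℝ

@[simp]
lemma dotCLM_apply (w v : ℝ × ℝ) : dotCLM w v = w.1 * v.1 + w.2 * v.2 := by
  simp [dotCLM]

lemma dot_le_two_mul_norm_mul_norm (u z : ℝ × ℝ) : u.1 * z.1 + u.2 * z.2 ≤ 2 * ‖u‖ * ‖z‖ := by
  have h1 : |u.1 * z.1| ≤ ‖u‖ * ‖z‖ := by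
    rw [abs_mul]; exact mul_le_mul (norm_fst_le u) (norm_fst_le z) (abs_nonneg _) (norm_nonneg _)
  have h2 : |u.2 * z.2| ≤ ‖u‖ * ‖z‖ := by
    rw [abs_mul]; exact mul_le_mul (norm_snd_le u) (norm_snd_le z) (abs_nonneg _) (norm_nonneg _)
  linarith [le_abs_self (u.1 * z.1), le_abs_self (u.2 * z.2)]

def Superlinear (f : ℝ × ℝ → ℝ) : Prop := ∀ M, ∃ R, ∀ u, R ≤ ‖u‖ → M * ‖u‖ ≤ f u

noncomputable def legendre (f : ℝ × ℝ → ℝ) (z : ℝ × ℝ) : ℝ :=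
  ⨆ u : ℝ × ℝ, (u.1 * z.1 + u.2 * z.2 - f u)

section Legendre

variable {f : ℝ × ℝ → ℝ} {G : ℝ × ℝ → ℝ × ℝ}

lemma grad_eq_of_isMaxOn (hfG : ∀ u, HasFDerivAt f (dotCLM (G u)) u) {u z : ℝ × ℝ}
    (hmax : ∀ v : ℝ × ℝ, v.1 * z.1 + v.2 * z.2 - f v ≤ u.1 * z.1 + u.2 * z.2 - f u) :
    G u = z := by
  have hderiv : HasFDerivAt (fun v : ℝ × ℝ => v.1 * z.1 + v.2 * z.2 - f v)
      (dotCLM z - dotCLM (G u)) u := by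
    refine ((dotCLM z).hasFDerivAt.congr_of_eventuallyEq ?_).sub (hfG u)
    filter_upwards with v
    simp [mul_comm]
  have h0 := IsLocalMax.hasFDerivAt_eq_zero (Eventually.of_forall hmax) hderiv
  have h1 : z.1 - (G u).1 = 0 := by simpa using DFunLike.congr_fun h0 (1, 0)
  have h2 : z.2 - (G u).2 = 0 := by simpa using DFunLike.congr_fun h0 (0, 1)
  ext <;> linarith

lemma le_of_hasFDerivAt_grad (hf : ConvexOn ℝ univ f) (hfG : ∀ u, HasFDerivAt f (dotCLM (G u)) u)
    (u v : ℝ × ℝ) : v.1 * (G u).1 + v.2 * (G u).2 - f v ≤ u.1 * (G u).1 + u.2 * (G u).2 - f u := by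
  have := hf.add_le_of_hasFDerivAt (hfG u) v
  simp only [dotCLM_apply, Prod.fst_sub, Prod.snd_sub] at this
  linarith

lemma legendre_grad (hf : ConvexOn ℝ univ f) (hfG : ∀ u, HasFDerivAt f (dotCLM (G u)) u)
    (u : ℝ × ℝ) : legendre f (G u) = u.1 * (G u).1 + u.2 * (G u).2 - f u :=
  le_antisymm (ciSup_le (le_of_hasFDerivAt_grad hf hfG u))
    (le_ciSup ⟨_, forall_mem_range.2 (le_of_hasFDerivAt_grad hf hfG u)⟩ u)

lemma injective_grad (hf : StrictConvexOn ℝ univ f) (hfG : ∀ u, HasFDerivAt f (dotCLM (G u)) u) :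
    Function.Injective G := by
  intro u₁ u₂ h
  have hmin (u : ℝ × ℝ) : IsMinOn (f - ⇑(dotCLM (G u))) univ u := fun v _ => by
    have := le_of_hasFDerivAt_grad hf.convexOn hfG u v
    simp only [mem_ofPred_eq, Pi.sub_apply, dotCLM_apply]
    linarith
  refine (hf.sub_concaveOn ((dotCLM (G u₁)).toLinearMap.concaveOn convex_univ)).eq_of_isMinOn
    (hmin u₁) ?_ (mem_univ _) (mem_univ _)
  rw [h]
  exact hmin u₂

lemma surjective_grad (hfG : ∀ u, HasFDerivAt f (dotCLM (G u)) u)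
    (hgrowth : Superlinear f) : Function.Surjective G := by
  intro z
  obtain ⟨R, hR⟩ := hgrowth (2 * ‖z‖ + 1)
  have hcont : Continuous fun v : ℝ × ℝ => v.1 * z.1 + v.2 * z.2 - f v := by
    have : Continuous f := continuous_iff_continuousAt.2 fun u => (hfG u).continuousAt
    fun_prop
  have hlarge : ∀ᶠ v in cocompact (ℝ × ℝ), v.1 * z.1 + v.2 * z.2 - f v ≤ -f 0 := by
    filter_upwards [tendsto_norm_cocompact_atTop.eventually (eventually_ge_atTop (max R (f 0)))]
      with v hv
    linarith [hR v ((le_max_left _ _).trans hv), dot_le_two_mul_norm_mul_norm v z,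
      le_max_right R (f 0)]
  obtain ⟨u, hu⟩ := hcont.exists_forall_ge' 0 (by simpa using hlarge)
  exact ⟨u, grad_eq_of_isMaxOn hfG hu⟩

lemma le_legendre (hf : ConvexOn ℝ univ f) (hfG : ∀ u, HasFDerivAt f (dotCLM (G u)) u)
    (hsurj : Function.Surjective G) (z v : ℝ × ℝ) : v.1 * z.1 + v.2 * z.2 - f v ≤ legendre f z := by
  obtain ⟨u, rfl⟩ := hsurj z
  exact legendre_grad hf hfG u ▸ le_of_hasFDerivAt_grad hf hfG u v

lemma isCompact_preimage_grad (hf : ConvexOn ℝ univ f) (hfG : ∀ u, HasFDerivAt f (dotCLM (G u)) u)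
    (hG : Continuous G) (hgrowth : Superlinear f) {K : Set (ℝ × ℝ)}
    (hK : IsCompact K) : IsCompact (G ⁻¹' K) := by
  obtain ⟨C, hC⟩ := hK.isBounded.exists_norm_le
  obtain ⟨R, hR⟩ := hgrowth (2 * C + 1)
  refine (isCompact_closedBall (0 : ℝ × ℝ) (max R (f 0))).of_isClosed_subset
    (hK.isClosed.preimage hG) fun u hu => ?_
  rw [mem_closedBall_zero_iff]
  by_contra! hlarge
  have hmax := le_of_hasFDerivAt_grad hf hfG u 0
  simp only [Prod.fst_zero, Prod.snd_zero, zero_mul, add_zero, zero_sub] at hmax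
  linarith [hR u ((le_max_left _ _).trans hlarge.le), le_max_right R (f 0),
    dot_le_two_mul_norm_mul_norm u (G u), mul_le_mul_of_nonneg_left (hC _ hu) (norm_nonneg u)]

lemma exists_homeomorph_eq_grad (hf : StrictConvexOn ℝ univ f)
    (hfG : ∀ u, HasFDerivAt f (dotCLM (G u)) u) (hG : Continuous G)
    (hgrowth : Superlinear f) : ∃ e : (ℝ × ℝ) ≃ₜ (ℝ × ℝ), ⇑e = G :=
  ⟨(Equiv.ofBijective G ⟨injective_grad hf hfG, surjective_grad hfG hgrowth⟩)
    |>.toHomeomorphOfContinuousClosed hG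
    (isProperMap_iff_isCompact_preimage.2
      ⟨hG, fun _ hK => isCompact_preimage_grad hf.convexOn hfG hG hgrowth hK⟩).isClosedMap, rfl⟩

lemma hasFDerivAt_legendre (hf : ConvexOn ℝ univ f) (hfG : ∀ u, HasFDerivAt f (dotCLM (G u)) u)
    (e : (ℝ × ℝ) ≃ₜ (ℝ × ℝ)) (he : ⇑e = G) (z : ℝ × ℝ) :
    HasFDerivAt (legendre f) (dotCLM (e.symm z)) z := by
  have hsurj : Function.Surjective G := he ▸ e.surjective
  have hinv (y : ℝ × ℝ) : G (e.symm y) = y := he ▸ e.apply_symm_apply y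
  have hval (y : ℝ × ℝ) :
      legendre f y = (e.symm y).1 * y.1 + (e.symm y).2 * y.2 - f (e.symm y) := by
    simpa only [hinv] using legendre_grad hf hfG (e.symm y)
  -- `legendre f` is squeezed between its tangent plane at `z` and the one at `z + w`
  have hsandwich (w : ℝ × ℝ) : 0 ≤ legendre f (z + w) - legendre f z - dotCLM (e.symm z) w ∧
      legendre f (z + w) - legendre f z - dotCLM (e.symm z) w ≤
        2 * ‖e.symm (z + w) - e.symm z‖ * ‖w‖ := by
    have h1 := le_legendre hf hfG hsurj (z + w) (e.symm z)
    have h2 := le_legendre hf hfG hsurj z (e.symm (z + w))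
    have h3 := dot_le_two_mul_norm_mul_norm (e.symm (z + w) - e.symm z) w
    rw [hval z] at h2 ⊢
    rw [hval (z + w)] at h1 ⊢
    simp only [dotCLM_apply, Prod.fst_add, Prod.snd_add, Prod.fst_sub, Prod.snd_sub] at h1 h2 h3 ⊢
    constructor <;> nlinarith
  have hcont : Tendsto (fun w => e.symm (z + w)) (𝓝 0) (𝓝 (e.symm z)) :=
    (e.symm.continuous.comp (continuous_const_add z)).tendsto' 0 _ (by simp)
  rw [hasFDerivAt_iff_isLittleO_nhds_zero, Asymptotics.isLittleO_iff]
  intro c hc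
  filter_upwards [Metric.tendsto_nhds.1 hcont (c / 2) (half_pos hc)] with w hw
  rw [dist_eq_norm] at hw
  obtain ⟨hlow, hup⟩ := hsandwich w
  rw [Real.norm_eq_abs, abs_of_nonneg hlow]
  nlinarith [norm_nonneg w]

lemma strictConvexOn_legendre (hf : ConvexOn ℝ univ f)
    (hfG : ∀ u, HasFDerivAt f (dotCLM (G u)) u) (hsurj : Function.Surjective G) :
    StrictConvexOn ℝ univ (legendre f) := by
  refine ⟨convex_univ, fun y₁ _ y₂ _ hne α β hα hβ hαβ => ?_⟩
  obtain ⟨u, hu⟩ := hsurj (α • y₁ + β • y₂)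
  have hval := legendre_grad hf hfG u
  rw [hu] at hval
  -- otherwise `u` maximises at both `y₁` and `y₂`, so `G u = y₁` and `G u = y₂`
  have hstrict : u.1 * y₁.1 + u.2 * y₁.2 - f u < legendre f y₁ ∨
      u.1 * y₂.1 + u.2 * y₂.2 - f u < legendre f y₂ := by
    by_contra! h
    have hG₁ := grad_eq_of_isMaxOn hfG fun v =>
      (le_legendre hf hfG hsurj y₁ v).trans h.1
    have hG₂ := grad_eq_of_isMaxOn hfG fun v =>
      (le_legendre hf hfG hsurj y₂ v).trans h.2
    exact hne (hG₁.symm.trans hG₂)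
  have h₁ := le_legendre hf hfG hsurj y₁ u
  have h₂ := le_legendre hf hfG hsurj y₂ u
  rw [hval, ← one_mul (f u), ← hαβ]
  simp only [Prod.fst_add, Prod.snd_add, Prod.smul_fst, Prod.smul_snd, smul_eq_mul]
  rcases hstrict with h | h <;> nlinarith

end Legendre

lemma quadratic_pos {A B E x y : ℝ} (hA : 0 < A) (hE : E ^ 2 < A * B) (hxy : x ≠ 0 ∨ y ≠ 0) :
    0 < A * x ^ 2 + B * y ^ 2 + 2 * E * x * y := by
  have hsq : A * (A * x ^ 2 + B * y ^ 2 + 2 * E * x * y) =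
      (A * x + E * y) ^ 2 + (A * B - E ^ 2) * y ^ 2 := by
    ring
  refine pos_of_mul_pos_right ?_ hA.le
  rcases eq_or_ne y 0 with rfl | hy
  · have hx := hxy.resolve_right (not_not.2 rfl)
    simp only [ne_eq, OfNat.ofNat_ne_zero, not_false_eq_true, zero_pow, mul_zero, add_zero]
    positivity
  · rw [hsq]
    have : 0 < (A * B - E ^ 2) * y ^ 2 := mul_pos (sub_pos.2 hE) (by positivity)
    positivity

noncomputable def powerForm (p a b : ℝ) (q : ℝ × ℝ) : ℝ :=
  (a / p) * (|q.1| ^ p + 2 * b * |q.1| ^ (p / 2) * |q.2| ^ (p / 2) + |q.2| ^ p)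

noncomputable def powerFormPartial (p b s t : ℝ) : ℝ :=
  spow p s + b * spow (p / 2) s * |t| ^ (p / 2)

noncomputable def powerFormGrad (p a b : ℝ) (q : ℝ × ℝ) : ℝ × ℝ :=
  (a * powerFormPartial p b q.1 q.2, a * powerFormPartial p b q.2 q.1)

section PowerForm

variable {p a b : ℝ}

lemma hasFDerivAt_powerForm (hp : 2 < p) (q : ℝ × ℝ) :
    HasFDerivAt (powerForm p a b) (dotCLM (powerFormGrad p a b q)) q := by
  have hp1 : 1 < p := by linarith
  have hq1 : 1 < p / 2 := by linarith
  have h1 := (hasDerivAt_abs_rpow_spow hp1 q.1).comp_hasFDerivAt q (hasFDerivAt_fst (𝕜 := ℝ))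
  have h2 := (hasDerivAt_abs_rpow_spow hp1 q.2).comp_hasFDerivAt q (hasFDerivAt_snd (𝕜 := ℝ))
  have h3 := (hasDerivAt_abs_rpow_spow hq1 q.1).comp_hasFDerivAt q (hasFDerivAt_fst (𝕜 := ℝ))
  have h4 := (hasDerivAt_abs_rpow_spow hq1 q.2).comp_hasFDerivAt q (hasFDerivAt_snd (𝕜 := ℝ))
  have hsum := (((h1.add ((h3.mul h4).const_mul (2 * b))).add h2).const_mul (a / p))
  have hform : powerForm p a b = fun y : ℝ × ℝ =>
      a / p * ((|y.1| ^ p + 2 * b * (|y.1| ^ (p / 2) * |y.2| ^ (p / 2))) + |y.2| ^ p) := by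
    funext y; rw [powerForm]; ring
  rw [hform]
  refine hsum.congr_fderiv (ContinuousLinearMap.ext fun v => ?_)
  simp only [dotCLM_apply, powerFormGrad, powerFormPartial, add_apply,
    smul_apply, ContinuousLinearMap.coe_fst', ContinuousLinearMap.coe_snd',
    smul_eq_mul, Function.comp_apply]
  field_simp
  ring

lemma continuous_powerFormPartial (hp : 2 < p) :
    Continuous fun q : ℝ × ℝ => powerFormPartial p b q.1 q.2 := by
  have := continuous_spow (c := p) (by linarith)
  have := continuous_spow (c := p / 2) (by linarith)
  unfold powerFormPartial
  fun_prop (disch := intros; positivity)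

lemma continuous_powerFormGrad (hp : 2 < p) : Continuous (powerFormGrad p a b) :=
  (continuous_const.mul (continuous_powerFormPartial hp)).prodMk
    (continuous_const.mul ((continuous_powerFormPartial hp).comp continuous_swap))

lemma superlinear_powerForm (hp : 2 < p) (ha : 0 < a) (hb : 0 ≤ b) :
    Superlinear (powerForm p a b) := by
  refine fun M => ⟨max 1 (M * p / a), fun u hu => ?_⟩
  have hu1 : 1 ≤ ‖u‖ := (le_max_left _ _).trans hu
  have hnorm : ‖u‖ ^ p ≤ |u.1| ^ p + |u.2| ^ p := by
    rw [Prod.norm_def, Real.norm_eq_abs, Real.norm_eq_abs]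
    rcases max_cases |u.1| |u.2| with ⟨h, _⟩ | ⟨h, _⟩ <;> rw [h]
    · exact le_add_of_nonneg_right (by positivity)
    · exact le_add_of_nonneg_left (by positivity)
  have hsq : ‖u‖ ^ (2 : ℝ) ≤ ‖u‖ ^ p := rpow_le_rpow_of_exponent_le hu1 hp.le
  have hM : M * p / a ≤ ‖u‖ := (le_max_right _ _).trans hu
  have hcross : 0 ≤ 2 * b * |u.1| ^ (p / 2) * |u.2| ^ (p / 2) := by positivity
  have hM' : M ≤ a / p * ‖u‖ := by
    rw [div_mul_eq_mul_div, le_div_iff₀ (by linarith)]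
    rw [div_le_iff₀ ha] at hM
    linarith
  calc M * ‖u‖ ≤ a / p * ‖u‖ * ‖u‖ := mul_le_mul_of_nonneg_right hM' (norm_nonneg u)
    _ = a / p * ‖u‖ ^ (2 : ℝ) := by rw [rpow_two]; ring
    _ ≤ powerForm p a b u := by
        rw [powerForm]
        gcongr
        linarith

lemma powerFormPartial_zero_left (p b t : ℝ) : powerFormPartial p b 0 t = 0 := by
  simp [powerFormPartial]

lemma powerFormPartial_zero_right (hp : 2 < p) (s : ℝ) : powerFormPartial p b s 0 = spow p s := by
  simp [powerFormPartial, zero_rpow (by linarith : p / 2 ≠ 0)]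

lemma powerFormPartial_self (p b s : ℝ) : powerFormPartial p b s s = (1 + b) * spow p s := by
  rw [powerFormPartial, mul_assoc, spow_mul_abs_rpow, mul_div_cancel₀ p two_ne_zero]
  ring

lemma powerFormPartial_neg_right (p b s t : ℝ) :
    powerFormPartial p b s (-t) = powerFormPartial p b s t := by
  simp [powerFormPartial]

lemma powerFormPartial_neg_left (p b s t : ℝ) :
    powerFormPartial p b (-s) t = -powerFormPartial p b s t := by
  simp only [powerFormPartial, spow_neg]
  ring

lemma HasDerivAt.powerFormPartial {α β : ℝ → ℝ} {α' β' t : ℝ} (hp : 2 < p)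
    (hα : HasDerivAt α α' t) (hβ : HasDerivAt β β' t) (hα0 : α t ≠ 0) :
    HasDerivAt (fun t => powerFormPartial p b (α t) (β t))
      (((p - 1) * |α t| ^ (p - 2) + b * (p / 2 - 1) * |α t| ^ (p / 2 - 2) * |β t| ^ (p / 2)) * α'
        + b * (p / 2) * spow (p / 2) (α t) * spow (p / 2) (β t) * β') t := by
  have h1 := (hasDerivAt_spow (c := p) hα0).comp t hα
  have h2 := (hasDerivAt_spow (c := p / 2) hα0).comp t hα
  have h3 := (hasDerivAt_abs_rpow_spow (by linarith : 1 < p / 2) (β t)).comp t hβ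
  simp only [Function.comp_def] at h1 h2 h3
  exact (h1.add ((h2.const_mul b).mul h3)).congr_deriv (by ring)

lemma hessian_quadForm_pos (hp : 2 < p) (hb0 : 0 ≤ b) (hb1 : b ≤ p - 1) {m n X Y w d₁ d₂ : ℝ}
    (hm : 0 < m) (hn : 0 < n) (hX : 0 < X) (hY : 0 < Y) (hXY : X ≠ Y)
    (hw : w ^ 2 = m * X * (n * Y)) (hd : d₁ ≠ 0 ∨ d₂ ≠ 0) :
    0 < ((p - 1) * (m * X) + b * (p / 2 - 1) * m * Y) * d₁ ^ 2
      + ((p - 1) * (n * Y) + b * (p / 2 - 1) * n * X) * d₂ ^ 2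
      + 2 * (b * (p / 2) * w) * d₁ * d₂ := by
  have hp1 : 0 < p - 1 := by linarith
  have hq1 : 0 < p / 2 - 1 := by linarith
  refine quadratic_pos (add_pos_of_pos_of_nonneg (mul_pos hp1 (mul_pos hm hX))
    (mul_nonneg (mul_nonneg (mul_nonneg hb0 hq1.le) hm.le) hY.le)) ?_ hd
  -- the determinant is `(p - 1) m n (b (p/2 - 1) (X - Y)² + (1 + b) (p - 1 - b) X Y)`
  have hdet : 0 < b * (p / 2 - 1) * (X - Y) ^ 2 + (1 + b) * (p - 1 - b) * (X * Y) := by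
    have hXY2 : 0 < (X - Y) ^ 2 := by have := sub_ne_zero.2 hXY; positivity
    rcases hb1.lt_or_eq with hb | rfl
    · have : 0 < (1 + b) * (p - 1 - b) * (X * Y) :=
        mul_pos (mul_pos (by linarith) (by linarith)) (mul_pos hX hY)
      have : 0 ≤ b * (p / 2 - 1) * (X - Y) ^ 2 := mul_nonneg (mul_nonneg hb0 hq1.le) hXY2.le
      linarith
    · have : 0 < (p - 1) * (p / 2 - 1) * (X - Y) ^ 2 := mul_pos (mul_pos hp1 hq1) hXY2
      simpa using this
  have hE : (b * (p / 2) * w) ^ 2 = b ^ 2 * (p / 2) ^ 2 * (m * X * (n * Y)) := by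
    rw [← hw]; ring
  rw [hE]
  linarith [mul_pos (mul_pos hp1 (mul_pos hm hn)) hdet]

lemma powerForm_hessian_pos (hp : 2 < p) (hb0 : 0 ≤ b) (hb1 : b ≤ p - 1) {s t d₁ d₂ : ℝ}
    (hs : s ≠ 0) (ht : t ≠ 0) (hst : |s| ≠ |t|) (hd : d₁ ≠ 0 ∨ d₂ ≠ 0) :
    0 < ((p - 1) * |s| ^ (p - 2) + b * (p / 2 - 1) * |s| ^ (p / 2 - 2) * |t| ^ (p / 2)) * d₁ ^ 2
      + ((p - 1) * |t| ^ (p - 2) + b * (p / 2 - 1) * |t| ^ (p / 2 - 2) * |s| ^ (p / 2)) * d₂ ^ 2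
      + 2 * (b * (p / 2) * spow (p / 2) s * spow (p / 2) t) * d₁ * d₂ := by
  have hs' : 0 < |s| := abs_pos.2 hs
  have ht' : 0 < |t| := abs_pos.2 ht
  have hsplit {u : ℝ} (hu : 0 < u) : u ^ (p - 2) = u ^ (p / 2 - 2) * u ^ (p / 2) := by
    rw [← rpow_add hu]; ring_nf
  rw [hsplit hs', hsplit ht', mul_assoc (b * (p / 2))]
  refine hessian_quadForm_pos hp hb0 hb1 (rpow_pos_of_pos hs' _) (rpow_pos_of_pos ht' _)
    (rpow_pos_of_pos hs' _) (rpow_pos_of_pos ht' _)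
    (fun h => hst ((rpow_left_inj hs'.le ht'.le (by linarith)).1 h)) ?_ hd
  rw [mul_pow, sq_spow (by linarith), sq_spow (by linarith)]

lemma add_mul_ne_zero_of_ne_div {α β t : ℝ} (h : ¬(β = 0 ∧ α = 0)) (ht : t ≠ -α / β) :
    α + t * β ≠ 0 := by
  intro h0
  rcases eq_or_ne β 0 with hβ | hβ
  · exact h ⟨hβ, by simpa [hβ] using h0⟩
  · exact ht (by field_simp; linarith)

lemma strictMono_mul_spow_affine {c K e x₀ : ℝ} (hc : 1 < c) (hK : 0 < K) (he : e ≠ 0) :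
    StrictMono fun t => K * e * spow c (x₀ + t * e) := by
  intro t₁ t₂ h
  rcases he.lt_or_gt with he | he
  · have := strictMono_spow hc (show x₀ + t₂ * e < x₀ + t₁ * e by nlinarith)
    nlinarith [mul_neg_of_pos_of_neg hK he]
  · have := strictMono_spow hc (show x₀ + t₁ * e < x₀ + t₂ * e by nlinarith)
    nlinarith [mul_pos hK he]

lemma strictMono_powerForm_lineDeriv_of_generic (hp : 2 < p) (ha : 0 < a) (hb0 : 0 ≤ b)
    (hb1 : b ≤ p - 1) {x₁ x₂ d₁ d₂ : ℝ} (hd : d₁ ≠ 0 ∨ d₂ ≠ 0) (h₁ : ¬(d₁ = 0 ∧ x₁ = 0))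
    (h₂ : ¬(d₂ = 0 ∧ x₂ = 0)) (h₃ : ¬(d₂ = d₁ ∧ x₂ = x₁)) (h₄ : ¬(d₂ = -d₁ ∧ x₂ = -x₁)) :
    StrictMono fun t => a * d₁ * powerFormPartial p b (x₁ + t * d₁) (x₂ + t * d₂)
      + a * d₂ * powerFormPartial p b (x₂ + t * d₂) (x₁ + t * d₁) := by
  have hcont (y₁ y₂ e₁ e₂ : ℝ) :
      Continuous fun t => powerFormPartial p b (y₁ + t * e₁) (y₂ + t * e₂) :=
    (continuous_powerFormPartial hp).comp
      (show Continuous fun t : ℝ => (y₁ + t * e₁, y₂ + t * e₂) by fun_prop)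
  refine strictMono_of_hasDerivAt_pos_off_finset
    ((continuous_const.mul (hcont _ _ _ _)).add (continuous_const.mul (hcont _ _ _ _)))
    {-x₁ / d₁, -x₂ / d₂, -(x₁ - x₂) / (d₁ - d₂), -(x₁ + x₂) / (d₁ + d₂)} fun t ht => ?_
  simp only [Finset.mem_insert, Finset.mem_singleton, not_or] at ht
  obtain ⟨ht₁, ht₂, ht₃, ht₄⟩ := ht
  have hs := add_mul_ne_zero_of_ne_div h₁ ht₁
  have hτ := add_mul_ne_zero_of_ne_div h₂ ht₂
  have hsub := add_mul_ne_zero_of_ne_div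
    (fun h => h₃ ⟨(sub_eq_zero.1 h.1).symm, (sub_eq_zero.1 h.2).symm⟩) ht₃
  have hadd := add_mul_ne_zero_of_ne_div
    (fun h => h₄ ⟨by linarith [h.1], by linarith [h.2]⟩) ht₄
  have habs : |x₁ + t * d₁| ≠ |x₂ + t * d₂| := fun h => by
    rcases abs_eq_abs.1 h with h | h
    · exact hsub (by linarith)
    · exact hadd (by linarith)
  have hs' : HasDerivAt (fun t => x₁ + t * d₁) d₁ t := by
    simpa using ((hasDerivAt_id t).mul_const d₁).const_add x₁
  have hτ' : HasDerivAt (fun t => x₂ + t * d₂) d₂ t := by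
    simpa using ((hasDerivAt_id t).mul_const d₂).const_add x₂
  refine ⟨_, ((hs'.powerFormPartial (b := b) hp hτ' hs).const_mul (a * d₁)).add
    ((hτ'.powerFormPartial (b := b) hp hs' hτ).const_mul (a * d₂)), ?_⟩
  exact (mul_pos ha (powerForm_hessian_pos hp hb0 hb1 hs hτ habs hd)).trans_eq (by ring)

lemma strictMono_powerForm_lineDeriv (hp : 2 < p) (ha : 0 < a) (hb0 : 0 ≤ b) (hb1 : b ≤ p - 1)
    (x d : ℝ × ℝ) (hd : d ≠ 0) :
    StrictMono fun t : ℝ => dotCLM (powerFormGrad p a b (x + t • d)) d := by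
  have hp1 : 1 < p := by linarith
  have hd' : d.1 ≠ 0 ∨ d.2 ≠ 0 := by
    by_contra! h
    exact hd (Prod.ext h.1 h.2)
  have hψ : (fun t : ℝ => dotCLM (powerFormGrad p a b (x + t • d)) d) = fun t =>
      a * d.1 * powerFormPartial p b (x.1 + t * d.1) (x.2 + t * d.2)
        + a * d.2 * powerFormPartial p b (x.2 + t * d.2) (x.1 + t * d.1) := by
    funext t
    simp only [dotCLM_apply, powerFormGrad, Prod.fst_add, Prod.snd_add, Prod.smul_fst,
      Prod.smul_snd, smul_eq_mul]
    ring
  rw [hψ]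
  -- on lines inside an axis or a diagonal the Hessian may degenerate, but there `f` is a
  -- multiple of `|·| ^ p`
  by_cases h₁ : d.1 = 0 ∧ x.1 = 0
  · convert strictMono_mul_spow_affine (x₀ := x.2) hp1 ha (hd'.resolve_left (not_not.2 h₁.1))
      using 1
    funext t
    simp [h₁.1, h₁.2, powerFormPartial_zero_left, powerFormPartial_zero_right hp]
  by_cases h₂ : d.2 = 0 ∧ x.2 = 0
  · convert strictMono_mul_spow_affine (x₀ := x.1) hp1 ha (hd'.resolve_right (not_not.2 h₂.1))
      using 1
    funext t
    simp [h₂.1, h₂.2, powerFormPartial_zero_left, powerFormPartial_zero_right hp]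
  by_cases h₃ : d.2 = d.1 ∧ x.2 = x.1
  · have hd₁ : d.1 ≠ 0 := fun h => by simp [h, h₃.1] at hd'
    convert strictMono_mul_spow_affine (x₀ := x.1) hp1 (by positivity : 0 < 2 * a * (1 + b)) hd₁
      using 1
    funext t
    rw [h₃.1, h₃.2, powerFormPartial_self]
    ring
  by_cases h₄ : d.2 = -d.1 ∧ x.2 = -x.1
  · have hd₁ : d.1 ≠ 0 := fun h => by simp [h, h₄.1] at hd'
    convert strictMono_mul_spow_affine (x₀ := x.1) hp1 (by positivity : 0 < 2 * a * (1 + b)) hd₁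
      using 1
    funext t
    rw [h₄.1, h₄.2, show -x.1 + t * -d.1 = -(x.1 + t * d.1) by ring, powerFormPartial_neg_right,
      powerFormPartial_neg_left, powerFormPartial_self]
    ring
  exact strictMono_powerForm_lineDeriv_of_generic hp ha hb0 hb1 hd' h₁ h₂ h₃ h₄

lemma strictConvexOn_powerForm (hp : 2 < p) (ha : 0 < a) (hb0 : 0 ≤ b) (hb1 : b ≤ p - 1) :
    StrictConvexOn ℝ univ (powerForm p a b) := by
  refine strictConvexOn_univ_of_lines fun x d hd => ?_
  have hderiv (t : ℝ) : HasDerivAt (fun t : ℝ => powerForm p a b (x + t • d))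
      (dotCLM (powerFormGrad p a b (x + t • d)) d) t :=
    (hasFDerivAt_powerForm hp _).comp_hasDerivAt t
      (by simpa using ((hasDerivAt_id t).smul_const d).const_add x)
  refine StrictMono.strictConvexOn_univ_of_deriv
    (continuous_iff_continuousAt.2 fun t => (hderiv t).continuousAt) ?_
  rw [funext fun t => (hderiv t).deriv]
  exact strictMono_powerForm_lineDeriv hp ha hb0 hb1 x d hd

end PowerForm

/-- the Legendre transform `h` of `f` is differentiable and strictly convex on
`ℝ²`, and its gradient map `∇h` is the inverse of the gradient map `∇f`:
`∇h ∘ ∇f = id` and `∇f ∘ ∇h = id` on `ℝ²`. -/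
theorem stmt_7 (p a b : ℝ) (hp : 2 < p) (ha : 0 < a) (hb0 : 0 ≤ b) (hb1 : b ≤ p - 1)
    (f h : ℝ × ℝ → ℝ)
    (hf : ∀ q : ℝ × ℝ,
      f q = (a / p) * (|q.1| ^ p + 2 * b * |q.1| ^ (p / 2) * |q.2| ^ (p / 2) + |q.2| ^ p))
    (hh : ∀ q : ℝ × ℝ, h q = ⨆ st : ℝ × ℝ, (st.1 * q.1 + st.2 * q.2 - f st))
    (gradf gradh : ℝ × ℝ → ℝ × ℝ)
    (hgf : ∀ q : ℝ × ℝ, gradf q = (fderiv ℝ f q (1, 0), fderiv ℝ f q (0, 1)))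
    (hgh : ∀ q : ℝ × ℝ, gradh q = (fderiv ℝ h q (1, 0), fderiv ℝ h q (0, 1))) :
    Differentiable ℝ h ∧ StrictConvexOn ℝ (Set.univ : Set (ℝ × ℝ)) h ∧
      (∀ q : ℝ × ℝ, gradh (gradf q) = q) ∧ (∀ q : ℝ × ℝ, gradf (gradh q) = q) := by
  obtain rfl : f = powerForm p a b := funext hf
  obtain rfl : h = legendre (powerForm p a b) := funext hh
  have hfG := hasFDerivAt_powerForm (a := a) (b := b) hp
  have hconv := strictConvexOn_powerForm hp ha hb0 hb1
  obtain ⟨e, he⟩ := exists_homeomorph_eq_grad hconv hfG (continuous_powerFormGrad hp)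
    (superlinear_powerForm hp ha hb0)
  have hhG := hasFDerivAt_legendre hconv.convexOn hfG e he
  have hgradf : gradf = e := funext fun q => by simp [hgf, (hfG q).fderiv, he]
  have hgradh : gradh = e.symm := funext fun q => by simp [hgh, (hhG q).fderiv]
  refine ⟨fun q => (hhG q).differentiableAt,
    strictConvexOn_legendre hconv.convexOn hfG (he ▸ e.surjective), ?_, ?_⟩ <;>
    simp [hgradf, hgradh]
end

section
/- Let p > 2, p′ = p/(p−1), a > 0 and 0 ≤ b ≤ p − 1, and let h be the Legendre transform of f(s,t) = (a/p)(|s|^p + 2b|s|^{p/2}|t|^{p/2} + |t|^p). Then for all real s̄, t̄ the Euler identity h(s̄, t̄) = (1/p′) · ( ∂_{s̄}h(s̄,t̄) · s̄ + ∂_{t̄}h(s̄,t̄) · t̄ ) holds. -/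
/-!
`h` is the convex conjugate of `f = potential p a b`. Since `f` is continuous, superlinear and
strictly convex, the supremum defining `h q` is attained at a unique point `v q`; by compactness
`v` is continuous, and since `v q` is a subgradient of `h` at `q`, `h` is differentiable with
gradient `v q`.
Strict convexity of `f` reduces to that of `φ(x, y) = x^p + 2b x^{p/2} y^{p/2} + y^p` on the
closed quadrant: along a segment, the second derivative of `φ` is a quadratic form in the
logarithmic derivatives whose discriminant is nonnegative exactly because `b ≤ p - 1`, and it
vanishes at most once. Finally `f (c • v) = c^p f v` gives `h (c • q) = c^{p'} h q`, and
differentiating in `c` at `c = 1` is Euler's identity.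
-/

open Set Filter Topology Asymptotics

theorem hasFDerivAt_of_subgradient {E : Type*} [NormedAddCommGroup E] [NormedSpace ℝ E]
    {h : E → ℝ} {L : E → E →L[ℝ] ℝ} (hL : ∀ x y, h x + L x (y - x) ≤ h y) {x : E}
    (hLx : ContinuousAt L x) : HasFDerivAt h (L x) x := by
  rw [hasFDerivAt_iff_isLittleO_nhds_zero]
  have hlim : Tendsto (fun u => L (x + u) - L x) (𝓝 0) (𝓝 0) := by
    have hx : Tendsto (fun u : E => x + u) (𝓝 0) (𝓝 x) := by
      simpa using tendsto_const_nhds.add (tendsto_id (x := 𝓝 (0 : E)))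
    simpa using (hLx.tendsto.comp hx).sub_const (L x)
  have hbound : ∀ u, |h (x + u) - h x - L x u| ≤ ‖L (x + u) - L x‖ * ‖u‖ := fun u => by
    have hlow := hL x (x + u)
    have hup := hL (x + u) x
    have hop := (L (x + u) - L x).le_opNorm u
    rw [add_sub_cancel_left] at hlow
    rw [sub_add_cancel_left, map_neg] at hup
    rw [sub_apply, Real.norm_eq_abs] at hop
    rw [abs_le]
    constructor <;> linarith [le_abs_self (L (x + u) u - L x u)]
  refine IsBigO.trans_isLittleO (IsBigO.of_bound 1 (Eventually.of_forall fun u => ?_))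
    (((isLittleO_one_iff ℝ).2 hlim).norm_left.mul_isBigO (isBigO_refl (fun u : E => ‖u‖) _)
      |>.trans_isBigO ?_)
  · simpa [Real.norm_eq_abs, abs_mul] using hbound u
  · simpa using (isBigO_refl (fun u : E => u) _).norm_left

theorem continuousAt_argmax_of_unique {X Y : Type*} [TopologicalSpace X] [TopologicalSpace Y]
    {g : X → Y → ℝ} (hg : Continuous (Function.uncurry g)) {m : X → Y}
    (hm : ∀ x y, g x y ≤ g x (m x)) {x₀ : X} (huniq : ∀ y, (∀ y', g x₀ y' ≤ g x₀ y) → y = m x₀)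
    {K : Set Y} (hK : IsCompact K) (hmK : ∀ᶠ x in 𝓝 x₀, m x ∈ K) : ContinuousAt m x₀ := by
  refine hK.tendsto_nhds_of_unique_mapClusterPt hmK fun y _ hy => huniq y fun y' => ?_
  have hclosed : IsClosed {z : X × Y | g z.1 y' ≤ g z.1 z.2} :=
    isClosed_le (hg.comp (continuous_fst.prodMk continuous_const)) hg
  suffices MapClusterPt (x₀, y) (𝓝 x₀) fun x => (x, m x) from
    hclosed.mem_of_mapClusterPt this (Eventually.of_forall fun x => hm x y')
  rw [mapClusterPt_iff_frequently]
  intro s hs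
  obtain ⟨u, hu, v, hv, huv⟩ := mem_nhds_prod_iff.1 hs
  exact ((mapClusterPt_iff_frequently.1 hy v hv).and_eventually hu).mono
    fun x hx => huv ⟨hx.2, hx.1⟩

theorem fderiv_apply_self_of_homogeneous {E : Type*} [NormedAddCommGroup E] [NormedSpace ℝ E]
    {h : E → ℝ} {x : E} {k : ℝ} (hd : DifferentiableAt ℝ h x)
    (hhom : ∀ c : ℝ, 0 < c → h (c • x) = c ^ k * h x) : fderiv ℝ h x x = k * h x := by
  have hray : HasDerivAt (fun c : ℝ => h (c • x)) (fderiv ℝ h x x) 1 := by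
    have hd' : HasFDerivAt h (fderiv ℝ h x) ((1 : ℝ) • x) := by
      rw [one_smul]
      exact hd.hasFDerivAt
    simpa [Function.comp_def] using
      hd'.comp_hasDerivAt (1 : ℝ) ((hasDerivAt_id (1 : ℝ)).smul_const x)
  have hpow : HasDerivAt (fun c : ℝ => c ^ k * h x) (k * h x) 1 := by
    simpa using (Real.hasDerivAt_rpow_const (x := 1) (p := k) (Or.inl one_ne_zero)).mul_const (h x)
  refine hray.unique (hpow.congr_of_eventuallyEq ?_)
  filter_upwards [Ioi_mem_nhds one_pos] with c hc using hhom c hc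

theorem strictMonoOn_of_hasDerivAt_nonneg {s : Set ℝ} (hs : Convex ℝ s) {f f' : ℝ → ℝ}
    (hf : ∀ x ∈ s, HasDerivAt f (f' x) x) (hf'0 : ∀ x ∈ s, 0 ≤ f' x)
    (hzero : {x | x ∈ s ∧ f' x = 0}.Subsingleton) : StrictMonoOn f s := by
  have hmono : MonotoneOn f s := by
    refine monotoneOn_of_deriv_nonneg hs (fun x hx => (hf x hx).continuousAt.continuousWithinAt)
      (fun x hx => (hf x (interior_subset hx)).differentiableAt.differentiableWithinAt)
      fun x hx => ?_
    rw [(hf x (interior_subset hx)).deriv]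
    exact hf'0 x (interior_subset hx)
  intro x hx y hy hxy
  refine (hmono hx hy hxy.le).lt_of_ne fun hxy' => ?_
  -- `f` is then constant on `[x, y]`, so `f'` vanishes at two distinct points.
  have hIcc : Icc x y ⊆ s := hs.ordConnected.out hx hy
  have hflat : ∀ z ∈ Ioo x y, f' z = 0 := fun z hz => by
    have hconst : f =ᶠ[𝓝 z] fun _ => f x := by
      filter_upwards [Ioo_mem_nhds hz.1 hz.2] with w hw
      have h1 := hmono hx (hIcc (Ioo_subset_Icc_self hw)) hw.1.le
      have h2 := hmono (hIcc (Ioo_subset_Icc_self hw)) hy hw.2.le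
      linarith
    exact (hf z (hIcc (Ioo_subset_Icc_self hz))).unique
      ((hasDerivAt_const z (f x)).congr_of_eventuallyEq hconst)
  have h1 : (2 * x + y) / 3 ∈ Ioo x y := ⟨by linarith, by linarith⟩
  have h2 : (x + 2 * y) / 3 ∈ Ioo x y := ⟨by linarith, by linarith⟩
  have := hzero ⟨hIcc (Ioo_subset_Icc_self h1), hflat _ h1⟩
    ⟨hIcc (Ioo_subset_Icc_self h2), hflat _ h2⟩
  linarith

lemma abs_mul_add_mul_le {x y θ η : ℝ} (hθ : 0 ≤ θ) (hη : 0 ≤ η) :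
    |θ * x + η * y| ≤ θ * |x| + η * |y| :=
  (abs_add_le _ _).trans_eq (by rw [abs_mul, abs_mul, abs_of_nonneg hθ, abs_of_nonneg hη])

lemma abs_mul_add_mul_lt_of_abs_eq {x y θ η : ℝ} (hxy : |x| = |y|) (hne : x ≠ y) (hθ : 0 < θ)
    (hη : 0 < η) (hθη : θ + η = 1) : |θ * x + η * y| < |x| := by
  have hy : y = -x := by
    rcases abs_eq_abs.1 hxy with h | h
    · exact absurd h hne
    · linarith
  have hx : x ≠ 0 := fun hx => hne (by rw [hy, hx, neg_zero])
  rw [hy, show θ * x + η * -x = (θ - η) * x by ring, abs_mul]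
  exact mul_lt_of_lt_one_left (abs_pos.2 hx) (abs_sub_lt_iff.2 ⟨by linarith, by linarith⟩)

theorem strictConvexOn_univ_comp_abs {φ : ℝ × ℝ → ℝ} (hconv : StrictConvexOn ℝ (Ici 0) φ)
    (hmono : StrictMonoOn φ (Ici 0)) :
    StrictConvexOn ℝ univ fun v : ℝ × ℝ => φ (|v.1|, |v.2|) := by
  refine ⟨convex_univ, fun v _ w _ hvw θ η hθ hη hθη => ?_⟩
  have hA : ((|v.1|, |v.2|) : ℝ × ℝ) ∈ Ici 0 := ⟨abs_nonneg _, abs_nonneg _⟩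
  have hB : ((|w.1|, |w.2|) : ℝ × ℝ) ∈ Ici 0 := ⟨abs_nonneg _, abs_nonneg _⟩
  have hZ : ((|θ * v.1 + η * w.1|, |θ * v.2 + η * w.2|) : ℝ × ℝ) ∈ Ici 0 :=
    ⟨abs_nonneg _, abs_nonneg _⟩
  simp only [Prod.fst_add, Prod.snd_add, Prod.smul_fst, Prod.smul_snd, smul_eq_mul]
  by_cases hAB : ((|v.1|, |v.2|) : ℝ × ℝ) = (|w.1|, |w.2|)
  · obtain ⟨h1, h2⟩ := Prod.mk.inj hAB
    have hlt : ((|θ * v.1 + η * w.1|, |θ * v.2 + η * w.2|) : ℝ × ℝ) < (|v.1|, |v.2|) := by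
      have hle : ∀ {x y : ℝ}, |x| = |y| → |θ * x + η * y| ≤ |x| := fun hxy =>
        (abs_mul_add_mul_le hθ.le hη.le).trans_eq (by rw [← hxy, ← add_mul, hθη, one_mul])
      rcases not_and_or.1 (mt Prod.ext_iff.2 hvw) with hne | hne
      · exact Prod.lt_iff.2 (Or.inl ⟨abs_mul_add_mul_lt_of_abs_eq h1 hne hθ hη hθη, hle h2⟩)
      · exact Prod.lt_iff.2 (Or.inr ⟨hle h1, abs_mul_add_mul_lt_of_abs_eq h2 hne hθ hη hθη⟩)
    calc φ (|θ * v.1 + η * w.1|, |θ * v.2 + η * w.2|) < φ (|v.1|, |v.2|) := hmono hZ hA hlt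
      _ = θ * φ (|v.1|, |v.2|) + η * φ (|w.1|, |w.2|) := by rw [← hAB, ← add_mul, hθη, one_mul]
  · calc φ (|θ * v.1 + η * w.1|, |θ * v.2 + η * w.2|)
        ≤ φ (θ • (|v.1|, |v.2|) + η • (|w.1|, |w.2|)) :=
          hmono.monotoneOn hZ (convex_Ici 0 hA hB hθ.le hη.le hθη)
            ⟨abs_mul_add_mul_le hθ.le hη.le, abs_mul_add_mul_le hθ.le hη.le⟩
      _ < θ * φ (|v.1|, |v.2|) + η * φ (|w.1|, |w.2|) := hconv.2 hA hB hAB hθ hη hθη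

noncomputable section

namespace CoupledPowerLegendre

def legendreObjective (F : ℝ × ℝ → ℝ) (q v : ℝ × ℝ) : ℝ := v.1 * q.1 + v.2 * q.2 - F v

def pairing (v : ℝ × ℝ) : ℝ × ℝ →L[ℝ] ℝ :=
  v.1 • ContinuousLinearMap.fst ℝ ℝ ℝ + v.2 • ContinuousLinearMap.snd ℝ ℝ ℝ

@[simp]
lemma pairing_apply (v u : ℝ × ℝ) : pairing v u = v.1 * u.1 + v.2 * u.2 := by
  simp [pairing]

lemma continuous_pairing : Continuous pairing :=
  (continuous_fst.smul continuous_const).add (continuous_snd.smul continuous_const)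

lemma fst_mul_add_snd_mul_le (v q : ℝ × ℝ) : v.1 * q.1 + v.2 * q.2 ≤ 2 * (‖v‖ * ‖q‖) := by
  have h1 : |v.1| * |q.1| ≤ ‖v‖ * ‖q‖ :=
    mul_le_mul (norm_fst_le v) (norm_fst_le q) (abs_nonneg _) (norm_nonneg _)
  have h2 : |v.2| * |q.2| ≤ ‖v‖ * ‖q‖ :=
    mul_le_mul (norm_snd_le v) (norm_snd_le q) (abs_nonneg _) (norm_nonneg _)
  rw [← abs_mul] at h1 h2
  linarith [le_abs_self (v.1 * q.1), le_abs_self (v.2 * q.2)]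

lemma eventually_mul_norm_le_mul_norm_rpow {c p : ℝ} (hc : 0 < c) (hp : 1 < p) (M : ℝ) :
    ∀ᶠ v in cocompact (ℝ × ℝ), M * ‖v‖ ≤ c * ‖v‖ ^ p := by
  have hlarge : ∀ᶠ t in atTop, M ≤ c * t ^ (p - 1) ∧ 0 < t :=
    (((tendsto_rpow_atTop (by linarith)).const_mul_atTop hc).eventually_ge_atTop M).and
      (eventually_gt_atTop 0)
  filter_upwards [tendsto_norm_cocompact_atTop.eventually hlarge] with v ⟨hM, hv⟩
  calc M * ‖v‖ ≤ c * ‖v‖ ^ (p - 1) * ‖v‖ := mul_le_mul_of_nonneg_right hM hv.le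
    _ = c * ‖v‖ ^ p := by rw [mul_assoc, ← Real.rpow_add_one hv.ne', sub_add_cancel]

section Legendre

variable {F : ℝ × ℝ → ℝ}

lemma legendreObjective_lt_legendreObjective_zero {q v : ℝ × ℝ} {M : ℝ} (hM : ‖q‖ ≤ M)
    (hFv : (2 * M + 1) * ‖v‖ ≤ F v) (hv : F 0 < ‖v‖) :
    legendreObjective F q v < legendreObjective F q 0 := by
  have := fst_mul_add_snd_mul_le v q
  have := mul_le_mul_of_nonneg_left hM (norm_nonneg v)
  simp only [legendreObjective, Prod.fst_zero, Prod.snd_zero, zero_mul, add_zero, zero_sub]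
  nlinarith

lemma exists_forall_legendreObjective_le (hFc : Continuous F)
    (hFg : ∀ M, ∀ᶠ v in cocompact (ℝ × ℝ), M * ‖v‖ ≤ F v) (q : ℝ × ℝ) :
    ∃ v, ∀ u, legendreObjective F q u ≤ legendreObjective F q v := by
  refine (continuous_fst.mul continuous_const |>.add (continuous_snd.mul continuous_const)
    |>.sub hFc).exists_forall_ge' 0 ?_
  filter_upwards [hFg (2 * ‖q‖ + 1), tendsto_norm_cocompact_atTop.eventually_gt_atTop (F 0)]
    with v hFv hv
  exact (legendreObjective_lt_legendreObjective_zero le_rfl hFv hv).le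

lemma exists_isCompact_eventually_maximizer_mem
    (hFg : ∀ M, ∀ᶠ v in cocompact (ℝ × ℝ), M * ‖v‖ ≤ F v) (q₀ : ℝ × ℝ) :
    ∃ K, IsCompact K ∧ ∀ᶠ q in 𝓝 q₀,
      ∀ v, (∀ u, legendreObjective F q u ≤ legendreObjective F q v) → v ∈ K := by
  obtain ⟨K, hK, hKc⟩ := mem_cocompact.1 ((hFg (2 * (‖q₀‖ + 1) + 1)).and
    (tendsto_norm_cocompact_atTop.eventually_gt_atTop (F 0)))
  refine ⟨K, hK, ?_⟩
  filter_upwards [(continuous_norm.tendsto q₀).eventually (eventually_le_nhds (lt_add_one ‖q₀‖))]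
    with q hq v hv
  by_contra hvK
  obtain ⟨hFv, hv0⟩ := hKc hvK
  exact (hv 0).not_gt (legendreObjective_lt_legendreObjective_zero hq hFv hv0)

lemma legendreObjective_maximizer_unique (hFs : StrictConvexOn ℝ univ F) {q v w : ℝ × ℝ}
    (hv : ∀ u, legendreObjective F q u ≤ legendreObjective F q v)
    (hw : ∀ u, legendreObjective F q u ≤ legendreObjective F q w) : v = w := by
  by_contra hvw
  have hmid := hFs.2 (mem_univ v) (mem_univ w) hvw one_half_pos one_half_pos (add_halves 1)
  have h1 := hv ((1 / 2 : ℝ) • v + (1 / 2 : ℝ) • w)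
  have h2 := hw v
  simp only [legendreObjective, Prod.fst_add, Prod.snd_add, Prod.smul_fst, Prod.smul_snd,
    smul_eq_mul] at hmid h1 h2
  nlinarith

theorem differentiable_legendre (hFc : Continuous F) (hFs : StrictConvexOn ℝ univ F)
    (hFg : ∀ M, ∀ᶠ v in cocompact (ℝ × ℝ), M * ‖v‖ ≤ F v) {h : ℝ × ℝ → ℝ}
    (hh : ∀ q, h q = ⨆ v, legendreObjective F q v) : Differentiable ℝ h := by
  choose m hm using exists_forall_legendreObjective_le hFc hFg
  have hval : ∀ q, h q = legendreObjective F q (m q) := fun q => by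
    rw [hh]
    exact le_antisymm (ciSup_le (hm q)) (le_ciSup ⟨_, forall_mem_range.2 (hm q)⟩ (m q))
  have hsub : ∀ x y, h x + pairing (m x) (y - x) ≤ h y := fun x y => by
    have := hm y (m x)
    rw [hval, hval]
    simp only [legendreObjective, pairing_apply, Prod.fst_sub, Prod.snd_sub] at this ⊢
    linarith
  intro q
  obtain ⟨K, hK, hmK⟩ := exists_isCompact_eventually_maximizer_mem hFg q
  have hcont : ContinuousAt m q :=
    continuousAt_argmax_of_unique (g := legendreObjective F)
      (by unfold legendreObjective; fun_prop) hm
      (fun v hv => legendreObjective_maximizer_unique hFs hv (hm q)) hK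
      (hmK.mono fun q' hq' => hq' _ (hm q'))
  exact (hasFDerivAt_of_subgradient hsub
    (continuous_pairing.continuousAt.comp hcont)).differentiableAt

theorem legendre_smul {p : ℝ} (hp : 1 < p) (hF : ∀ c : ℝ, 0 < c → ∀ v, F (c • v) = c ^ p * F v)
    {h : ℝ × ℝ → ℝ} (hh : ∀ q, h q = ⨆ v, legendreObjective F q v) {c : ℝ} (hc : 0 < c)
    (q : ℝ × ℝ) : h (c • q) = c ^ (p / (p - 1)) * h q := by
  -- substitute `v = l • w` with `l = c ^ (1 / (p - 1))`, so that `l * c = l ^ p`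
  set l := c ^ (p - 1)⁻¹ with hl_def
  have hl : 0 < l := Real.rpow_pos_of_pos hc _
  have hp1 : p - 1 ≠ 0 := by linarith
  have hlp : l ^ p = c ^ (p / (p - 1)) := by
    rw [hl_def, ← Real.rpow_mul hc.le, inv_mul_eq_div]
  have hlc : l * c = c ^ (p / (p - 1)) := by
    rw [hl_def, ← Real.rpow_add_one hc.ne']
    congr 1
    field_simp
    ring
  have hsurj : Function.Surjective fun w : ℝ × ℝ => l • w :=
    fun v => ⟨l⁻¹ • v, smul_inv_smul₀ hl.ne' v⟩
  rw [hh, hh, Real.mul_iSup_of_nonneg (by positivity), ← hsurj.iSup_comp]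
  refine iSup_congr fun w => ?_
  simp only [legendreObjective, Prod.smul_fst, Prod.smul_snd, smul_eq_mul, hF l hl, hlp]
  rw [← hlc]
  ring

end Legendre

lemma hasDerivAt_rpow_mul_rpow {X Y : ℝ → ℝ} {dX dY t : ℝ} (k m : ℝ) (hX : HasDerivAt X dX t)
    (hY : HasDerivAt Y dY t) (hX0 : 0 < X t) (hY0 : 0 < Y t) :
    HasDerivAt (fun s => X s ^ k * Y s ^ m)
      ((k * (dX / X t) + m * (dY / Y t)) * (X t ^ k * Y t ^ m)) t := by
  refine ((hX.rpow_const (p := k) (Or.inl hX0.ne')).mul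
    (hY.rpow_const (p := m) (Or.inl hY0.ne'))).congr_deriv ?_
  rw [Real.rpow_sub_one hX0.ne', Real.rpow_sub_one hY0.ne']
  field_simp

lemma hasDerivAt_logDeriv_mul_rpow_mul_rpow {X Y : ℝ → ℝ} {dX dY t : ℝ} (k m : ℝ)
    (hX : HasDerivAt X dX t) (hY : HasDerivAt Y dY t) (hX0 : 0 < X t) (hY0 : 0 < Y t) :
    HasDerivAt (fun s => (k * (dX / X s) + m * (dY / Y s)) * (X s ^ k * Y s ^ m))
      (((k * (dX / X t) + m * (dY / Y t)) ^ 2 - k * (dX / X t) ^ 2 - m * (dY / Y t) ^ 2)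
        * (X t ^ k * Y t ^ m)) t := by
  have hα := (hasDerivAt_const t dX).div hX hX0.ne'
  have hβ := (hasDerivAt_const t dY).div hY hY0.ne'
  refine (((hα.const_mul k).add (hβ.const_mul m)).mul
    (hasDerivAt_rpow_mul_rpow k m hX hY hX0 hY0)).congr_deriv ?_
  simp only [Pi.add_apply, Pi.div_apply]
  field_simp
  ring

def phi (p b : ℝ) (z : ℝ × ℝ) : ℝ := z.1 ^ p + 2 * b * z.1 ^ (p / 2) * z.2 ^ (p / 2) + z.2 ^ p

/-- The derivative of `phi p b` at `(x, y)` in the direction `(dx, dy)`, for `x, y > 0`. -/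
def phiDeriv (p b dx dy x y : ℝ) : ℝ :=
  p * (dx / x) * x ^ p + b * p * (dx / x + dy / y) * (x ^ (p / 2) * y ^ (p / 2))
    + p * (dy / y) * y ^ p

/-- The second derivative of `phi p b` at `(x, y)` in the direction `(dx, dy)`, written in terms
of `P = x ^ (p / 2)`, `S = y ^ (p / 2)`, `α = dx / x` and `β = dy / y`. -/
def hessianForm (p b P S α β : ℝ) : ℝ :=
  p * (p - 1) * α ^ 2 * P ^ 2 + b * p * ((p / 2 - 1) * (α ^ 2 + β ^ 2) + p * α * β) * (P * S)
    + p * (p - 1) * β ^ 2 * S ^ 2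

section Hessian

variable {p b P S : ℝ}

/-- Completing the square; the discriminant `Δ` is nonnegative exactly when `b ≤ p - 1`. -/
lemma exists_mul_hessianForm_eq (hp : 2 < p) (hb0 : 0 ≤ b) (hb1 : b ≤ p - 1) (hP : 0 < P)
    (hS : 0 < S) :
    ∃ A > 0, ∃ B, ∃ Δ ≥ 0, (P ≠ S → 0 < Δ) ∧
      ∀ α β, A * hessianForm p b P S α β = (A * α + B * β) ^ 2 + Δ * β ^ 2 := by
  have hp1 : 0 < p - 1 := by linarith
  have hp2 : 0 ≤ p / 2 - 1 := by linarith
  have hpb : 0 ≤ p - 1 - b := by linarith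
  refine ⟨p * (p - 1) * P ^ 2 + b * p * (p / 2 - 1) * (P * S), by positivity,
    b * p ^ 2 / 2 * (P * S), p ^ 2 * (p - 1) * (b * (p / 2 - 1) * (P * S) * (P - S) ^ 2
      + (1 + b) * (p - 1 - b) * (P * S) ^ 2), by positivity, fun hPS => ?_,
    fun α β => by simp only [hessianForm]; ring⟩
  have : P - S ≠ 0 := sub_ne_zero.2 hPS
  rcases hb0.eq_or_lt with rfl | hb
  · have : 0 < p - 1 - 0 := by linarith
    positivity
  · have : 0 < p / 2 - 1 := by linarith
    positivity

lemma hessianForm_nonneg (hp : 2 < p) (hb0 : 0 ≤ b) (hb1 : b ≤ p - 1) (hP : 0 < P)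
    (hS : 0 < S) (α β : ℝ) : 0 ≤ hessianForm p b P S α β := by
  obtain ⟨A, hA, B, Δ, hΔ, -, hAH⟩ := exists_mul_hessianForm_eq hp hb0 hb1 hP hS
  exact (mul_nonneg_iff_of_pos_left hA).1 (hAH α β ▸ by positivity)

lemma hessianForm_pos_of_ne (hp : 2 < p) (hb0 : 0 ≤ b) (hb1 : b ≤ p - 1) (hP : 0 < P)
    (hS : 0 < S) (hPS : P ≠ S) {α β : ℝ} (hαβ : α ≠ 0 ∨ β ≠ 0) :
    0 < hessianForm p b P S α β := by
  obtain ⟨A, hA, B, Δ, -, hΔ, hAH⟩ := exists_mul_hessianForm_eq hp hb0 hb1 hP hS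
  refine (mul_pos_iff_of_pos_left hA).1 (hAH α β ▸ ?_)
  rcases eq_or_ne β 0 with rfl | hβ
  · have : A * α ≠ 0 := mul_ne_zero hA.ne' (hαβ.resolve_right (not_not.2 rfl))
    simp only [mul_zero, add_zero, ne_eq, OfNat.ofNat_ne_zero, not_false_eq_true, zero_pow]
    positivity
  · have := hΔ hPS
    positivity

lemma hessianForm_pos_of_eq (hp : 2 < p) (hb0 : 0 ≤ b) (hP : 0 < P) (hS : 0 < S) {α : ℝ}
    (hα : α ≠ 0) : 0 < hessianForm p b P S α α := by
  have hp1 : 0 < p - 1 := by linarith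
  have : hessianForm p b P S α α
      = p * α ^ 2 * ((p - 1) * (P ^ 2 + S ^ 2) + 2 * b * (p - 1) * (P * S)) := by
    simp only [hessianForm]
    ring
  rw [this]
  positivity

lemma eq_and_ne_of_hessianForm_eq_zero (hp : 2 < p) (hb0 : 0 ≤ b) (hb1 : b ≤ p - 1)
    {x y dx dy : ℝ} (hx : 0 < x) (hy : 0 < y) (hd : dx ≠ 0 ∨ dy ≠ 0)
    (h : hessianForm p b (x ^ (p / 2)) (y ^ (p / 2)) (dx / x) (dy / y) = 0) :
    x = y ∧ dx ≠ dy := by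
  have hP := Real.rpow_pos_of_pos hx (p / 2)
  have hS := Real.rpow_pos_of_pos hy (p / 2)
  have hxy : x = y := by
    by_contra hxy
    have hPS : x ^ (p / 2) ≠ y ^ (p / 2) := by
      rwa [Ne, Real.rpow_left_inj hx.le hy.le (by positivity)]
    refine (hessianForm_pos_of_ne hp hb0 hb1 hP hS hPS ?_).ne' h
    exact hd.imp (div_ne_zero · hx.ne') (div_ne_zero · hy.ne')
  refine ⟨hxy, fun hdd => ?_⟩
  subst hxy hdd
  exact (hessianForm_pos_of_eq hp hb0 hP hS (div_ne_zero (hd.elim id id) hx.ne')).ne' h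

end Hessian

section Phi

variable {p b : ℝ}

lemma continuous_phi (hp : 2 < p) (b : ℝ) : Continuous (phi p b) := by
  have hpow : ∀ r : ℝ, 0 < r → Continuous fun x : ℝ => x ^ r := fun r hr =>
    continuous_id.rpow_const fun _ => Or.inr hr.le
  have := hpow p (by linarith)
  have := hpow (p / 2) (by linarith)
  unfold phi
  fun_prop

lemma hasDerivAt_phi_comp {X Y : ℝ → ℝ} {dX dY t : ℝ} (hX : HasDerivAt X dX t)
    (hY : HasDerivAt Y dY t) (hX0 : 0 < X t) (hY0 : 0 < Y t) :
    HasDerivAt (fun s => phi p b (X s, Y s)) (phiDeriv p b dX dY (X t) (Y t)) t := by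
  have h := ((hasDerivAt_rpow_mul_rpow p 0 hX hY hX0 hY0).add
    ((hasDerivAt_rpow_mul_rpow (p / 2) (p / 2) hX hY hX0 hY0).const_mul (2 * b))).add
    (hasDerivAt_rpow_mul_rpow 0 p hX hY hX0 hY0)
  simp only [Real.rpow_zero, mul_one, one_mul, zero_mul, add_zero, zero_add] at h
  refine (h.congr_deriv (by simp only [phiDeriv]; ring)).congr_of_eventuallyEq
    (Eventually.of_forall fun s => ?_)
  simp only [phi, Pi.add_apply]
  ring

lemma hasDerivAt_phiDeriv_comp {X Y : ℝ → ℝ} {dX dY t : ℝ} (hX : HasDerivAt X dX t)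
    (hY : HasDerivAt Y dY t) (hX0 : 0 < X t) (hY0 : 0 < Y t) :
    HasDerivAt (fun s => phiDeriv p b dX dY (X s) (Y s))
      (hessianForm p b (X t ^ (p / 2)) (Y t ^ (p / 2)) (dX / X t) (dY / Y t)) t := by
  have h := ((hasDerivAt_logDeriv_mul_rpow_mul_rpow p 0 hX hY hX0 hY0).add
    ((hasDerivAt_logDeriv_mul_rpow_mul_rpow (p / 2) (p / 2) hX hY hX0 hY0).const_mul
      (2 * b))).add (hasDerivAt_logDeriv_mul_rpow_mul_rpow 0 p hX hY hX0 hY0)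
  simp only [Real.rpow_zero, mul_one, one_mul, zero_mul, add_zero, zero_add] at h
  have hsq : ∀ x : ℝ, 0 < x → x ^ p = (x ^ (p / 2)) ^ 2 := fun x hx => by
    rw [← Real.rpow_mul_natCast hx.le]
    norm_num
  refine (h.congr_deriv ?_).congr_of_eventuallyEq (Eventually.of_forall fun s => ?_)
  · rw [hsq _ hX0, hsq _ hY0]
    simp only [hessianForm]
    ring
  · simp only [phiDeriv, Pi.add_apply]
    ring

lemma add_mul_sub_pos {x y s : ℝ} (hx : 0 ≤ x) (hy : 0 ≤ y) (hxy : 0 < x + y)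
    (hs : s ∈ Ioo (0 : ℝ) 1) : 0 < x + s * (y - x) := by
  have := mul_pos hs.1 (sub_pos.2 hs.2)
  nlinarith [mul_pos this hxy, mul_nonneg (sq_nonneg (1 - s)) hx, mul_nonneg (sq_nonneg s) hy]

lemma subsingleton_hessianForm_eq_zero (hp : 2 < p) (hb0 : 0 ≤ b) (hb1 : b ≤ p - 1)
    {x y dx dy : ℝ} (hd : dx ≠ 0 ∨ dy ≠ 0) :
    {s | 0 < x + s * dx ∧ 0 < y + s * dy ∧ hessianForm p b ((x + s * dx) ^ (p / 2))
      ((y + s * dy) ^ (p / 2)) (dx / (x + s * dx)) (dy / (y + s * dy)) = 0}.Subsingleton := by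
  rintro s ⟨hx, hy, hQ⟩ s' ⟨hx', hy', hQ'⟩
  obtain ⟨hxy, hdd⟩ := eq_and_ne_of_hessianForm_eq_zero hp hb0 hb1 hx hy hd hQ
  obtain ⟨hxy', -⟩ := eq_and_ne_of_hessianForm_eq_zero hp hb0 hb1 hx' hy' hd hQ'
  have : (s - s') * (dx - dy) = 0 := by linear_combination hxy - hxy'
  exact sub_eq_zero.1 ((mul_eq_zero.1 this).resolve_right (sub_ne_zero.2 hdd))

lemma strictConvexOn_phi_segment (hp : 2 < p) (hb0 : 0 ≤ b) (hb1 : b ≤ p - 1) {z w : ℝ × ℝ}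
    (hz : 0 ≤ z) (hw : 0 ≤ w) (hzw : z ≠ w) (h1 : 0 < z.1 + w.1) (h2 : 0 < z.2 + w.2) :
    StrictConvexOn ℝ (Icc 0 1) fun s : ℝ => phi p b (z + s • (w - z)) := by
  set X : ℝ → ℝ := fun s => z.1 + s * (w.1 - z.1)
  set Y : ℝ → ℝ := fun s => z.2 + s * (w.2 - z.2)
  have hX : ∀ s, HasDerivAt X (w.1 - z.1) s := fun s => by
    simpa only [id, one_mul] using ((hasDerivAt_id s).mul_const (w.1 - z.1)).const_add z.1
  have hY : ∀ s, HasDerivAt Y (w.2 - z.2) s := fun s => by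
    simpa only [id, one_mul] using ((hasDerivAt_id s).mul_const (w.2 - z.2)).const_add z.2
  have hpos : ∀ s ∈ Ioo (0 : ℝ) 1, 0 < X s ∧ 0 < Y s := fun s hs =>
    ⟨add_mul_sub_pos hz.1 hw.1 h1 hs, add_mul_sub_pos hz.2 hw.2 h2 hs⟩
  have hd : w.1 - z.1 ≠ 0 ∨ w.2 - z.2 ≠ 0 := by
    by_contra! h
    exact hzw (Prod.ext (sub_eq_zero.1 h.1).symm (sub_eq_zero.1 h.2).symm)
  have hmono : StrictMonoOn (fun s => phiDeriv p b (w.1 - z.1) (w.2 - z.2) (X s) (Y s))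
      (Ioo 0 1) :=
    strictMonoOn_of_hasDerivAt_nonneg (convex_Ioo 0 1)
      (fun s hs => hasDerivAt_phiDeriv_comp (hX s) (hY s) (hpos s hs).1 (hpos s hs).2)
      (fun s hs => hessianForm_nonneg hp hb0 hb1 (Real.rpow_pos_of_pos (hpos s hs).1 _)
        (Real.rpow_pos_of_pos (hpos s hs).2 _) _ _)
      ((subsingleton_hessianForm_eq_zero hp hb0 hb1 hd).anti
        fun s hs => ⟨(hpos s hs.1).1, (hpos s hs.1).2, hs.2⟩)
  have hderiv : ∀ s ∈ Ioo (0 : ℝ) 1, deriv (fun s : ℝ => phi p b (z + s • (w - z))) s =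
      phiDeriv p b (w.1 - z.1) (w.2 - z.2) (X s) (Y s) := fun s hs =>
    (hasDerivAt_phi_comp (hX s) (hY s) (hpos s hs).1 (hpos s hs).2).deriv
  refine StrictMonoOn.strictConvexOn_of_deriv (convex_Icc 0 1)
    ((continuous_phi hp b).comp (by fun_prop)).continuousOn ?_
  rw [interior_Icc]
  intro s hs s' hs' hss'
  rw [hderiv s hs, hderiv s' hs']
  exact hmono hs hs' hss'

lemma phi_of_fst_eq_zero (hp : 2 < p) {z : ℝ × ℝ} (hz : z.1 = 0) : phi p b z = z.2 ^ p := by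
  simp [phi, hz, Real.zero_rpow (by linarith : p ≠ 0), Real.zero_rpow (by linarith : p / 2 ≠ 0)]

lemma phi_of_snd_eq_zero (hp : 2 < p) {z : ℝ × ℝ} (hz : z.2 = 0) : phi p b z = z.1 ^ p := by
  simp [phi, hz, Real.zero_rpow (by linarith : p ≠ 0), Real.zero_rpow (by linarith : p / 2 ≠ 0)]

theorem strictConvexOn_phi (hp : 2 < p) (hb0 : 0 ≤ b) (hb1 : b ≤ p - 1) :
    StrictConvexOn ℝ (Ici 0) (phi p b) := by
  refine ⟨convex_Ici 0, fun z hz w hw hzw θ η hθ hη hθη => ?_⟩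
  have hz1 : 0 ≤ z.1 := hz.1
  have hz2 : 0 ≤ z.2 := hz.2
  have hw1 : 0 ≤ w.1 := hw.1
  have hw2 : 0 ≤ w.2 := hw.2
  have hrpow := strictConvexOn_rpow (by linarith : 1 < p)
  rcases (add_nonneg hz1 hw1).eq_or_lt with h1 | h1
  · have hz1' : z.1 = 0 := by linarith
    have hw1' : w.1 = 0 := by linarith
    have h2 : z.2 ≠ w.2 := fun h => hzw (Prod.ext (hz1'.trans hw1'.symm) h)
    rw [phi_of_fst_eq_zero hp (by simp [hz1', hw1']), phi_of_fst_eq_zero hp hz1',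
      phi_of_fst_eq_zero hp hw1']
    simpa using hrpow.2 hz2 hw2 h2 hθ hη hθη
  rcases (add_nonneg hz2 hw2).eq_or_lt with h2 | h2
  · have hz2' : z.2 = 0 := by linarith
    have hw2' : w.2 = 0 := by linarith
    have h1 : z.1 ≠ w.1 := fun h => hzw (Prod.ext h (hz2'.trans hw2'.symm))
    rw [phi_of_snd_eq_zero hp (by simp [hz2', hw2']), phi_of_snd_eq_zero hp hz2',
      phi_of_snd_eq_zero hp hw2']
    simpa using hrpow.2 hz1 hw1 h1 hθ hη hθη
  have key := (strictConvexOn_phi_segment hp hb0 hb1 hz hw hzw h1 h2).2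
    (left_mem_Icc.2 zero_le_one) (right_mem_Icc.2 zero_le_one) zero_ne_one hθ hη hθη
  simp only [smul_eq_mul, mul_zero, mul_one, zero_add, zero_smul, add_zero, one_smul,
    add_sub_cancel] at key
  rwa [show θ • z + η • w = z + η • (w - z) by
    rw [show θ = 1 - η by linarith, sub_smul, one_smul, smul_sub]; abel]

theorem strictMonoOn_phi (hp : 2 < p) (hb0 : 0 ≤ b) : StrictMonoOn (phi p b) (Ici 0) := by
  intro z hz w hw hzw
  have hz1 : 0 ≤ z.1 := hz.1
  have hz2 : 0 ≤ z.2 := hz.2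
  have hw1 : 0 ≤ w.1 := hw.1
  have hle := hzw.le
  have hcross : 2 * b * z.1 ^ (p / 2) * z.2 ^ (p / 2) ≤ 2 * b * w.1 ^ (p / 2) * w.2 ^ (p / 2) := by
    gcongr
    exacts [hle.1, hle.2]
  simp only [phi]
  rcases Prod.lt_iff.1 hzw with ⟨h1, h2⟩ | ⟨h1, h2⟩
  · have := Real.rpow_lt_rpow hz1 h1 (by linarith : 0 < p)
    have := Real.rpow_le_rpow hz2 h2 (by linarith : 0 ≤ p)
    linarith
  · have := Real.rpow_le_rpow hz1 h1 (by linarith : 0 ≤ p)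
    have := Real.rpow_lt_rpow hz2 h2 (by linarith : 0 < p)
    linarith

lemma phi_smul (hp : 2 < p) {c : ℝ} (hc : 0 ≤ c) {z : ℝ × ℝ} (hz : 0 ≤ z) :
    phi p b (c • z) = c ^ p * phi p b z := by
  have hz1 : 0 ≤ z.1 := hz.1
  have hz2 : 0 ≤ z.2 := hz.2
  have hhalf : c ^ (p / 2) * c ^ (p / 2) = c ^ p := by
    rw [← Real.rpow_add' hc (by linarith), add_halves]
  simp only [phi, Prod.smul_fst, Prod.smul_snd, smul_eq_mul, Real.mul_rpow hc hz1,
    Real.mul_rpow hc hz2]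
  linear_combination 2 * b * z.1 ^ (p / 2) * z.2 ^ (p / 2) * hhalf

lemma norm_rpow_le_phi_abs (hb0 : 0 ≤ b) (v : ℝ × ℝ) : ‖v‖ ^ p ≤ phi p b (|v.1|, |v.2|) := by
  have h1 := Real.rpow_nonneg (abs_nonneg v.1) p
  have h2 := Real.rpow_nonneg (abs_nonneg v.2) p
  have h12 : 0 ≤ 2 * b * |v.1| ^ (p / 2) * |v.2| ^ (p / 2) := by positivity
  rw [Prod.norm_def, Real.norm_eq_abs, Real.norm_eq_abs]
  simp only [phi]
  rcases max_cases |v.1| |v.2| with ⟨h, -⟩ | ⟨h, -⟩ <;> rw [h] <;> linarith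

end Phi

def potential (p a b : ℝ) (v : ℝ × ℝ) : ℝ := a / p * phi p b (|v.1|, |v.2|)

section Potential

variable {p a b : ℝ}

lemma continuous_potential (hp : 2 < p) : Continuous (potential p a b) :=
  continuous_const.mul ((continuous_phi hp b).comp (by fun_prop))

theorem strictConvexOn_potential (hp : 2 < p) (ha : 0 < a) (hb0 : 0 ≤ b) (hb1 : b ≤ p - 1) :
    StrictConvexOn ℝ univ (potential p a b) := by
  have hφ := strictConvexOn_univ_comp_abs (strictConvexOn_phi hp hb0 hb1) (strictMonoOn_phi hp hb0)
  refine ⟨convex_univ, fun v hv w hw hvw θ η hθ hη hθη => ?_⟩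
  have hap : 0 < a / p := div_pos ha (by linarith)
  have := mul_lt_mul_of_pos_left (hφ.2 hv hw hvw hθ hη hθη) hap
  simp only [potential, smul_eq_mul] at this ⊢
  linarith

lemma eventually_mul_norm_le_potential (hp : 2 < p) (ha : 0 < a) (hb0 : 0 ≤ b) (M : ℝ) :
    ∀ᶠ v in cocompact (ℝ × ℝ), M * ‖v‖ ≤ potential p a b v := by
  have hap : 0 < a / p := div_pos ha (by linarith)
  filter_upwards [eventually_mul_norm_le_mul_norm_rpow hap (by linarith : 1 < p) M] with v hv
  exact hv.trans (mul_le_mul_of_nonneg_left (norm_rpow_le_phi_abs hb0 v) hap.le)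

lemma potential_smul (hp : 2 < p) {c : ℝ} (hc : 0 < c) (v : ℝ × ℝ) :
    potential p a b (c • v) = c ^ p * potential p a b v := by
  have : ((|(c • v).1|, |(c • v).2|) : ℝ × ℝ) = c • (|v.1|, |v.2|) := by
    ext <;> simp [abs_mul, abs_of_pos hc]
  simp only [potential, this,
    phi_smul hp hc.le (show (0 : ℝ × ℝ) ≤ (|v.1|, |v.2|) from ⟨abs_nonneg _, abs_nonneg _⟩)]
  ring

end Potential

lemma map_mk_eq (L : ℝ × ℝ →L[ℝ] ℝ) (s t : ℝ) : L (s, t) = L (1, 0) * s + L (0, 1) * t := by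
  have : ((s, t) : ℝ × ℝ) = s • (1, 0) + t • (0, 1) := by ext <;> simp
  rw [this, map_add, map_smul, map_smul, smul_eq_mul, smul_eq_mul]
  ring

end CoupledPowerLegendre

end

open CoupledPowerLegendre

/-- Euler identity for the Legendre transform `h` of `f`:
`h(s̄,t̄) = (1/p') (∂_s̄ h(s̄,t̄) · s̄ + ∂_t̄ h(s̄,t̄) · t̄)`. -/
theorem stmt_8 (p p' a b : ℝ) (hp : 2 < p) (hp' : p' = p / (p - 1)) (ha : 0 < a)
    (hb0 : 0 ≤ b) (hb1 : b ≤ p - 1)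
    (h : ℝ × ℝ → ℝ)
    (hh : ∀ q : ℝ × ℝ, h q = ⨆ st : ℝ × ℝ,
      (st.1 * q.1 + st.2 * q.2 -
        (a / p) * (|st.1| ^ p + 2 * b * |st.1| ^ (p / 2) * |st.2| ^ (p / 2) + |st.2| ^ p)))
    (sb tb : ℝ) :
    h (sb, tb) =
      (1 / p') * (fderiv ℝ h (sb, tb) (1, 0) * sb + fderiv ℝ h (sb, tb) (0, 1) * tb) := by
  have hh' : ∀ q, h q = ⨆ v, legendreObjective (potential p a b) q v := hh
  have hdiff := differentiable_legendre (continuous_potential hp)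
    (strictConvexOn_potential hp ha hb0 hb1) (eventually_mul_norm_le_potential hp ha hb0) hh'
  have heuler := fderiv_apply_self_of_homogeneous (hdiff (sb, tb)) fun c hc =>
    legendre_smul (by linarith) (fun c hc v => potential_smul hp hc v) hh' hc (sb, tb)
  have hp'0 : p / (p - 1) ≠ 0 := (div_pos (by linarith) (by linarith)).ne'
  rw [← map_mk_eq, heuler, hp', one_div, inv_mul_cancel_left₀ hp'0]
end

section
/- Let p > 2, p′ = p/(p−1), a > 0 and 0 ≤ b ≤ p − 1, and let h be the Legendre transform of f(s,t) = (a/p)(|s|^p + 2b|s|^{p/2}|t|^{p/2} + |t|^p). Then for every real s̄ one has h(s̄, 0) = (a^{1−p′}/p′) |s̄|^{p′}. -/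
/-!
On the axis `t̄ = 0` the linear term no longer sees `t`, and since `b ≥ 0` the coupling and
`|t|^p` only make `f` larger, so the supremum is attained with `t = 0`. It thus reduces to the
one-dimensional Legendre transform of `(a/p)|s|^p`, which is `(a^(1-p')/p')|s̄|^(p')`: the upper
bound is Young's inequality applied to `a^(1/p)|s|` and `a^(-1/p)|s̄|`, and equality holds at
`s = sign(s̄) (|s̄|/a)^(p'-1)`.
-/

open Real

namespace Real.HolderConjugate

variable {p q a : ℝ}

theorem mul_le_rpow_add_rpow (hpq : p.HolderConjugate q) (ha : 0 < a) {x y : ℝ}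
    (hx : 0 ≤ x) (hy : 0 ≤ y) :
    x * y ≤ a / p * x ^ p + a ^ (1 - q) / q * y ^ q := by
  have hY := young_inequality_of_nonneg (by positivity : 0 ≤ a ^ (1 / p) * x)
    (by positivity : 0 ≤ a ^ (-(1 / p)) * y) hpq
  have hprod : a ^ (1 / p) * x * (a ^ (-(1 / p)) * y) = x * y := by
    rw [mul_mul_mul_comm, ← rpow_add ha, add_neg_cancel, rpow_zero, one_mul]
  have hxp : (a ^ (1 / p) * x) ^ p = a * x ^ p := by
    rw [mul_rpow (by positivity) hx, ← rpow_mul ha.le, one_div_mul_cancel hpq.ne_zero, rpow_one]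
  have hyq : (a ^ (-(1 / p)) * y) ^ q = a ^ (1 - q) * y ^ q := by
    rw [mul_rpow (by positivity) hy, ← rpow_mul ha.le, neg_mul, one_div_mul_eq_div,
      hpq.symm.div_conj_eq_sub_one, neg_sub]
  rwa [hprod, hxp, hyq, ← div_mul_eq_mul_div, ← div_mul_eq_mul_div] at hY

theorem mul_sub_rpow_abs_le (hpq : p.HolderConjugate q) (ha : 0 < a) (s y : ℝ) :
    s * y - a / p * |s| ^ p ≤ a ^ (1 - q) / q * |y| ^ q := by
  have hsy : s * y ≤ |s| * |y| := (le_abs_self _).trans (abs_mul s y).le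
  linarith [hpq.mul_le_rpow_add_rpow ha (abs_nonneg s) (abs_nonneg y)]

theorem exists_mul_sub_rpow_abs_eq (hpq : p.HolderConjugate q) (ha : 0 < a) (y : ℝ) :
    ∃ s, s * y - a / p * |s| ^ p = a ^ (1 - q) / q * |y| ^ q := by
  set u := |y| / a with hu
  have hu0 : 0 ≤ u := by positivity
  have hy : |y| = a * u := by rw [hu, mul_div_cancel₀ _ ha.ne']
  set r := u ^ (q - 1)
  have hr0 : 0 ≤ r := by positivity
  have hrp : r ^ p = u ^ q := by
    rw [← rpow_mul hu0, hpq.symm.sub_one_mul_conj]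
  have hry : r * |y| = a * u ^ q := by
    rw [hy, mul_left_comm, ← rpow_add_one' hu0 (by simpa using hpq.symm.ne_zero), sub_add_cancel]
  have hmax : r * |y| - a / p * |r| ^ p = a ^ (1 - q) / q * |y| ^ q := by
    rw [abs_of_nonneg hr0, hrp, hry, hy, mul_rpow ha.le hu0, rpow_sub ha, rpow_one]
    field_simp
    linear_combination -u ^ q * hpq.inv_add_inv_eq_one
  rcases le_total 0 y with hy0 | hy0
  · exact ⟨r, by rwa [abs_of_nonneg hy0] at hmax ⊢⟩
  · exact ⟨-r, by rwa [abs_neg, neg_mul_comm, ← abs_of_nonpos hy0]⟩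

end Real.HolderConjugate

theorem stmt_9_general (p p' a b : ℝ) (hp : 2 < p) (hp' : p' = p / (p - 1)) (ha : 0 < a)
    (hb0 : 0 ≤ b)
    (h : ℝ → ℝ → ℝ)
    (hh : ∀ sb tb : ℝ, h sb tb = ⨆ st : ℝ × ℝ,
      (st.1 * sb + st.2 * tb -
        (a / p) * (|st.1| ^ p + 2 * b * |st.1| ^ (p / 2) * |st.2| ^ (p / 2) + |st.2| ^ p)))
    (sb : ℝ) :
    h sb 0 = (a ^ (1 - p') / p') * |sb| ^ p' := by
  have hpq : p.HolderConjugate p' := hp' ▸ .conjExponent (by linarith)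
  rw [hh]
  refine ciSup_eq_of_forall_le_of_forall_lt_exists_gt (fun ⟨s, t⟩ ↦ ?_) fun w hw ↦ ?_
  · have hcross : 0 ≤ 2 * b * |s| ^ (p / 2) * |t| ^ (p / 2) + |t| ^ p := by positivity
    have hf : a / p * |s| ^ p ≤
        a / p * (|s| ^ p + 2 * b * |s| ^ (p / 2) * |t| ^ (p / 2) + |t| ^ p) := by
      gcongr (a / p) * ?_
      linarith
    linarith [hpq.mul_sub_rpow_abs_le ha s sb]
  · obtain ⟨s, hs⟩ := hpq.exists_mul_sub_rpow_abs_eq ha sb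
    refine ⟨(s, 0), hw.trans_eq ?_⟩
    have hp0 : p ≠ 0 := hpq.ne_zero
    have hp20 : p / 2 ≠ 0 := by positivity
    simp only [mul_zero, add_zero, abs_zero, zero_rpow hp0, zero_rpow hp20]
    exact hs.symm

/-- the Legendre transform `h` of `f` satisfies
`h(s̄, 0) = (a^(1-p')/p') |s̄|^(p')` for every real `s̄`. -/
theorem stmt_9 (p p' a b : ℝ) (hp : 2 < p) (hp' : p' = p / (p - 1)) (ha : 0 < a)
    (hb0 : 0 ≤ b) (hb1 : b ≤ p - 1)
    (h : ℝ → ℝ → ℝ)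
    (hh : ∀ sb tb : ℝ, h sb tb = ⨆ st : ℝ × ℝ,
      (st.1 * sb + st.2 * tb -
        (a / p) * (|st.1| ^ p + 2 * b * |st.1| ^ (p / 2) * |st.2| ^ (p / 2) + |st.2| ^ p)))
    (sb : ℝ) :
    h sb 0 = (a ^ (1 - p') / p') * |sb| ^ p' :=
  stmt_9_general p p' a b hp hp' ha hb0 h hh sb
end

section
/- Let p > 2, p′ = p/(p−1), a > 0 and 0 ≤ b ≤ p − 1, and let h be the Legendre transform of f(s,t) = (a/p)(|s|^p + 2b|s|^{p/2}|t|^{p/2} + |t|^p). Then for every real s̄ one has h(s̄, s̄) = (2/p′) · ( a(1+b) )^{1−p′} |s̄|^{p′}. -/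
/-!
The pairing `s s̄ + t s̄` is at most `2 m |s̄|` with `m = (|s| + |t|)/2`, and the two-point
inequality `2 (1 + b) m ^ p ≤ |s| ^ p + 2 b |s| ^ (p/2) |t| ^ (p/2) + |t| ^ p` bounds `f` below
by `(2 a (1 + b) / p) m ^ p`; Young's inequality then bounds `h(s̄, s̄)`, with equality on the
diagonal `s = t`. The two-point inequality is affine in `b`, so only `b = 0` (convexity of
`x ^ p`) and `b = p - 1` need proof. For the latter, writing `u = e^x`, `v = e^y` and
`τ = (x - y)/2` turns it into `p cosh τ ^ p ≤ cosh (p τ) + p - 1`, which holds because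
`(cosh (p τ) + p - 1) / cosh τ ^ p` increases on `[0, ∞)`: its derivative is a positive multiple
of `sinh ((p-1) τ) - (p-1) sinh τ`.
-/

open Real Set

lemma mul_sinh_le_sinh_mul {k τ : ℝ} (hk : 1 ≤ k) (hτ : 0 ≤ τ) :
    k * sinh τ ≤ sinh (k * τ) := by
  have hderiv : ∀ x, HasDerivAt (fun x => sinh (k * x) - k * sinh x)
      (k * (cosh (k * x) - cosh x)) x := fun x =>
    (((hasDerivAt_id' x).const_mul k).sinh.sub ((hasDerivAt_sinh x).const_mul k)).congr_deriv
      (by ring)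
  have hmono : MonotoneOn (fun x => sinh (k * x) - k * sinh x) (Ici 0) := by
    refine monotoneOn_of_hasDerivWithinAt_nonneg (convex_Ici 0)
      (fun x _ => (hderiv x).continuousAt.continuousWithinAt)
      (fun x _ => (hderiv x).hasDerivWithinAt) fun x hx => ?_
    rw [interior_Ici, mem_Ioi] at hx
    have : cosh x ≤ cosh (k * x) := cosh_le_cosh.2 (by
      rw [abs_of_pos hx, abs_of_pos (by positivity)]; nlinarith)
    nlinarith
  simpa using hmono self_mem_Ici hτ hτ

lemma mul_cosh_rpow_le {p : ℝ} (hp : 2 ≤ p) (τ : ℝ) :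
    p * cosh τ ^ p ≤ cosh (p * τ) + (p - 1) := by
  wlog hτ : 0 ≤ τ generalizing τ
  · simpa using this (-τ) (by linarith)
  set ψ : ℝ → ℝ := fun x => (cosh (p * x) + (p - 1)) * cosh x ^ (-p)
  have hderiv : ∀ x, HasDerivAt ψ
      (p * cosh x ^ (-p - 1) * (sinh ((p - 1) * x) - (p - 1) * sinh x)) x := fun x => by
    have hc := cosh_pos x
    refine ((((hasDerivAt_id' x).const_mul p).cosh.add_const (p - 1)).mul
      ((hasDerivAt_cosh x).rpow_const (p := -p) (Or.inl hc.ne'))).congr_deriv ?_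
    rw [show -p = -p - 1 + 1 by ring, rpow_add hc, rpow_one,
      show (p - 1) * x = p * x - x by ring, sinh_sub]
    ring_nf
  have hmono : MonotoneOn ψ (Ici 0) := by
    refine monotoneOn_of_hasDerivWithinAt_nonneg (convex_Ici 0)
      (fun x _ => (hderiv x).continuousAt.continuousWithinAt)
      (fun x _ => (hderiv x).hasDerivWithinAt) fun x hx => ?_
    rw [interior_Ici, mem_Ioi] at hx
    have := mul_sinh_le_sinh_mul (by linarith : 1 ≤ p - 1) hx.le
    have : 0 ≤ p * cosh x ^ (-p - 1) := by positivity
    nlinarith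
  have h0 : p ≤ ψ τ := by simpa [ψ] using hmono self_mem_Ici hτ hτ
  have hc := cosh_pos τ
  calc p * cosh τ ^ p ≤ ψ τ * cosh τ ^ p := by gcongr
    _ = cosh (p * τ) + (p - 1) := by
      simp only [ψ, mul_assoc, ← rpow_add hc, neg_add_cancel, rpow_zero, mul_one]

lemma exp_add_exp (x y : ℝ) : exp x + exp y = 2 * exp ((x + y) / 2) * cosh ((x - y) / 2) := by
  have h : ∀ z, exp ((x + y) / 2) * exp z = exp ((x + y) / 2 + z) := fun z => (exp_add _ _).symm
  rw [cosh_eq, mul_assoc, mul_div_assoc', mul_add, h, h, mul_div_cancel₀ _ two_ne_zero]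
  ring_nf

lemma two_mul_mul_half_rpow_le {p u : ℝ} (hp : 2 ≤ p) (hu : 0 ≤ u) :
    2 * p * (u / 2) ^ p ≤ u ^ p := by
  have hbern : 1 + (p - 1) * 1 ≤ (1 + 1 : ℝ) ^ (p - 1) :=
    one_add_mul_self_le_rpow_one_add (by norm_num) (by linarith)
  rw [one_add_one_eq_two, rpow_sub_one two_ne_zero] at hbern
  calc 2 * p * (u / 2) ^ p = 2 * p / 2 ^ p * u ^ p := by rw [div_rpow hu zero_le_two]; ring
    _ ≤ 1 * u ^ p := by
      gcongr
      rw [div_le_one (by positivity)]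
      linarith
    _ = u ^ p := one_mul _

lemma two_mul_half_add_rpow_le {p u v : ℝ} (hp : 1 ≤ p) (hu : 0 ≤ u) (hv : 0 ≤ v) :
    2 * ((u + v) / 2) ^ p ≤ u ^ p + v ^ p := by
  have := (convexOn_rpow hp).2 hu hv (by norm_num : (0 : ℝ) ≤ 1 / 2)
    (by norm_num : (0 : ℝ) ≤ 1 / 2) (add_halves 1)
  simp only [smul_eq_mul] at this
  rw [add_div, div_eq_inv_mul, div_eq_inv_mul]
  norm_num at this ⊢
  linarith

lemma two_mul_mul_half_add_rpow_le {p u v : ℝ} (hp : 2 ≤ p) (hu : 0 ≤ u) (hv : 0 ≤ v) :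
    2 * p * ((u + v) / 2) ^ p ≤ u ^ p + v ^ p + 2 * (p - 1) * u ^ (p / 2) * v ^ (p / 2) := by
  have hp0 : p / 2 ≠ 0 := by positivity
  rcases hu.eq_or_lt with rfl | hu
  · simpa [zero_rpow hp0, zero_rpow (by positivity : p ≠ 0)] using two_mul_mul_half_rpow_le hp hv
  rcases hv.eq_or_lt with rfl | hv
  · simpa [zero_rpow hp0, zero_rpow (by positivity : p ≠ 0)]
      using two_mul_mul_half_rpow_le hp hu.le
  obtain ⟨x, rfl⟩ : ∃ x, exp x = u := ⟨log u, exp_log hu⟩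
  obtain ⟨y, rfl⟩ : ∃ y, exp y = v := ⟨log v, exp_log hv⟩
  have hmean : (exp x + exp y) / 2 = exp ((x + y) / 2) * cosh ((x - y) / 2) := by
    rw [exp_add_exp]; ring
  have hsum : exp x ^ p + exp y ^ p = 2 * exp ((x + y) / 2 * p) * cosh (p * ((x - y) / 2)) := by
    rw [← exp_mul, ← exp_mul, exp_add_exp]; ring_nf
  have hprod : exp x ^ (p / 2) * exp y ^ (p / 2) = exp ((x + y) / 2 * p) := by
    rw [← exp_mul, ← exp_mul, ← exp_add]; ring_nf
  have hcosh := mul_cosh_rpow_le hp ((x - y) / 2)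
  rw [hmean, mul_rpow (exp_pos _).le (cosh_pos _).le, ← exp_mul, hsum, mul_assoc _ (exp x ^ _),
    hprod]
  have := exp_pos ((x + y) / 2 * p)
  nlinarith

lemma two_mul_one_add_mul_half_add_rpow_le {p b u v : ℝ} (hp : 2 ≤ p) (hb0 : 0 ≤ b)
    (hb1 : b ≤ p - 1) (hu : 0 ≤ u) (hv : 0 ≤ v) :
    2 * (1 + b) * ((u + v) / 2) ^ p ≤ u ^ p + 2 * b * u ^ (p / 2) * v ^ (p / 2) + v ^ p := by
  have h₀ := mul_le_mul_of_nonneg_left (two_mul_half_add_rpow_le (one_le_two.trans hp) hu hv)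
    (sub_nonneg.2 hb1)
  have h₁ := mul_le_mul_of_nonneg_left (two_mul_mul_half_add_rpow_le hp hu hv) hb0
  refine le_of_mul_le_mul_left ?_ (by linarith : 0 < p - 1)
  linarith

lemma mul_sub_div_mul_rpow_le {p q A z M : ℝ} (hpq : p.HolderConjugate q) (hA : 0 < A)
    (hz : 0 ≤ z) (hM : 0 ≤ M) : z * M - A / p * z ^ p ≤ A ^ (1 - q) * M ^ q / q := by
  have hyoung := young_inequality_of_nonneg (mul_nonneg (rpow_nonneg hA.le (1 / p)) hz)
    (mul_nonneg (rpow_nonneg hA.le (-(1 / p))) hM) hpq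
  have hexp : -(1 / p) * q = 1 - q := by
    field_simp [hpq.ne_zero]
    linarith [hpq.mul_eq_add]
  rwa [mul_mul_mul_comm, ← rpow_add hA, add_neg_cancel, rpow_zero, one_mul,
    mul_rpow (rpow_nonneg hA.le _) hz, mul_rpow (rpow_nonneg hA.le _) hM, ← rpow_mul hA.le,
    ← rpow_mul hA.le, hexp, one_div_mul_cancel hpq.ne_zero, rpow_one, ← sub_nonneg,
    show A * z ^ p / p + A ^ (1 - q) * M ^ q / q - z * M
      = A ^ (1 - q) * M ^ q / q - (z * M - A / p * z ^ p) by ring, sub_nonneg] at hyoung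

lemma mul_sub_div_mul_rpow_eq {p q A M : ℝ} (hpq : p.HolderConjugate q) (hA : 0 < A)
    (hM : 0 ≤ M) :
    (M / A) ^ (q - 1) * M - A / p * ((M / A) ^ (q - 1)) ^ p = A ^ (1 - q) * M ^ q / q := by
  have hMA : 0 ≤ M / A := div_nonneg hM hA.le
  have h₁ : (M / A) ^ (q - 1) * M = A * (M / A) ^ q := by
    rw [← sub_add_cancel q 1, rpow_add_one' hMA (by simp [hpq.symm.ne_zero]),
      add_sub_cancel_right]
    field_simp
  have h₂ : ((M / A) ^ (q - 1)) ^ p = (M / A) ^ q := by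
    rw [← rpow_mul hMA, hpq.symm.sub_one_mul_conj]
  have h₃ : A * (M / A) ^ q = A ^ (1 - q) * M ^ q := by
    rw [div_rpow hM hA.le, rpow_sub hA, rpow_one]; ring
  rw [h₁, h₂, ← h₃]
  field_simp [hpq.ne_zero, hpq.symm.ne_zero]
  linear_combination (M / A) ^ q * hpq.sub_one_mul_conj

lemma pairing_sub_potential_le {p q a b : ℝ} (hpq : p.HolderConjugate q) (hp : 2 ≤ p)
    (ha : 0 < a) (hb0 : 0 ≤ b) (hb1 : b ≤ p - 1) (sb s t : ℝ) :
    s * sb + t * sb - a / p * (|s| ^ p + 2 * b * |s| ^ (p / 2) * |t| ^ (p / 2) + |t| ^ p)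
      ≤ 2 / q * (a * (1 + b)) ^ (1 - q) * |sb| ^ q := by
  have hpair : s * sb + t * sb ≤ 2 * ((|s| + |t|) / 2 * |sb|) := by
    have hs := le_abs_self (s * sb)
    have ht := le_abs_self (t * sb)
    rw [abs_mul] at hs ht
    linarith
  have hpotential := mul_le_mul_of_nonneg_left
    (two_mul_one_add_mul_half_add_rpow_le hp hb0 hb1 (abs_nonneg s) (abs_nonneg t))
    (div_pos ha hpq.pos).le
  have hyoung := mul_sub_div_mul_rpow_le hpq (by positivity : 0 < a * (1 + b))
    (by positivity : 0 ≤ (|s| + |t|) / 2) (abs_nonneg sb)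
  linear_combination hpair + hpotential + 2 * hyoung

lemma exists_pairing_sub_potential_eq {p q a b : ℝ} (hpq : p.HolderConjugate q) (ha : 0 < a)
    (hb0 : 0 ≤ b) (sb : ℝ) :
    ∃ s : ℝ, s * sb + s * sb
        - a / p * (|s| ^ p + 2 * b * |s| ^ (p / 2) * |s| ^ (p / 2) + |s| ^ p)
      = 2 / q * (a * (1 + b)) ^ (1 - q) * |sb| ^ q := by
  have hA : 0 < a * (1 + b) := by positivity
  set r := (|sb| / (a * (1 + b))) ^ (q - 1)
  have hr : 0 ≤ r := by positivity
  obtain ⟨s, hs_abs, hs_mul⟩ : ∃ s, |s| = r ∧ s * sb = r * |sb| := by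
    rcases le_total 0 sb with h | h
    · exact ⟨r, abs_of_nonneg hr, by rw [abs_of_nonneg h]⟩
    · exact ⟨-r, by rw [abs_neg, abs_of_nonneg hr], by rw [abs_of_nonpos h]; ring⟩
  have hhalf : r ^ (p / 2) * r ^ (p / 2) = r ^ p := by
    rw [← rpow_add' hr (by simp [hpq.ne_zero]), add_halves]
  refine ⟨s, ?_⟩
  rw [hs_mul, hs_abs, mul_assoc (2 * b), hhalf]
  linear_combination 2 * mul_sub_div_mul_rpow_eq (p := p) hpq hA (abs_nonneg sb)

/-- the Legendre transform `h` of `f` satisfies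
`h(s̄, s̄) = (2/p') (a(1+b))^(1-p') |s̄|^(p')` for every real `s̄`. -/
theorem stmt_10 (p p' a b : ℝ) (hp : 2 < p) (hp' : p' = p / (p - 1)) (ha : 0 < a)
    (hb0 : 0 ≤ b) (hb1 : b ≤ p - 1)
    (h : ℝ → ℝ → ℝ)
    (hh : ∀ sb tb : ℝ, h sb tb = ⨆ st : ℝ × ℝ,
      (st.1 * sb + st.2 * tb -
        (a / p) * (|st.1| ^ p + 2 * b * |st.1| ^ (p / 2) * |st.2| ^ (p / 2) + |st.2| ^ p)))
    (sb : ℝ) :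
    h sb sb = (2 / p') * (a * (1 + b)) ^ (1 - p') * |sb| ^ p' := by
  have hpq : p.HolderConjugate p' := (holderConjugate_iff_eq_conjExponent (by linarith)).2 hp'
  have hle : ∀ st : ℝ × ℝ, st.1 * sb + st.2 * sb
      - a / p * (|st.1| ^ p + 2 * b * |st.1| ^ (p / 2) * |st.2| ^ (p / 2) + |st.2| ^ p)
      ≤ 2 / p' * (a * (1 + b)) ^ (1 - p') * |sb| ^ p' := fun st =>
    pairing_sub_potential_le hpq hp.le ha hb0 hb1 sb st.1 st.2
  obtain ⟨s, hs⟩ := exists_pairing_sub_potential_eq hpq ha hb0 sb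
  rw [hh]
  exact le_antisymm (ciSup_le hle) (hs ▸ le_ciSup ⟨_, forall_mem_range.2 hle⟩ (s, s))
end

section
/- Let p > 2, p′ = p/(p−1), a > 0 and 0 ≤ b ≤ p − 1, and let h be the Legendre transform of f(s,t) = (a/p)(|s|^p + 2b|s|^{p/2}|t|^{p/2} + |t|^p). Then for all real s̄, t̄ one has (1/p′) ( a(1+b) )^{1−p′} ( |s̄|^{p′} + |t̄|^{p′} ) ≤ h(s̄, t̄) ≤ (1/p′) a^{1−p′} ( |s̄|^{p′} + |t̄|^{p′} ). -/
/-!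
Since `0 ≤ 2 |s|^(p/2) |t|^(p/2) ≤ |s|^p + |t|^p`, the function `f` lies between the separable
functions `(c/p)(|s|^p + |t|^p)` for `c = a` and `c = a(1+b)`. The Legendre transform reverses
this order, and the transform of `s ↦ (c/p)|s|^p` is `s̄ ↦ (1/p') c^(1-p') |s̄|^p'`: the upper bound
is a rescaled Young inequality, and equality is attained at an explicit maximiser.
-/

open Real

theorem mul_sub_rpow_le {p q c : ℝ} (hpq : p.HolderConjugate q) (hc : 0 < c) (x y : ℝ) :
    x * y - c / p * |x| ^ p ≤ 1 / q * c ^ (1 - q) * |y| ^ q := by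
  -- Young's inequality for `(c ^ (1/p) * |x|) * (c ^ (-1/p) * |y|)`
  have hk : (c ^ (1 / p)) ^ p = c := by
    rw [← rpow_mul hc.le, one_div_mul_cancel hpq.ne_zero, rpow_one]
  have hm : (c ^ (-(1 / p))) ^ q = c ^ (1 - q) := by
    rw [← rpow_mul hc.le]
    congr 1
    field_simp [hpq.ne_zero]
    linarith [hpq.mul_eq_add]
  have hkm : c ^ (1 / p) * c ^ (-(1 / p)) = 1 := by rw [← rpow_add hc]; simp
  have young := young_inequality_of_nonneg (by positivity : 0 ≤ c ^ (1 / p) * |x|)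
    (by positivity : 0 ≤ c ^ (-(1 / p)) * |y|) hpq
  rw [mul_rpow (by positivity) (abs_nonneg x), mul_rpow (by positivity) (abs_nonneg y), hk, hm,
    mul_mul_mul_comm, hkm, one_mul] at young
  have : x * y ≤ |x| * |y| := (le_abs_self _).trans_eq (abs_mul x y)
  linarith [show c / p * |x| ^ p = c * |x| ^ p / p by ring,
    show 1 / q * c ^ (1 - q) * |y| ^ q = c ^ (1 - q) * |y| ^ q / q by ring]

theorem exists_mul_sub_rpow_eq {p q c : ℝ} (hpq : p.HolderConjugate q) (hc : 0 < c) (y : ℝ) :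
    ∃ x, x * y - c / p * |x| ^ p = 1 / q * c ^ (1 - q) * |y| ^ q := by
  obtain ⟨x, hx⟩ : ∃ x, x * |y| - c / p * |x| ^ p = 1 / q * c ^ (1 - q) * |y| ^ q := by
    -- `(|y| / c) ^ (q - 1)` is where the derivative `|y| - c * x ^ (p - 1)` vanishes
    set u := |y| / c
    have hu : 0 ≤ u := by positivity
    have hy : |y| = c * u := (mul_div_cancel₀ _ hc.ne').symm
    have hq : 0 < q := hpq.symm.pos
    refine ⟨u ^ (q - 1), ?_⟩
    have hxp : (u ^ (q - 1)) ^ p = u ^ q := by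
      rw [← rpow_mul hu]
      congr 1
      linarith [hpq.mul_eq_add]
    have hxy : u ^ (q - 1) * |y| = c * u ^ q := by
      rw [hy, mul_left_comm, ← rpow_add_one' hu (by simpa using hq.ne')]
      ring_nf
    have hyq : c ^ (1 - q) * |y| ^ q = c * u ^ q := by
      rw [hy, mul_rpow hc.le hu, ← mul_assoc, ← rpow_add hc]
      simp
    rw [abs_of_nonneg (rpow_nonneg hu _), hxp, hxy, mul_assoc, hyq]
    linear_combination (-(c * u ^ q)) * hpq.inv_add_inv_eq_one
  rcases le_total 0 y with hy | hy
  · exact ⟨x, by rw [← hx, abs_of_nonneg hy]⟩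
  · exact ⟨-x, by rw [← hx, abs_neg, abs_of_nonpos hy]; ring⟩

theorem two_mul_rpow_half_mul_rpow_half_le {u v : ℝ} (hu : 0 ≤ u) (hv : 0 ≤ v) (r : ℝ) :
    2 * u ^ (r / 2) * v ^ (r / 2) ≤ u ^ r + v ^ r := by
  have hsq : ∀ w : ℝ, 0 ≤ w → w ^ r = (w ^ (r / 2)) ^ 2 := fun w hw => by
    rw [← rpow_natCast, ← rpow_mul hw]; norm_num
  rw [hsq u hu, hsq v hv]
  exact two_mul_le_add_sq _ _

theorem rpow_add_two_mul_rpow_half_le {u v b : ℝ} (hu : 0 ≤ u) (hv : 0 ≤ v) (hb : 0 ≤ b) (r : ℝ) :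
    u ^ r + 2 * b * u ^ (r / 2) * v ^ (r / 2) + v ^ r ≤ (1 + b) * (u ^ r + v ^ r) := by
  nlinarith [mul_le_mul_of_nonneg_left (two_mul_rpow_half_mul_rpow_half_le hu hv r) hb]

theorem stmt_11_general (p p' a b : ℝ) (hp : 2 < p) (hp' : p' = p / (p - 1)) (ha : 0 < a)
    (hb0 : 0 ≤ b)
    (h : ℝ → ℝ → ℝ)
    (hh : ∀ sb tb : ℝ, h sb tb = ⨆ st : ℝ × ℝ,
      (st.1 * sb + st.2 * tb -
        (a / p) * (|st.1| ^ p + 2 * b * |st.1| ^ (p / 2) * |st.2| ^ (p / 2) + |st.2| ^ p)))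
    (sb tb : ℝ) :
    (1 / p') * (a * (1 + b)) ^ (1 - p') * (|sb| ^ p' + |tb| ^ p') ≤ h sb tb ∧
      h sb tb ≤ (1 / p') * a ^ (1 - p') * (|sb| ^ p' + |tb| ^ p') := by
  have hpq : p.HolderConjugate p' := (holderConjugate_iff_eq_conjExponent (by linarith)).2 hp'
  have hap : 0 ≤ a / p := div_nonneg ha.le hpq.nonneg
  have le_upper : ∀ st : ℝ × ℝ, st.1 * sb + st.2 * tb -
      (a / p) * (|st.1| ^ p + 2 * b * |st.1| ^ (p / 2) * |st.2| ^ (p / 2) + |st.2| ^ p) ≤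
      (1 / p') * a ^ (1 - p') * (|sb| ^ p' + |tb| ^ p') := fun ⟨s, t⟩ => by
    have : 0 ≤ a / p * (2 * b * |s| ^ (p / 2) * |t| ^ (p / 2)) := by positivity
    linarith [mul_sub_rpow_le hpq ha s sb, mul_sub_rpow_le hpq ha t tb]
  obtain ⟨s, hs⟩ := exists_mul_sub_rpow_eq hpq (by positivity : 0 < a * (1 + b)) sb
  obtain ⟨t, ht⟩ := exists_mul_sub_rpow_eq hpq (by positivity : 0 < a * (1 + b)) tb
  have hf := mul_le_mul_of_nonneg_left
    (rpow_add_two_mul_rpow_half_le (abs_nonneg s) (abs_nonneg t) hb0 p) hap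
  rw [hh]
  refine ⟨le_trans ?_ (le_ciSup ⟨_, Set.forall_mem_range.2 le_upper⟩ (s, t)), ciSup_le le_upper⟩
  linarith [show a / p * ((1 + b) * (|s| ^ p + |t| ^ p)) =
    a * (1 + b) / p * |s| ^ p + a * (1 + b) / p * |t| ^ p by ring]

/-- two-sided bound for the Legendre transform `h` of `f`:
`(1/p')(a(1+b))^(1-p')(|s̄|^(p') + |t̄|^(p')) ≤ h(s̄,t̄) ≤ (1/p') a^(1-p') (|s̄|^(p') + |t̄|^(p'))`. -/
theorem stmt_11 (p p' a b : ℝ) (hp : 2 < p) (hp' : p' = p / (p - 1)) (ha : 0 < a)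
    (hb0 : 0 ≤ b) (hb1 : b ≤ p - 1)
    (h : ℝ → ℝ → ℝ)
    (hh : ∀ sb tb : ℝ, h sb tb = ⨆ st : ℝ × ℝ,
      (st.1 * sb + st.2 * tb -
        (a / p) * (|st.1| ^ p + 2 * b * |st.1| ^ (p / 2) * |st.2| ^ (p / 2) + |st.2| ^ p)))
    (sb tb : ℝ) :
    (1 / p') * (a * (1 + b)) ^ (1 - p') * (|sb| ^ p' + |tb| ^ p') ≤ h sb tb ∧
      h sb tb ≤ (1 / p') * a ^ (1 - p') * (|sb| ^ p' + |tb| ^ p') :=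
  stmt_11_general p p' a b hp hp' ha hb0 h hh sb tb
end

section
/- For every real p ≥ 4 and every η ≥ 0 one has (1 + η²)^{p/2} ≥ 1 + (2^{p/2} − 2) η^{p/2} + η^p. -/
open Real Set

/-- Bernoulli consequence: `(q-1)x ≤ x^(q-1) + (q-2)` for `x > 0`, `q ≥ 2`. -/
lemma aux_bern {x q : ℝ} (hx : 0 < x) (hq : 2 ≤ q) :
    (q - 1) * x ≤ x ^ (q - 1) + (q - 2) := by
  have h := one_add_mul_self_le_rpow_one_add (s := x - 1) (by linarith) (p := q - 1) (by linarith)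
  have : (1 : ℝ) + (x - 1) = x := by ring
  rw [this] at h
  linarith

/-- Lemma A: `1 - x^q ≤ (1-x)(1+x)^(q-1)` for `0 < x ≤ 1`, `q ≥ 2`. -/
lemma aux_A {x q : ℝ} (hx : 0 < x) (hx1 : x ≤ 1) (hq : 2 ≤ q) :
    1 - x ^ q ≤ (1 - x) * (1 + x) ^ (q - 1) := by
  have hb : 1 + (q - 1) * x ≤ (1 + x) ^ (q - 1) :=
    one_add_mul_self_le_rpow_one_add (by linarith) (by linarith)
  have h1 : (q - 1) * x ≤ x ^ (q - 1) + (q - 2) := aux_bern hx hq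
  have h2 : x ^ (q - 1) * x = x ^ q := by
    rw [← Real.rpow_add_one hx.ne' (q - 1)]; ring_nf
  nlinarith [mul_le_mul_of_nonneg_right hb (by linarith : (0:ℝ) ≤ 1 - x),
    mul_le_mul_of_nonneg_right h1 hx.le]

/-- Key lemma on `(0,1]`. -/
lemma aux_key {q : ℝ} (hq : 2 ≤ q) {x : ℝ} (hx : 0 < x) (hx1 : x ≤ 1) :
    1 + x ^ q + ((2:ℝ) ^ q - 2) * x ^ (q/2) ≤ (1 + x) ^ q := by
  set f : ℝ → ℝ := fun y => ((1 + y) ^ q - 1 - y ^ q) * y ^ (-(q/2)) with hf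
  -- derivative of f at positive points
  have hderiv : ∀ y : ℝ, 0 < y →
      HasDerivAt f ((1 * q * (1 + y) ^ (q-1) - q * y ^ (q-1)) * y ^ (-(q/2))
        + ((1 + y) ^ q - 1 - y ^ q) * (-(q/2) * y ^ (-(q/2) - 1))) y := by
    intro y hy
    have h1 : HasDerivAt (fun y : ℝ => (1 + y) ^ q) (1 * q * (1 + y) ^ (q-1)) y := by
      have : HasDerivAt (fun y : ℝ => 1 + y) 1 y := (hasDerivAt_id y).const_add 1
      exact this.rpow_const (Or.inl (by positivity))
    have h2 : HasDerivAt (fun y : ℝ => y ^ q) (q * y ^ (q-1)) y :=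
      Real.hasDerivAt_rpow_const (Or.inl hy.ne')
    have h3 : HasDerivAt (fun y : ℝ => y ^ (-(q/2))) (-(q/2) * y ^ (-(q/2) - 1)) y :=
      Real.hasDerivAt_rpow_const (Or.inl hy.ne')
    exact ((h1.sub_const 1).sub h2).mul h3
  -- f is antitone on [x, 1]
  have hanti : AntitoneOn f (Icc x 1) := by
    apply antitoneOn_of_deriv_nonpos (convex_Icc x 1)
    · intro y hy
      exact (hderiv y (lt_of_lt_of_le hx hy.1)).continuousAt.continuousWithinAt
    · intro y hy
      rw [interior_Icc] at hy
      exact (hderiv y (hx.trans hy.1)).differentiableAt.differentiableWithinAt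
    · intro y hy
      rw [interior_Icc] at hy
      have hy0 : 0 < y := hx.trans hy.1
      rw [(hderiv y hy0).deriv]
      -- show the derivative is nonpositive
      have hC : y ^ (-(q/2)) = y ^ (-(q/2) - 1) * y := by
        rw [← Real.rpow_add_one hy0.ne' (-(q/2) - 1)]; ring_nf
      have hyq : y ^ (q-1) * y = y ^ q := by
        rw [← Real.rpow_add_one hy0.ne' (q-1)]; ring_nf
      have hyq' : (1 + y) ^ (q-1) * (1 + y) = (1 + y) ^ q := by
        rw [← Real.rpow_add_one (by positivity : (1:ℝ)+y ≠ 0) (q-1)]; ring_nf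
      have hA : 1 - y ^ q ≤ (1 - y) * (1 + y) ^ (q-1) := aux_A hy0 hy.2.le hq
      have hD : 0 < y ^ (-(q/2) - 1) := Real.rpow_pos_of_pos hy0 _
      -- key algebraic inequality: 2*y*(1+y)^(q-1) - 2*y^q ≤ (1+y)^q - 1 - y^q
      have hkey : 2 * (y * (1 + y) ^ (q-1)) - 2 * y ^ q ≤ (1 + y) ^ q - 1 - y ^ q := by
        nlinarith [hA]
      rw [hC]
      have hfinal : (1 * q * (1 + y) ^ (q-1) - q * y ^ (q-1)) * (y ^ (-(q/2) - 1) * y)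
          + ((1 + y) ^ q - 1 - y ^ q) * (-(q/2) * y ^ (-(q/2) - 1))
          = (q/2) * y ^ (-(q/2) - 1) *
            ((2 * (y * (1 + y) ^ (q-1)) - 2 * y ^ q) - ((1 + y) ^ q - 1 - y ^ q)) := by
        rw [← hyq]; ring
      rw [hfinal]
      exact mul_nonpos_of_nonneg_of_nonpos
        (mul_nonneg (by linarith : (0:ℝ) ≤ q/2) hD.le) (by linarith)
  have h1mem : (1:ℝ) ∈ Icc x 1 := ⟨hx1, le_refl 1⟩
  have hxmem : x ∈ Icc x 1 := ⟨le_refl x, hx1⟩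
  have hle : f 1 ≤ f x := hanti hxmem h1mem hx1
  have hf1 : f 1 = (2:ℝ) ^ q - 2 := by
    simp only [hf]
    rw [Real.one_rpow, Real.one_rpow]
    norm_num
    ring
  rw [hf1] at hle
  -- multiply by x^(q/2)
  have hxq2 : 0 < x ^ (q/2) := Real.rpow_pos_of_pos hx _
  have hmul := mul_le_mul_of_nonneg_right hle hxq2.le
  have hcancel : x ^ (-(q/2)) * x ^ (q/2) = 1 := by
    rw [← Real.rpow_add hx]; norm_num
  have : ((1 + x) ^ q - 1 - x ^ q) * x ^ (-(q/2)) * x ^ (q/2)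
      = (1 + x) ^ q - 1 - x ^ q := by
    rw [mul_assoc, hcancel, mul_one]
  simp only [hf] at hmul
  rw [this] at hmul
  linarith

/-- Key lemma for all positive `x`. -/
lemma aux_key_all {q : ℝ} (hq : 2 ≤ q) {x : ℝ} (hx : 0 < x) :
    1 + x ^ q + ((2:ℝ) ^ q - 2) * x ^ (q/2) ≤ (1 + x) ^ q := by
  rcases le_or_gt x 1 with h1 | h1
  · exact aux_key hq hx h1
  · -- apply the lemma to 1/x and multiply by x^q
    have hinv : 0 < x⁻¹ := inv_pos.mpr hx
    have hinv1 : x⁻¹ ≤ 1 := by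
      rw [inv_le_one_iff₀]; right; linarith
    have h := aux_key hq hinv hinv1
    have hxq : 0 < x ^ q := Real.rpow_pos_of_pos hx _
    have hmul := mul_le_mul_of_nonneg_left h hxq.le
    -- rewrite all pieces
    have e1 : x ^ q * (x⁻¹ ^ q) = 1 := by
      rw [← Real.mul_rpow hx.le hinv.le, mul_inv_cancel₀ hx.ne', Real.one_rpow]
    have e2 : x ^ q * (x⁻¹ ^ (q/2)) = x ^ (q/2) := by
      rw [Real.inv_rpow hx.le, ← Real.rpow_neg hx.le, ← Real.rpow_add hx]
      congr 1
      ring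
    have e3 : x ^ q * (1 + x⁻¹) ^ q = (1 + x) ^ q := by
      rw [← Real.mul_rpow hx.le (by positivity)]
      congr 1
      field_simp
      ring
    calc 1 + x ^ q + ((2:ℝ) ^ q - 2) * x ^ (q/2)
        = x ^ q * (1 + x⁻¹ ^ q + ((2:ℝ) ^ q - 2) * x⁻¹ ^ (q/2)) := by
          rw [mul_add, mul_add, e1, ← mul_assoc, mul_comm (x ^ q) ((2:ℝ) ^ q - 2),
            mul_assoc, e2]
          ring
      _ ≤ x ^ q * (1 + x⁻¹) ^ q := hmul
      _ = (1 + x) ^ q := e3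

/-- for every real `p ≥ 4` and `η ≥ 0`,
`(1 + η²)^(p/2) ≥ 1 + (2^(p/2) - 2) η^(p/2) + η^p`. -/
theorem stmt_14 (p η : ℝ) (hp : 4 ≤ p) (hη : 0 ≤ η) :
    1 + ((2 : ℝ) ^ (p / 2) - 2) * η ^ (p / 2) + η ^ p ≤ (1 + η ^ 2) ^ (p / 2) := by
  rcases eq_or_lt_of_le hη with h0 | h0
  · -- η = 0
    rw [← h0]
    rw [Real.zero_rpow (by linarith : p/2 ≠ 0), Real.zero_rpow (by linarith : p ≠ 0)]
    norm_num
  · have hq : (2:ℝ) ≤ p/2 := by linarith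
    have hx : (0:ℝ) < η ^ 2 := by positivity
    have h := aux_key_all hq hx
    have e1 : (η ^ 2 : ℝ) ^ (p/2) = η ^ p := by
      rw [← Real.rpow_natCast η 2, ← Real.rpow_mul hη]
      congr 1
      push_cast
      ring
    have e2 : (η ^ 2 : ℝ) ^ ((p/2)/2) = η ^ (p/2) := by
      rw [← Real.rpow_natCast η 2, ← Real.rpow_mul hη]
      congr 1
      push_cast
      ring
    rw [e1, e2] at h
    linarith
end

section
/- Let p > 4 and define ψ(η) = (1 + η²)^{1/2} / (1 + (2^{p/2} − 2) η^{p/2} + η^p)^{1/p} for η > 0. Then ψ attains its minimum on (0,∞) uniquely at η = 1, with ψ(1) = 1; equivalently, for every η > 0 with η ≠ 1 one has (1 + η²)^{p/2} > 1 + (2^{p/2} − 2) η^{p/2} + η^p. -/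
/-!
Put `t = η²` and `q = p / 2 > 2`. The inequality says that
`D t = (1 + t)^q - t^q - (2^q - 2) t^(q/2)` exceeds `D 1 = 1` for `t ≠ 1`; multiplying by `t^q`
turns the case `t < 1` into the case `1 / t > 1`, so it suffices that `D` increases on `[1, ∞)`.
Now `D' t = q t^(q/2-1) (E t - E 1)` with `E t = (1 + t)^(q-1) t^(1-q/2) - t^(q/2)`, and `E`
increases on `[1, ∞)`: after clearing powers of `t`, `E' > 0` becomes a polynomial inequality once
`(1 + t)^(q-2)` is bounded below by `t^(q-2) (1 + (q-2)/(1+t))`, which follows from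
`log (1 + 1/t) ≥ 1 / (1 + t)`.
-/

open Real Set

theorem strictMonoOn_Ici_of_hasDerivAt_pos {f f' : ℝ → ℝ} {a : ℝ}
    (hf : ∀ x ∈ Ici a, HasDerivAt f (f' x) x) (hf' : ∀ x ∈ Ioi a, 0 < f' x) :
    StrictMonoOn f (Ici a) := by
  refine strictMonoOn_of_hasDerivWithinAt_pos (convex_Ici a)
    (fun x hx => (hf x hx).continuousAt.continuousWithinAt) (fun x hx => ?_) (by simpa using hf')
  rw [interior_Ici] at hx
  exact (hf x (Ioi_subset_Ici_self hx)).hasDerivWithinAt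

theorem rpow_mul_one_add_div_lt_one_add_rpow {α t : ℝ} (hα : 0 < α) (ht : 0 < t) :
    t ^ α * (1 + α / (1 + t)) < (1 + t) ^ α := by
  have h1t : 0 < 1 + t := by linarith
  have hlog : 1 / (1 + t) ≤ log ((1 + t) / t) := by
    convert one_sub_inv_le_log_of_pos (div_pos h1t ht) using 1
    field_simp
    ring
  have hexp : 1 + α / (1 + t) < ((1 + t) / t) ^ α := by
    rw [rpow_def_of_pos (div_pos h1t ht)]
    have hne : log ((1 + t) / t) * α ≠ 0 :=
      mul_ne_zero (by linarith [one_div_pos.mpr h1t]) hα.ne'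
    calc 1 + α / (1 + t) ≤ log ((1 + t) / t) * α + 1 := by
          rw [div_eq_mul_one_div α]; nlinarith
      _ < exp (log ((1 + t) / t) * α) := add_one_lt_exp hne
  calc t ^ α * (1 + α / (1 + t)) < t ^ α * ((1 + t) / t) ^ α :=
        mul_lt_mul_of_pos_left hexp (rpow_pos_of_pos ht α)
    _ = (1 + t) ^ α := by
        rw [← mul_rpow ht.le (div_pos h1t ht).le, mul_div_cancel₀ _ ht.ne']

noncomputable def binomGap (q t : ℝ) : ℝ := (1 + t) ^ q - t ^ q - (2 ^ q - 2) * t ^ (q / 2)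

noncomputable def binomGapDerivRatio (q t : ℝ) : ℝ :=
  (1 + t) ^ (q - 1) * t ^ (1 - q / 2) - t ^ (q / 2)

section
variable {q t : ℝ}

theorem hasDerivAt_binomGapDerivRatio (ht : 0 < t) :
    HasDerivAt (binomGapDerivRatio q)
      (t ^ (-(q / 2)) * ((1 + t) ^ (q - 2) * (q / 2 * t + 1 - q / 2) - q / 2 * t ^ (q - 1))) t := by
  have h1t : 0 < 1 + t := by linarith
  have hA := ((hasDerivAt_id t).const_add 1).rpow_const (p := q - 1) (Or.inl h1t.ne')
  have hB := hasDerivAt_rpow_const (x := t) (p := 1 - q / 2) (Or.inl ht.ne')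
  have hC := hasDerivAt_rpow_const (x := t) (p := q / 2) (Or.inl ht.ne')
  refine ((hA.mul hB).sub hC).congr_deriv ?_
  have e1 : (1 + t) ^ (q - 1) = (1 + t) ^ (q - 2) * (1 + t) := by
    rw [← rpow_add_one h1t.ne']; ring_nf
  have e2 : t ^ (1 - q / 2 - 1) = t ^ (-(q / 2)) := by ring_nf
  have e3 : t ^ (1 - q / 2) = t ^ (-(q / 2)) * t := by
    rw [← rpow_add_one ht.ne']; ring_nf
  have e4 : t ^ (q / 2 - 1) = t ^ (-(q / 2)) * t ^ (q - 1) := by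
    rw [← rpow_add ht]; ring_nf
  simp only [id, e1, e2, e3, e4, show q - 1 - 1 = q - 2 by ring]
  ring

theorem strictMonoOn_binomGapDerivRatio (hq : 2 < q) :
    StrictMonoOn (binomGapDerivRatio q) (Ici 1) := by
  refine strictMonoOn_Ici_of_hasDerivAt_pos
    (fun t ht => hasDerivAt_binomGapDerivRatio (zero_lt_one.trans_le ht))
    (fun t (ht : 1 < t) => ?_)
  have ht0 : 0 < t := zero_lt_one.trans ht
  refine mul_pos (rpow_pos_of_pos ht0 _) (sub_pos.2 ?_)
  have hbern := rpow_mul_one_add_div_lt_one_add_rpow (α := q - 2) (by linarith) ht0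
  have hc : 0 < q / 2 * t + 1 - q / 2 := by nlinarith
  have htq : t ^ (q - 1) = t ^ (q - 2) * t := by
    rw [← rpow_add_one ht0.ne']; ring_nf
  have hpoly : q / 2 * t ≤ (1 + (q - 2) / (1 + t)) * (q / 2 * t + 1 - q / 2) := by
    have hgap : 0 ≤ (q - 1) * (q - 2) * (t - 1) :=
      mul_nonneg (mul_nonneg (by linarith) (by linarith)) (by linarith)
    rw [one_add_div (by linarith), div_mul_eq_mul_div (1 + t + (q - 2)),
      le_div_iff₀ (by linarith)]
    nlinarith
  calc q / 2 * t ^ (q - 1) = t ^ (q - 2) * (q / 2 * t) := by rw [htq]; ring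
    _ ≤ t ^ (q - 2) * ((1 + (q - 2) / (1 + t)) * (q / 2 * t + 1 - q / 2)) :=
        mul_le_mul_of_nonneg_left hpoly (rpow_nonneg ht0.le _)
    _ < (1 + t) ^ (q - 2) * (q / 2 * t + 1 - q / 2) := by
        rw [← mul_assoc]; exact mul_lt_mul_of_pos_right hbern hc

theorem binomGapDerivRatio_one : binomGapDerivRatio q 1 = 2 ^ (q - 1) - 1 := by
  norm_num [binomGapDerivRatio]

theorem hasDerivAt_binomGap (ht : 0 < t) :
    HasDerivAt (binomGap q)
      (q * t ^ (q / 2 - 1) * (binomGapDerivRatio q t - binomGapDerivRatio q 1)) t := by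
  have h1t : 0 < 1 + t := by linarith
  have hA := ((hasDerivAt_id t).const_add 1).rpow_const (p := q) (Or.inl h1t.ne')
  have hB := hasDerivAt_rpow_const (x := t) (p := q) (Or.inl ht.ne')
  have hC := (hasDerivAt_rpow_const (x := t) (p := q / 2) (Or.inl ht.ne')).const_mul (2 ^ q - 2)
  refine ((hA.sub hB).sub hC).congr_deriv ?_
  have e1 : t ^ (q / 2 - 1) * t ^ (1 - q / 2) = 1 := by
    rw [← rpow_add ht]; norm_num
  have e2 : t ^ (q / 2 - 1) * t ^ (q / 2) = t ^ (q - 1) := by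
    rw [← rpow_add ht]; ring_nf
  have e3 : (2 : ℝ) ^ q = 2 * 2 ^ (q - 1) := by
    rw [rpow_sub_one two_ne_zero]; ring
  rw [binomGapDerivRatio_one, binomGapDerivRatio, e3]
  simp only [id]
  linear_combination (-q * (1 + t) ^ (q - 1)) * e1 + q * e2

theorem strictMonoOn_binomGap (hq : 2 < q) : StrictMonoOn (binomGap q) (Ici 1) :=
  strictMonoOn_Ici_of_hasDerivAt_pos (fun t ht => hasDerivAt_binomGap (zero_lt_one.trans_le ht))
    fun t (ht : 1 < t) => mul_pos (mul_pos (by linarith) (rpow_pos_of_pos (by linarith) _))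
      (sub_pos.2 (strictMonoOn_binomGapDerivRatio hq self_mem_Ici ht.le ht))

theorem one_add_mul_rpow_half_add_rpow_lt_of_one_lt (hq : 2 < q) (ht : 1 < t) :
    1 + (2 ^ q - 2) * t ^ (q / 2) + t ^ q < (1 + t) ^ q := by
  have h := strictMonoOn_binomGap hq self_mem_Ici ht.le ht
  norm_num [binomGap] at h
  linarith

theorem one_add_mul_rpow_half_add_rpow_lt (hq : 2 < q) (ht : 0 < t) (ht1 : t ≠ 1) :
    1 + (2 ^ q - 2) * t ^ (q / 2) + t ^ q < (1 + t) ^ q := by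
  rcases ht1.lt_or_gt with ht1 | ht1
  · have h := one_add_mul_rpow_half_add_rpow_lt_of_one_lt hq ((one_lt_inv₀ ht).2 ht1)
    have htq : 0 < t ^ q := rpow_pos_of_pos ht q
    have hhalf : t ^ q = t ^ (q / 2) * t ^ (q / 2) := by rw [← rpow_add ht]; ring_nf
    have hinv : (1 + t⁻¹) ^ q * t ^ q = (1 + t) ^ q := by
      rw [← mul_rpow (by positivity) ht.le]; field_simp; ring_nf
    rw [inv_rpow ht.le, inv_rpow ht.le] at h
    calc 1 + (2 ^ q - 2) * t ^ (q / 2) + t ^ q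
        = (1 + (2 ^ q - 2) * (t ^ (q / 2))⁻¹ + (t ^ q)⁻¹) * t ^ q := by
          rw [hhalf]; field_simp; ring
      _ < (1 + t⁻¹) ^ q * t ^ q := mul_lt_mul_of_pos_right h htq
      _ = (1 + t) ^ q := hinv
  · exact one_add_mul_rpow_half_add_rpow_lt_of_one_lt hq ht1

end

theorem one_add_mul_rpow_half_add_rpow_lt_one_add_sq_rpow {p η : ℝ} (hp : 4 < p) (hη : 0 < η)
    (hne : η ≠ 1) : 1 + (2 ^ (p / 2) - 2) * η ^ (p / 2) + η ^ p < (1 + η ^ 2) ^ (p / 2) := by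
  have hsq (z : ℝ) : (η ^ 2) ^ z = η ^ (2 * z) := by
    rw [← rpow_natCast_mul hη.le]; norm_num
  have h := one_add_mul_rpow_half_add_rpow_lt (q := p / 2) (t := η ^ 2) (by linarith)
    (by positivity) ((pow_eq_one_iff_of_nonneg hη.le two_ne_zero).not.2 hne)
  rwa [hsq, hsq, show 2 * (p / 2 / 2) = p / 2 by ring, show 2 * (p / 2) = p by ring] at h

/-- for `p > 4`, the function
`ψ(η) = (1 + η²)^(1/2) / (1 + (2^(p/2) - 2) η^(p/2) + η^p)^(1/p)` on `(0,∞)` attains its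
minimum uniquely at `η = 1` with `ψ(1) = 1`; equivalently, for every `η > 0`, `η ≠ 1`, one has
`(1 + η²)^(p/2) > 1 + (2^(p/2) - 2) η^(p/2) + η^p`. -/
theorem stmt_15 (p : ℝ) (hp : 4 < p) (ψ : ℝ → ℝ)
    (hψ : ∀ η : ℝ, 0 < η →
      ψ η = (1 + η ^ 2) ^ ((1 : ℝ) / 2) /
        (1 + ((2 : ℝ) ^ (p / 2) - 2) * η ^ (p / 2) + η ^ p) ^ (1 / p)) :
    ψ 1 = 1 ∧ (∀ η : ℝ, 0 < η → η ≠ 1 → ψ 1 < ψ η) ∧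
      (∀ η : ℝ, 0 < η → η ≠ 1 →
        1 + ((2 : ℝ) ^ (p / 2) - 2) * η ^ (p / 2) + η ^ p < (1 + η ^ 2) ^ (p / 2)) := by
  have hψ1 : ψ 1 = 1 := by
    rw [hψ 1 one_pos]
    simp only [one_pow, one_rpow, mul_one]
    rw [show (1 : ℝ) + (2 ^ (p / 2) - 2) + 1 = 2 ^ (p / 2) by ring, ← rpow_mul zero_le_two,
      show p / 2 * (1 / p) = 1 / 2 by field_simp, one_add_one_eq_two,
      div_self (rpow_pos_of_pos two_pos _).ne']
  refine ⟨hψ1, fun η hη hne => ?_,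
    fun η hη hne => one_add_mul_rpow_half_add_rpow_lt_one_add_sq_rpow hp hη hne⟩
  have hden : 0 < 1 + ((2 : ℝ) ^ (p / 2) - 2) * η ^ (p / 2) + η ^ p := by
    have h2 : (2 : ℝ) ≤ 2 ^ (p / 2) := by
      simpa using rpow_le_rpow_of_exponent_le one_le_two (by linarith : (1 : ℝ) ≤ p / 2)
    linarith [rpow_pos_of_pos hη p, mul_nonneg (sub_nonneg.2 h2) (rpow_nonneg hη.le (p / 2))]
  rw [hψ1, hψ η hη, one_lt_div (rpow_pos_of_pos hden _)]
  calc (1 + ((2 : ℝ) ^ (p / 2) - 2) * η ^ (p / 2) + η ^ p) ^ (1 / p)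
      < ((1 + η ^ 2) ^ (p / 2)) ^ (1 / p) :=
        rpow_lt_rpow hden.le (one_add_mul_rpow_half_add_rpow_lt_one_add_sq_rpow hp hη hne)
          (by positivity)
    _ = (1 + η ^ 2) ^ ((1 : ℝ) / 2) := by
      rw [← rpow_mul (by positivity)]; congr 1; field_simp
end
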